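/- arXiv:1803.08091 — 11 statements merged into one kernel-verified Lean document; each statement's English description precedes it below -/
import Mathlib

section
/- There are uncountably many pairwise non-isomorphic subsemigroups of ℕ × ℕ; that is, there is a family of subsemigroups of ℕ × ℕ of cardinality the continuum such that no two distinct members of the family are isomorphic as semigroups. -/
/-!
For `S ⊆ ℕ` let `G_S = {2, 4, 6, …} ∪ {2s + 5 | s ∈ S}` and let `A_S ≤ ℕ+ × ℕ+` be generated by
`{1} × G_S`. The elements of `A_S` that are not sums are exactly the generators `(1, g)`, so an
isomorphism `A_S ≃ A_T` induces a bijection `f : G_S → G_T` preserving every relation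
`a + b = c + d`. Such an `f` is affine, `2 f(g) = α + β g`: on the even numbers this follows from
`(2n + 4) + 2 = (2n + 2) + 4`, and an odd `g` satisfies `g + g = (g - 1) + (g + 1)`. As `f` is onto
`G_T`, whose two least elements are `2` and `4` whatever `T` is, `f` is the identity. Hence
`G_S ⊆ G_T`, i.e. `S ⊆ T`, and `S ↦ A_S` is an injection of `𝒫(ℕ)` into the isomorphism classes.
-/

def AddIndecomposable {M : Type*} [Add M] (x : M) : Prop := ∀ a b : M, a + b ≠ x

section AddIndecomposable

variable {M N : Type*} [Add M] [Add N]

theorem AddIndecomposable.map_addEquiv {x : M} (hx : AddIndecomposable x) (e : M ≃+ N) :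
    AddIndecomposable (e x) := fun a b hab =>
  hx (e.symm a) (e.symm b) (by rw [← map_add, hab, e.symm_apply_apply])

theorem AddIndecomposable.of_fst {p : M × N} (hp : AddIndecomposable p.1) :
    AddIndecomposable p := fun a b hab => hp a.1 b.1 (by rw [← hab, Prod.fst_add])

theorem AddIndecomposable.of_coe {S : AddSubsemigroup M} {x : S}
    (hx : AddIndecomposable (x : M)) : AddIndecomposable x := fun a b hab =>
  hx a b (by rw [← hab, AddMemClass.coe_add])

theorem AddSubsemigroup.mem_of_addIndecomposable_closure {s : Set M} {x : closure s}
    (hx : AddIndecomposable x) : (x : M) ∈ s := by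
  obtain ⟨x, hxs⟩ := x
  induction hxs using AddSubsemigroup.closure_induction with
  | mem y hy => exact hy
  | add y z hy hz _ _ => exact absurd rfl (hx ⟨y, hy⟩ ⟨z, hz⟩)

end AddIndecomposable

theorem PNat.addIndecomposable_one : AddIndecomposable (1 : ℕ+) := fun a b hab => by
  have := congrArg PNat.val hab
  simp only [PNat.add_coe, PNat.val_ofNat] at this
  have := a.pos
  have := b.pos
  omega

def sumSemigroup (G : Set ℕ+) : AddSubsemigroup (ℕ+ × ℕ+) :=
  AddSubsemigroup.closure ({1} ×ˢ G)

namespace sumSemigroup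

variable {G H : Set ℕ+}

def gen (g : G) : sumSemigroup G :=
  ⟨(1, g), AddSubsemigroup.subset_closure (Set.mk_mem_prod rfl g.2)⟩

theorem gen_injective : Function.Injective (gen : G → sumSemigroup G) := fun _ _ h =>
  Subtype.ext (congrArg (fun x : sumSemigroup G => (x : ℕ+ × ℕ+).2) h)

theorem gen_add_gen_eq_gen_add_gen_iff {a b c d : G} :
    gen a + gen b = gen c + gen d ↔ (a : ℕ+) + b = c + d := by
  simp [gen, Subtype.ext_iff, Prod.ext_iff]

theorem addIndecomposable_iff {x : sumSemigroup G} :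
    AddIndecomposable x ↔ (x : ℕ+ × ℕ+) ∈ ({1} ×ˢ G : Set (ℕ+ × ℕ+)) := by
  refine ⟨AddSubsemigroup.mem_of_addIndecomposable_closure, fun hx => ?_⟩
  refine AddIndecomposable.of_coe (AddIndecomposable.of_fst ?_)
  rw [Set.mem_singleton_iff.1 hx.1]
  exact PNat.addIndecomposable_one

theorem addIndecomposable_gen (g : G) : AddIndecomposable (gen g) :=
  addIndecomposable_iff.2 (Set.mk_mem_prod rfl g.2)

theorem exists_gen_eq_of_addIndecomposable {x : sumSemigroup G} (hx : AddIndecomposable x) :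
    ∃ g : G, gen g = x := by
  obtain ⟨h1, h2⟩ := addIndecomposable_iff.1 hx
  exact ⟨⟨_, h2⟩, Subtype.ext (Prod.ext (Set.mem_singleton_iff.1 h1).symm rfl)⟩

def genMap (φ : sumSemigroup G ≃+ sumSemigroup H) (g : G) : H :=
  ⟨(φ (gen g) : ℕ+ × ℕ+).2,
    (addIndecomposable_iff.1 ((addIndecomposable_gen g).map_addEquiv φ)).2⟩

theorem gen_genMap (φ : sumSemigroup G ≃+ sumSemigroup H) (g : G) :
    gen (genMap φ g) = φ (gen g) := by
  have h1 := (addIndecomposable_iff.1 ((addIndecomposable_gen g).map_addEquiv φ)).1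
  exact Subtype.ext (Prod.ext (Set.mem_singleton_iff.1 h1).symm rfl)

theorem genMap_surjective (φ : sumSemigroup G ≃+ sumSemigroup H) :
    Function.Surjective (genMap φ) := fun h => by
  obtain ⟨g, hg⟩ :=
    exists_gen_eq_of_addIndecomposable ((addIndecomposable_gen h).map_addEquiv φ.symm)
  refine ⟨g, gen_injective ?_⟩
  rw [gen_genMap, hg, φ.apply_symm_apply]

theorem genMap_add_eq_add (φ : sumSemigroup G ≃+ sumSemigroup H) {a b c d : G}
    (h : (a : ℕ+) + b = c + d) :
    (genMap φ a : ℕ+) + genMap φ b = genMap φ c + genMap φ d := by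
  rw [← gen_add_gen_eq_gen_add_gen_iff, gen_genMap, gen_genMap, gen_genMap, gen_genMap,
    ← map_add, ← map_add, gen_add_gen_eq_gen_add_gen_iff.2 h]

end sumSemigroup

theorem exists_affine_of_add_eq_add {G : Set ℕ+} (hev : ∀ g : ℕ+, Even (g : ℕ) → g ∈ G)
    (h1 : 1 ∉ G) (f : G → ℤ) (hf : ∀ a b c d : G, (a : ℕ+) + b = c + d → f a + f b = f c + f d) :
    ∃ α β : ℤ, ∀ g : G, 2 * f g = α + β * (g : ℕ) := by
  let e (n : ℕ) : G := ⟨(2 * n + 1).succPNat, hev _ ⟨n + 1, by rw [Nat.succPNat_coe]; omega⟩⟩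
  have he (n : ℕ) : f (e n) = f (e 0) + n * (f (e 1) - f (e 0)) := by
    induction n with
    | zero => simp
    | succ n ih =>
      have := hf (e (n + 1)) (e 0) (e n) (e 1)
        (PNat.eq (by simp only [e, PNat.add_coe, Nat.succPNat_coe]; omega))
      push_cast
      linarith
  refine ⟨2 * f (e 0) - 2 * (f (e 1) - f (e 0)), f (e 1) - f (e 0), fun g => ?_⟩
  obtain ⟨n, hn⟩ | ⟨n, hn⟩ : (∃ n, (g : ℕ) = 2 * n + 2) ∨ ∃ n, (g : ℕ) = 2 * n + 3 := by
    have hpos := (g : ℕ+).pos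
    have hne : ((g : ℕ+) : ℕ) ≠ 1 := fun h => h1 (PNat.coe_eq_one_iff.1 h ▸ g.2)
    rcases Nat.even_or_odd ((g : ℕ+) : ℕ) with ⟨r, hr⟩ | ⟨r, hr⟩
    · exact Or.inl ⟨r - 1, by omega⟩
    · exact Or.inr ⟨r - 1, by omega⟩
  · rw [show g = e n from Subtype.ext (PNat.eq hn), he]
    simp only [e, Nat.succPNat_coe]
    push_cast
    ring
  · have := hf g g (e n) (e (n + 1))
      (PNat.eq (by simp only [e, PNat.add_coe, Nat.succPNat_coe, hn]; omega))
    rw [he n, he (n + 1)] at this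
    rw [hn]
    push_cast at this ⊢
    linarith

/-- The offset `5` keeps `1` and `3` out, so that `2 < 4` are the two least elements for every
`S`. -/
def generatorSet (S : Set ℕ) : Set ℕ+ := {g | Even (g : ℕ) ∨ ∃ s ∈ S, (g : ℕ) = 2 * s + 5}

section generatorSet

variable {S T : Set ℕ}

theorem even_mem_generatorSet {g : ℕ+} (hg : Even (g : ℕ)) : g ∈ generatorSet S := Or.inl hg

theorem one_notMem_generatorSet : 1 ∉ generatorSet S := by
  rintro (⟨r, hr⟩ | ⟨s, -, hs⟩)
  · simp only [PNat.val_ofNat] at hr; omega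
  · simp only [PNat.val_ofNat] at hs; omega

theorem three_notMem_generatorSet : 3 ∉ generatorSet S := by
  rintro (⟨r, hr⟩ | ⟨s, -, hs⟩)
  · simp only [PNat.val_ofNat] at hr; omega
  · simp only [PNat.val_ofNat] at hs; omega

theorem succPNat_mem_generatorSet_iff {s : ℕ} :
    (2 * s + 4).succPNat ∈ generatorSet S ↔ s ∈ S := by
  refine ⟨?_, fun hs => Or.inr ⟨s, hs, rfl⟩⟩
  rintro (⟨r, hr⟩ | ⟨t, ht, hst⟩)
  · simp only [Nat.succPNat_coe] at hr; omega
  · simp only [Nat.succPNat_coe] at hst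
    rwa [show s = t by omega]

theorem two_le_of_mem_generatorSet {g : ℕ+} (hg : g ∈ generatorSet S) : 2 ≤ (g : ℕ) := by
  have : (g : ℕ) ≠ 1 := fun h => one_notMem_generatorSet (PNat.coe_eq_one_iff.1 h ▸ hg)
  have := g.pos
  omega

theorem coe_ne_three_of_mem_generatorSet {g : ℕ+} (hg : g ∈ generatorSet S) : (g : ℕ) ≠ 3 :=
  fun h => three_notMem_generatorSet (PNat.eq (h.trans (PNat.val_ofNat 3).symm) ▸ hg)

theorem slope_nonneg_of_affine (f : generatorSet S → generatorSet T) {α β : ℤ}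
    (hf : ∀ g, 2 * ((f g : ℕ+) : ℤ) = α + β * ((g : ℕ+) : ℕ)) : 0 ≤ β := by
  by_contra! hβ
  have heven : Even (((2 * α.toNat + 1).succPNat : ℕ+) : ℕ) :=
    ⟨α.toNat + 1, by rw [Nat.succPNat_coe]; omega⟩
  have h := hf ⟨_, even_mem_generatorSet heven⟩
  have := two_le_of_mem_generatorSet (f ⟨_, even_mem_generatorSet heven⟩).2
  have := Int.self_le_toNat α
  simp only [Nat.succPNat_coe] at h
  push_cast at h
  nlinarith

theorem affine_eq_id_of_surjective (f : generatorSet S → generatorSet T)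
    (hsurj : Function.Surjective f) {α β : ℤ}
    (hf : ∀ g, 2 * ((f g : ℕ+) : ℤ) = α + β * ((g : ℕ+) : ℕ)) : α = 0 ∧ β = 2 := by
  have hβ := slope_nonneg_of_affine f hf
  have two_le (g : generatorSet S) : (2 : ℤ) ≤ ((g : ℕ+) : ℕ) := by
    exact_mod_cast two_le_of_mem_generatorSet g.2
  have two_le_f (g : generatorSet S) : (2 : ℤ) ≤ ((f g : ℕ+) : ℕ) := by
    exact_mod_cast two_le_of_mem_generatorSet (f g).2
  obtain ⟨two, htwo⟩ : ∃ g : generatorSet S, (g : ℕ+) = 2 :=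
    ⟨⟨2, even_mem_generatorSet even_two⟩, rfl⟩
  obtain ⟨four, hfour⟩ : ∃ g : generatorSet S, (g : ℕ+) = 4 :=
    ⟨⟨4, even_mem_generatorSet ⟨2, rfl⟩⟩, rfl⟩
  obtain ⟨g₂, hg₂⟩ := hsurj ⟨2, even_mem_generatorSet even_two⟩
  obtain ⟨g₄, hg₄⟩ := hsurj ⟨4, even_mem_generatorSet ⟨2, rfl⟩⟩
  have hf₂ := hf two
  have hf₄ := hf four
  have h₂ := hf g₂
  have h₄ := hf g₄
  simp only [htwo, hfour, hg₂, hg₄] at hf₂ hf₄ h₂ h₄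
  push_cast at hf₂ hf₄ h₂ h₄
  -- `f two` is at least `2`, and at most `f g₂ = 2` as `g₂ ≥ 2` and `β ≥ 0`
  have hα : α + 2 * β = 4 := by
    nlinarith [two_le_f two, mul_nonneg hβ (sub_nonneg.2 (two_le g₂))]
  have four_le_g₄ : (4 : ℤ) ≤ ((g₄ : ℕ+) : ℕ) := by
    have := two_le_of_mem_generatorSet g₄.2
    have := coe_ne_three_of_mem_generatorSet g₄.2
    have : ((g₄ : ℕ+) : ℕ) ≠ 2 := fun h => by rw [h] at h₄; push_cast at h₄; linarith
    omega
  have hβ2 : β = 2 := by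
    have : ((f four : ℕ+) : ℕ) ≠ 3 := coe_ne_three_of_mem_generatorSet (f four).2
    have : β ≤ 2 := by nlinarith
    have : β ≠ 1 := by rintro rfl; omega
    have : β ≠ 0 := by rintro rfl; linarith
    omega
  exact ⟨by omega, hβ2⟩

theorem coe_eq_self_of_surjective_of_add_eq_add (f : generatorSet S → generatorSet T)
    (hsurj : Function.Surjective f)
    (hf : ∀ a b c d : generatorSet S, (a : ℕ+) + b = c + d → (f a : ℕ+) + f b = f c + f d)
    (g : generatorSet S) : (f g : ℕ+) = g := by
  obtain ⟨α, β, hαβ⟩ := exists_affine_of_add_eq_add (fun _ => even_mem_generatorSet)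
    one_notMem_generatorSet (fun g => ((f g : ℕ+) : ℤ))
    (fun a b c d h => by exact_mod_cast congrArg PNat.val (hf a b c d h))
  obtain ⟨rfl, rfl⟩ := affine_eq_id_of_surjective f hsurj hαβ
  have := hαβ g
  exact PNat.eq (by omega)

theorem subset_of_addEquiv
    (φ : sumSemigroup (generatorSet S) ≃+ sumSemigroup (generatorSet T)) : S ⊆ T := fun s hs => by
  have hφ := coe_eq_self_of_surjective_of_add_eq_add (sumSemigroup.genMap φ)
    (sumSemigroup.genMap_surjective φ) (fun _ _ _ _ => sumSemigroup.genMap_add_eq_add φ)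
    ⟨_, succPNat_mem_generatorSet_iff.2 hs⟩
  have hmem := (sumSemigroup.genMap φ ⟨_, succPNat_mem_generatorSet_iff.2 hs⟩).2
  rwa [hφ, succPNat_mem_generatorSet_iff] at hmem

theorem eq_of_addEquiv (φ : sumSemigroup (generatorSet S) ≃+ sumSemigroup (generatorSet T)) :
    S = T :=
  (subset_of_addEquiv φ).antisymm (subset_of_addEquiv φ.symm)

end generatorSet

theorem sumSemigroup_generatorSet_injective :
    Function.Injective fun S => sumSemigroup (generatorSet S) :=
  fun _ _ h => eq_of_addEquiv (AddEquiv.subsemigroupCongr h)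

/-- There are uncountably many (continuum many) pairwise non-isomorphic
subsemigroups of `ℕ × ℕ`, the direct square of the free monogenic semigroup. -/
theorem uncountably_many_nonisomorphic_subsemigroups_of_N_times_N :
    ∃ F : Set (AddSubsemigroup (ℕ+ × ℕ+)),
      Cardinal.mk F = Cardinal.continuum ∧
      ∀ A ∈ F, ∀ B ∈ F, A ≠ B → ¬ Nonempty (A ≃+ B) := by
  refine ⟨Set.range fun S => sumSemigroup (generatorSet S), ?_, ?_⟩
  · rw [Cardinal.mk_range_eq _ sumSemigroup_generatorSet_injective, Cardinal.mk_set,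
      Cardinal.mk_nat, Cardinal.two_power_aleph0]
  · rintro _ ⟨S, rfl⟩ _ ⟨T, rfl⟩ hne ⟨φ⟩
    exact hne (congrArg (fun S => sumSemigroup (generatorSet S)) (eq_of_addEquiv φ))
end

section
/- If S and T are semigroups each containing an element of infinite order, then the direct product S × T contains uncountably many pairwise non-isomorphic subsemigroups. -/
/-- `spow s n` is the `(n+1)`-st power of `s` in a semigroup. -/
def spow {S : Type*} [Semigroup S] (s : S) : ℕ → S
  | 0 => s
  | n + 1 => spow s n * s

/-!
The points `(s^(a+1), t^(b+1))` form a countable, cancellative copy of `ℕ+ × ℕ+` inside `S × T`.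
For `X ⊆ ℕ`, those with `a ≠ 0 ∨ b ∈ X` form a subsemigroup `powGrid s t X`, and distinct `X` give
distinct subsemigroups, so there are uncountably many of them. Every point `x` of `powGrid s t X`
satisfies a relation `x · c = d` with `c`, `d` products of three fixed points; by cancellation, a
homomorphism from `powGrid s t X` into the grid is determined by its three values there, so
`powGrid s t X` is isomorphic to only countably many subsemigroups of the grid. Choosing one
member from each isomorphism class then leaves uncountably many.
-/

open Set Subsemigroup

section Spow

variable {S T : Type*} [Semigroup S] [Semigroup T]

theorem spow_mul_spow (s : S) (m n : ℕ) : spow s m * spow s n = spow s (m + n + 1) := by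
  induction n with
  | zero => rfl
  | succ n ih => rw [spow, ← mul_assoc, ih]; rfl

theorem spow_spow (s : S) (a n : ℕ) : spow (spow s a) n = spow s (a * n + a + n) := by
  induction n with
  | zero => simp [spow]
  | succ n ih => rw [spow, ih, spow_mul_spow]; congr 1; ring

theorem spow_prodMk (s : S) (t : T) (n : ℕ) : spow (s, t) n = (spow s n, spow t n) := by
  induction n with
  | zero => rfl
  | succ n ih => rw [spow, ih]; rfl

theorem map_spow {F : Type*} [FunLike F S T] [MulHomClass F S T] (f : F) (s : S) (n : ℕ) :
    f (spow s n) = spow (f s) n := by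
  induction n with
  | zero => rfl
  | succ n ih => rw [spow, map_mul, ih]; rfl

theorem spow_mem {A : Type*} [SetLike A S] [MulMemClass A S] {P : A} {s : S} (hs : s ∈ P)
    (n : ℕ) : spow s n ∈ P := by
  induction n with
  | zero => exact hs
  | succ n ih => exact mul_mem ih hs

theorem spow_mul_spow_right_cancel {s : S} (hs : Function.Injective (spow s)) {a b c : ℕ}
    (h : spow s a * spow s c = spow s b * spow s c) : a = b := by
  rw [spow_mul_spow, spow_mul_spow] at h
  simpa using hs h

end Spow

theorem MulHom.eq_of_eqOn_of_mul_mem_closure {A M : Type*} [Mul A] [Mul M] [IsRightCancelMul M]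
    {f g : A →ₙ* M} {G : Set A} (hfg : EqOn f g G)
    (hG : ∀ x : A, ∃ c ∈ closure G, x * c ∈ closure G) : f = g := by
  ext x
  obtain ⟨c, hc, hxc⟩ := hG x
  have hc' : f c = g c := MulHom.eqOn_closure hfg hc
  apply mul_right_cancel (b := f c)
  calc f x * f c = f (x * c) := (map_mul f x c).symm
    _ = g (x * c) := MulHom.eqOn_closure hfg hxc
    _ = g x * f c := by rw [map_mul, hc']

theorem MulHom.countable_of_mul_mem_closure {A M : Type*} [Mul A] [Mul M] [IsRightCancelMul M]
    [Countable M] {G : Set A} (hfin : G.Finite)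
    (hG : ∀ x : A, ∃ c ∈ closure G, x * c ∈ closure G) : Countable (A →ₙ* M) := by
  have := hfin.to_subtype
  refine Function.Injective.countable (f := fun f : A →ₙ* M => G.domRestrict f) fun f g hfg => ?_
  exact MulHom.eq_of_eqOn_of_mul_mem_closure (fun x hx => congrFun hfg ⟨x, hx⟩) hG

theorem Subsemigroup.countable_setOf_le_and_nonempty_mulEquiv {A M : Type*} [Mul A] [Mul M]
    (P : Subsemigroup M) [Countable (A →ₙ* P)] :
    {B : Subsemigroup M | B ≤ P ∧ Nonempty (A ≃* B)}.Countable := by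
  refine (countable_range fun f : A →ₙ* P => ((MulMemClass.subtype P).comp f).srange).mono ?_
  rintro B ⟨hBP, ⟨e⟩⟩
  refine ⟨(inclusion hBP).comp e.toMulHom, SetLike.coe_injective ?_⟩
  rw [MulHom.coe_srange]
  ext x
  constructor
  · rintro ⟨a, rfl⟩
    exact (e a).2
  · intro hx
    exact ⟨e.symm ⟨x, hx⟩, by simp [inclusion]⟩

def Subsemigroup.isomorphicSetoid (M : Type*) [Mul M] : Setoid (Subsemigroup M) where
  r A B := Nonempty (A ≃* B)
  iseqv := ⟨fun A => ⟨MulEquiv.refl A⟩, fun ⟨e⟩ => ⟨e.symm⟩, fun ⟨e⟩ ⟨f⟩ => ⟨e.trans f⟩⟩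

theorem Set.exists_not_countable_pairwise_not_rel {α : Type*} (r : Setoid α) {P : Set α}
    (hP : ¬ P.Countable) (hr : ∀ a ∈ P, {b ∈ P | r b a}.Countable) :
    ∃ F ⊆ P, ¬ F.Countable ∧ F.Pairwise fun a b => ¬ r a b := by
  obtain ⟨F, hFP, hF⟩ := exists_subset_bijOn P (Quotient.mk r)
  refine ⟨F, hFP, fun hFc => hP ?_, fun a ha b hb hab hrab => hab (hF.injOn ha hb ?_)⟩
  · refine ((hFc.biUnion fun a ha => hr a (hFP ha))).mono fun b hb => ?_
    obtain ⟨a, ha, hab⟩ := hF.surjOn (mem_image_of_mem _ hb)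
    exact mem_biUnion ha ⟨hb, Quotient.exact hab.symm⟩
  · exact Quotient.sound hrab

section PowGrid

variable {S T : Type*} [Semigroup S] [Semigroup T]

def powGrid (s : S) (t : T) (X : Set ℕ) : Subsemigroup (S × T) where
  carrier := {x | ∃ a b, (a ≠ 0 ∨ b ∈ X) ∧ (spow s a, spow t b) = x}
  mul_mem' := by
    rintro _ _ ⟨a, b, -, rfl⟩ ⟨c, d, -, rfl⟩
    exact ⟨a + c + 1, b + d + 1, Or.inl (Nat.succ_ne_zero _), by simp [spow_mul_spow]⟩

variable {s : S} {t : T}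

theorem powGrid_mono {X Y : Set ℕ} (h : X ⊆ Y) : powGrid s t X ≤ powGrid s t Y := by
  rintro _ ⟨a, b, hab, rfl⟩
  exact ⟨a, b, hab.imp_right (@h b), rfl⟩

theorem mk_spow_mem_powGrid {X : Set ℕ} {a b : ℕ} (hab : a ≠ 0 ∨ b ∈ X) :
    (spow s a, spow t b) ∈ powGrid s t X :=
  ⟨a, b, hab, rfl⟩

theorem mk_spow_zero_mem_powGrid_iff (hs : Function.Injective (spow s))
    (ht : Function.Injective (spow t)) {X : Set ℕ} {b : ℕ} :
    (spow s 0, spow t b) ∈ powGrid s t X ↔ b ∈ X := by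
  refine ⟨fun ⟨a, b', hab, h⟩ => ?_, fun hb => mk_spow_mem_powGrid (Or.inr hb)⟩
  simp only [Prod.mk.injEq] at h
  rw [← ht h.2]
  simpa [hs h.1] using hab

theorem powGrid_injective (hs : Function.Injective (spow s)) (ht : Function.Injective (spow t)) :
    Function.Injective (powGrid s t) := fun X Y h => by
  ext b
  rw [← mk_spow_zero_mem_powGrid_iff hs ht, ← mk_spow_zero_mem_powGrid_iff hs ht, h]

theorem not_countable_range_powGrid (hs : Function.Injective (spow s))
    (ht : Function.Injective (spow t)) : ¬ (range (powGrid s t)).Countable := fun h => by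
  have := countable_univ_iff.mp
    ((mapsTo_range _ univ).countable_of_injOn (powGrid_injective hs ht).injOn h)
  obtain ⟨f, hf⟩ := countable_iff_exists_injective (Set ℕ) |>.mp this
  exact Function.cantor_injective f hf

theorem countable_powGrid (X : Set ℕ) : (powGrid s t X : Set (S × T)).Countable :=
  (countable_range fun p : ℕ × ℕ => (spow s p.1, spow t p.2)).mono
    <| by rintro _ ⟨a, b, -, h⟩; exact ⟨(a, b), h⟩

theorem isRightCancelMul_powGrid (hs : Function.Injective (spow s))
    (ht : Function.Injective (spow t)) (X : Set ℕ) : IsRightCancelMul (powGrid s t X) := by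
  constructor
  intro z x y h
  obtain ⟨c, d, -, hz⟩ := z.2
  obtain ⟨a, b, -, hx⟩ := x.2
  obtain ⟨a', b', -, hy⟩ := y.2
  have h' : (x * z : S × T) = y * z := congrArg Subtype.val h
  rw [Subtype.ext_iff, ← hx, ← hy]
  rw [← hz, ← hx, ← hy] at h'
  simp only [Prod.mk_mul_mk, Prod.mk.injEq] at h' ⊢
  rw [spow_mul_spow_right_cancel hs h'.1, spow_mul_spow_right_cancel ht h'.2]
  exact ⟨rfl, rfl⟩

/-- In true exponents: `(s^(a+1), t^(b+1)) · u^(a+b+2) = v^(a+1) · w^(b+1)` for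
`u = (s², t)`, `v = (s³, t)` and `w = (s², t²)`. -/
theorem mk_spow_mul_spow_eq_spow_mul_spow (a b : ℕ) :
    (spow s a, spow t b) * spow (spow s 1, spow t 0) (a + b + 1) =
      spow (spow s 2, spow t 0) a * spow (spow s 1, spow t 1) b := by
  simp only [spow_prodMk, spow_spow, Prod.mk_mul_mk, spow_mul_spow]
  congr 2 <;> ring

theorem countable_mulHom_powGrid (hs : Function.Injective (spow s))
    (ht : Function.Injective (spow t)) (X : Set ℕ) :
    Countable (powGrid s t X →ₙ* powGrid s t univ) := by
  have := isRightCancelMul_powGrid hs ht univ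
  have := (countable_powGrid (s := s) (t := t) univ).to_subtype
  let u : powGrid s t X := ⟨(spow s 1, spow t 0), mk_spow_mem_powGrid (Or.inl one_ne_zero)⟩
  let v : powGrid s t X := ⟨(spow s 2, spow t 0), mk_spow_mem_powGrid (Or.inl two_ne_zero)⟩
  let w : powGrid s t X := ⟨(spow s 1, spow t 1), mk_spow_mem_powGrid (Or.inl one_ne_zero)⟩
  refine MulHom.countable_of_mul_mem_closure (G := {u, v, w}) (toFinite _) ?_
  rintro ⟨_, a, b, -, rfl⟩
  have mem : ∀ y ∈ ({u, v, w} : Set (powGrid s t X)), ∀ n, spow y n ∈ closure {u, v, w} :=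
    fun y hy n => spow_mem (subset_closure hy) n
  refine ⟨spow u (a + b + 1), mem u (by simp) _, ?_⟩
  convert mul_mem (mem v (by simp) a) (mem w (by simp) b) using 1
  have coe_spow (y : powGrid s t X) (n : ℕ) : ((spow y n : powGrid s t X) : S × T) = spow y.1 n :=
    map_spow (MulMemClass.subtype _) y n
  ext1
  simp only [MulMemClass.coe_mul, coe_spow]
  exact mk_spow_mul_spow_eq_spow_mul_spow a b

end PowGrid

/-- If `S` and `T` are semigroups containing elements of infinite order
(i.e. elements all of whose powers are pairwise distinct), then `S × T`
contains uncountably many pairwise non-isomorphic subsemigroups. -/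
theorem uncountably_many_nonisomorphic_subsemigroups_of_prod
    {S T : Type*} [Semigroup S] [Semigroup T]
    (s : S) (hs : Function.Injective (spow s))
    (t : T) (ht : Function.Injective (spow t)) :
    ∃ F : Set (Subsemigroup (S × T)), ¬ F.Countable ∧
      ∀ A ∈ F, ∀ B ∈ F, A ≠ B → ¬ Nonempty (A ≃* B) := by
  obtain ⟨F, -, hF, hpairwise⟩ := exists_not_countable_pairwise_not_rel
    (isomorphicSetoid (S × T)) (not_countable_range_powGrid hs ht) fun _ ⟨X, hX⟩ => by
      have := countable_mulHom_powGrid hs ht X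
      refine (countable_setOf_le_and_nonempty_mulEquiv (A := powGrid s t X)
        (powGrid s t univ)).mono ?_
      rintro _ ⟨⟨Y, rfl⟩, ⟨e⟩⟩
      exact ⟨powGrid_mono (subset_univ Y), ⟨hX ▸ e.symm⟩⟩
  exact ⟨F, hF, hpairwise⟩
end

section
/- For any integer k ≥ 2, the direct power ℕ^k contains uncountably many pairwise non-isomorphic subdirect products; that is, there is a family of cardinality the continuum of subsemigroups of ℕ^k, each projecting surjectively onto every coordinate, such that no two distinct members of the family are isomorphic as semigroups. -/
namespace SubdirectNP

def z (n : ℕ+) : ℤ := (n : ℕ)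

@[simp] lemma z_one : z 1 = 1 := rfl
@[simp] lemma z_two : z 2 = 2 := rfl
@[simp] lemma z_three : z 3 = 3 := rfl
@[simp] lemma z_succPNat (n : ℕ) : z n.succPNat = (n : ℤ) + 1 := by
  simp [z, Nat.succPNat]

lemma one_le_z (n : ℕ+) : 1 ≤ z n := by
  have := n.one_le
  simp only [z]
  exact_mod_cast this

lemma z_add (a b : ℕ+) : z (a+b) = z a + z b := by simp [z]

lemma z_inj {a b : ℕ+} (h : z a = z b) : a = b := by
  apply PNat.coe_injective
  simpa [z] using h

def T (A : Set ℕ+) : AddSubsemigroup (ℕ+ × ℕ+) where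
  carrier := {p | 2 ≤ p.1 ∨ p.2 ∈ A}
  add_mem' := by
    rintro ⟨x1,y1⟩ ⟨x2,y2⟩ _ _
    left
    have h1 := x1.one_le
    have h2 := x2.one_le
    calc (2:ℕ+) = 1 + 1 := by decide
    _ ≤ x1 + x2 := add_le_add h1 h2

lemma mem_T {A : Set ℕ+} {p : ℕ+ × ℕ+} : p ∈ T A ↔ 2 ≤ p.1 ∨ p.2 ∈ A := Iff.rfl

section Affine

variable {A B : Set ℕ+} (e : T A ≃+ T B)

/-- first coordinate of the image. -/
def G1 (x y : ℕ+) (h : (x,y) ∈ T A) : ℤ := z ((e ⟨(x,y),h⟩ : ℕ+ × ℕ+).1)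
/-- second coordinate of the image. -/
def G2 (x y : ℕ+) (h : (x,y) ∈ T A) : ℤ := z ((e ⟨(x,y),h⟩ : ℕ+ × ℕ+).2)

lemma one_le_G1 (x y : ℕ+) (h : (x,y) ∈ T A) : 1 ≤ G1 e x y h := one_le_z _
lemma one_le_G2 (x y : ℕ+) (h : (x,y) ∈ T A) : 1 ≤ G2 e x y h := one_le_z _

lemma rel {x1 y1 x2 y2 x3 y3 x4 y4 : ℕ+}
    (h1 : (x1,y1) ∈ T A) (h2 : (x2,y2) ∈ T A) (h3 : (x3,y3) ∈ T A) (h4 : (x4,y4) ∈ T A)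
    (hx : x1 + x2 = x3 + x4) (hy : y1 + y2 = y3 + y4) :
    G1 e x1 y1 h1 + G1 e x2 y2 h2 = G1 e x3 y3 h3 + G1 e x4 y4 h4 ∧
    G2 e x1 y1 h1 + G2 e x2 y2 h2 = G2 e x3 y3 h3 + G2 e x4 y4 h4 := by
  have key : e ⟨(x1,y1),h1⟩ + e ⟨(x2,y2),h2⟩ = e ⟨(x3,y3),h3⟩ + e ⟨(x4,y4),h4⟩ := by
    rw [← map_add, ← map_add]
    congr 1
    apply Subtype.ext
    show ((x1,y1) : ℕ+ × ℕ+) + (x2,y2) = ((x3,y3) : ℕ+ × ℕ+) + (x4,y4)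
    simp [Prod.ext_iff, hx, hy]
  have kv : ((e ⟨(x1,y1),h1⟩ : ℕ+ × ℕ+) + (e ⟨(x2,y2),h2⟩ : ℕ+ × ℕ+))
      = ((e ⟨(x3,y3),h3⟩ : ℕ+ × ℕ+) + (e ⟨(x4,y4),h4⟩ : ℕ+ × ℕ+)) := by
    exact_mod_cast congrArg Subtype.val key
  constructor
  · have := congrArg (fun pr : ℕ+ × ℕ+ => z pr.1) kv
    simpa [z_add, G1] using this
  · have := congrArg (fun pr : ℕ+ × ℕ+ => z pr.2) kv
    simpa [z_add, G2] using this


lemma pnat_two_le_succPNat_succ (m : ℕ) : (2:ℕ+) ≤ (m+1).succPNat := by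
  rw [← PNat.coe_le_coe]
  simp [Nat.succPNat]

lemma exists_affine (hA1 : (1:ℕ+) ∈ A) (hA2 : (2:ℕ+) ∈ A) :
    ∃ c1 c2 p q r s : ℤ,
      (∀ w : T A, z ((e w : ℕ+ × ℕ+).1)
            = c1 + (z (w : ℕ+ × ℕ+).1 - 1) * p + (z (w : ℕ+ × ℕ+).2 - 1) * r
        ∧ z ((e w : ℕ+ × ℕ+).2)
            = c2 + (z (w : ℕ+ × ℕ+).1 - 1) * q + (z (w : ℕ+ × ℕ+).2 - 1) * s) ∧
      0 ≤ p ∧ 0 ≤ q ∧ 0 ≤ r ∧ 0 ≤ s ∧ 1 ≤ c1 ∧ 1 ≤ c2 := by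
  have m11 : ((1:ℕ+),(1:ℕ+)) ∈ T A := Or.inr hA1
  have m12 : ((1:ℕ+),(2:ℕ+)) ∈ T A := Or.inr hA2
  have m21 : ((2:ℕ+),(1:ℕ+)) ∈ T A := Or.inl le_rfl
  have m2y : ∀ y : ℕ+, ((2:ℕ+), y) ∈ T A := fun _ => Or.inl le_rfl
  have msucc : ∀ (m : ℕ) (y : ℕ+), ((m+1).succPNat, y) ∈ T A :=
    fun m _ => Or.inl (pnat_two_le_succPNat_succ m)
  set c1 := G1 e 1 1 m11 with hc1def
  set c2 := G2 e 1 1 m11 with hc2def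
  set p := G1 e 2 1 m21 - c1 with hpdef
  set q := G2 e 2 1 m21 - c2 with hqdef
  set r := G1 e 1 2 m12 - c1 with hrdef
  set s := G2 e 1 2 m12 - c2 with hsdef
  have htwo : (1:ℕ+) + 1 = 2 := rfl
  have haddtwo : ∀ x : ℕ+, x + 1 + 1 = x + 2 := by
    intro x; rw [add_assoc, htwo]
  -- horizontal step
  have stepx : ∀ (x y : ℕ+) (h : (x,y) ∈ T A) (h' : (x+1,y) ∈ T A),
      G1 e (x+1) y h' = G1 e x y h + p ∧ G2 e (x+1) y h' = G2 e x y h + q := by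
    intro x y h h'
    have hrel := rel e h' m11 h m21 (haddtwo x) rfl
    exact ⟨by linarith [hrel.1], by linarith [hrel.2]⟩
  -- vertical step at x = 2
  have stepy : ∀ (y : ℕ+),
      G1 e 2 (y+1) (m2y _) = G1 e 2 y (m2y _) + r ∧
      G2 e 2 (y+1) (m2y _) = G2 e 2 y (m2y _) + s := by
    intro y
    have hrel := rel e (m2y (y+1)) m11 (m2y y) m12 rfl (haddtwo y)
    exact ⟨by linarith [hrel.1], by linarith [hrel.2]⟩
  -- column x = 2, nat-indexed
  have col : ∀ n : ℕ, G1 e 2 n.succPNat (m2y _) = c1 + p + n * r ∧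
      G2 e 2 n.succPNat (m2y _) = c2 + q + n * s := by
    intro n
    induction n with
    | zero =>
      constructor
      · show G1 e 2 1 (m2y 1) = c1 + p + (0:ℕ) * r
        push_cast; rw [hpdef]; ring
      · show G2 e 2 1 (m2y 1) = c2 + q + (0:ℕ) * s
        push_cast; rw [hqdef]; ring
    | succ n ih =>
      have hs : (n+1).succPNat = n.succPNat + 1 := rfl
      constructor
      · rw [show G1 e 2 (n+1).succPNat (m2y _) = G1 e 2 (n.succPNat + 1) (m2y _) from rfl,
          (stepy n.succPNat).1, ih.1]; push_cast; ring
      · rw [show G2 e 2 (n+1).succPNat (m2y _) = G2 e 2 (n.succPNat + 1) (m2y _) from rfl,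
          (stepy n.succPNat).2, ih.2]; push_cast; ring
  -- column x = 2, PNat form
  have colP : ∀ (y : ℕ+), G1 e 2 y (m2y y) = c1 + p + (z y - 1) * r ∧
      G2 e 2 y (m2y y) = c2 + q + (z y - 1) * s := by
    intro y
    obtain ⟨n, rfl⟩ : ∃ n : ℕ, y = n.succPNat := ⟨y.natPred, (PNat.succPNat_natPred y).symm⟩
    have := col n
    simpa using this
  -- rows x ≥ 2
  have rowAux : ∀ (m : ℕ) (y : ℕ+),
      G1 e ((m+1).succPNat) y (msucc m y) = c1 + ((m:ℤ)+1) * p + (z y - 1) * r ∧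
      G2 e ((m+1).succPNat) y (msucc m y) = c2 + ((m:ℤ)+1) * q + (z y - 1) * s := by
    intro m
    induction m with
    | zero =>
      intro y
      have := colP y
      constructor
      · show G1 e 2 y (m2y y) = _
        rw [this.1]; push_cast; ring
      · show G2 e 2 y (m2y y) = _
        rw [this.2]; push_cast; ring
    | succ m ih =>
      intro y
      have hs : ((m+1)+1).succPNat = (m+1).succPNat + 1 := rfl
      have hst := stepx ((m+1).succPNat) y (msucc m y)
        (by rw [← hs]; exact msucc (m+1) y)
      constructor
      · show G1 e ((m+1).succPNat + 1) y _ = _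
        rw [hst.1, (ih y).1]; push_cast; ring
      · show G2 e ((m+1).succPNat + 1) y _ = _
        rw [hst.2, (ih y).2]; push_cast; ring
  -- full formula
  have formula : ∀ (x y : ℕ+) (h : (x,y) ∈ T A),
      G1 e x y h = c1 + (z x - 1) * p + (z y - 1) * r ∧
      G2 e x y h = c2 + (z x - 1) * q + (z y - 1) * s := by
    intro x y h
    rcases lt_or_ge x 2 with hx | hx
    · have hx' : x < 1 + 1 := by rw [htwo]; exact hx
      have hx1 : x = 1 := le_antisymm (PNat.lt_add_one_iff.mp hx') x.one_le
      subst hx1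
      have hrel := rel e h m21 (m2y y) m11 (by rw [add_comm]) rfl
      have h1 := colP y
      constructor
      · have := hrel.1
        rw [h1.1] at this
        simp only [z_one]
        linarith
      · have := hrel.2
        rw [h1.2] at this
        simp only [z_one]
        linarith
    · obtain ⟨m, rfl⟩ : ∃ m : ℕ, x = (m+1).succPNat := by
        refine ⟨x.natPred - 1, ?_⟩
        apply PNat.coe_injective
        have h2 : ((2:ℕ+):ℕ) ≤ (x:ℕ) := (PNat.coe_le_coe 2 x).mpr hx
        have h3 : x.natPred = (x:ℕ) - 1 := rfl
        simp only [PNat.val_ofNat] at h2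
        simp [Nat.succPNat]
        omega
      have := rowAux m y
      have hz : z ((m+1).succPNat) - 1 = (m:ℤ) + 1 := by simp
      exact ⟨by rw [this.1, hz], by rw [this.2, hz]⟩
  refine ⟨c1, c2, p, q, r, s, ?_, ?_, ?_, ?_, ?_, one_le_G1 e 1 1 m11, one_le_G2 e 1 1 m11⟩
  · rintro ⟨⟨x,y⟩, h⟩
    exact formula x y h
  -- 0 ≤ p
  · by_contra hneg
    push_neg at hneg
    have hp1 : p ≤ -1 := by omega
    have hc1pos : 1 ≤ c1 := one_le_G1 e 1 1 m11
    set x : ℕ+ := (c1.toNat).succPNat with hx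
    have hx2 : (2:ℕ+) ≤ x := by
      rw [hx, show c1.toNat = (c1.toNat - 1) + 1 by omega]
      exact pnat_two_le_succPNat_succ _
    have hmem : (x, (1:ℕ+)) ∈ T A := Or.inl hx2
    have hf := (formula x 1 hmem).1
    have hzx : z x = c1 + 1 := by
      rw [hx, z_succPNat]
      have : (c1.toNat : ℤ) = c1 := Int.toNat_of_nonneg (by omega)
      omega
    have hge := one_le_G1 e x 1 hmem
    rw [hf, hzx] at hge
    simp only [z_one] at hge
    nlinarith
  -- 0 ≤ q
  · by_contra hneg
    push_neg at hneg
    have hp1 : q ≤ -1 := by omega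
    have hc2pos : 1 ≤ c2 := one_le_G2 e 1 1 m11
    set x : ℕ+ := (c2.toNat).succPNat with hx
    have hx2 : (2:ℕ+) ≤ x := by
      rw [hx, show c2.toNat = (c2.toNat - 1) + 1 by omega]
      exact pnat_two_le_succPNat_succ _
    have hmem : (x, (1:ℕ+)) ∈ T A := Or.inl hx2
    have hf := (formula x 1 hmem).2
    have hzx : z x = c2 + 1 := by
      rw [hx, z_succPNat]
      have : (c2.toNat : ℤ) = c2 := Int.toNat_of_nonneg (by omega)
      omega
    have hge := one_le_G2 e x 1 hmem
    rw [hf, hzx] at hge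
    simp only [z_one] at hge
    nlinarith
  -- 0 ≤ r
  · by_contra hneg
    push_neg at hneg
    have hp1 : r ≤ -1 := by omega
    have hd : 1 ≤ c1 + p := by
      have := one_le_G1 e 2 1 m21
      omega
    set y : ℕ+ := ((c1+p).toNat).succPNat with hy
    have hzy : z y = (c1 + p) + 1 := by
      rw [hy, z_succPNat]
      have : ((c1+p).toNat : ℤ) = c1 + p := Int.toNat_of_nonneg (by omega)
      omega
    have hf := (formula 2 y (m2y y)).1
    have hge := one_le_G1 e 2 y (m2y y)
    rw [hf, hzy] at hge
    simp only [z_two] at hge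
    nlinarith
  -- 0 ≤ s
  · by_contra hneg
    push_neg at hneg
    have hp1 : s ≤ -1 := by omega
    have hd : 1 ≤ c2 + q := by
      have := one_le_G2 e 2 1 m21
      omega
    set y : ℕ+ := ((c2+q).toNat).succPNat with hy
    have hzy : z y = (c2 + q) + 1 := by
      rw [hy, z_succPNat]
      have : ((c2+q).toNat : ℤ) = c2 + q := Int.toNat_of_nonneg (by omega)
      omega
    have hf := (formula 2 y (m2y y)).2
    have hge := one_le_G2 e 2 y (m2y y)
    rw [hf, hzy] at hge
    simp only [z_two] at hge
    nlinarith

end Affine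

lemma core {A B : Set ℕ+} (hA1 : (1:ℕ+) ∈ A) (hA2 : (2:ℕ+) ∈ A) (hA3 : (3:ℕ+) ∉ A)
    (hB1 : (1:ℕ+) ∈ B) (hB2 : (2:ℕ+) ∈ B) (hB3 : (3:ℕ+) ∉ B)
    (hAB : A ≠ B) : ¬ Nonempty ((T A) ≃+ (T B)) := by
  rintro ⟨e⟩
  obtain ⟨c1,c2,p,q,r,s, fe, hp, hq, hr, hs, hc1, hc2⟩ := exists_affine e hA1 hA2
  obtain ⟨d1,d2,p',q',r',s', fg, hp', hq', hr', hs', hd1, hd2⟩ := exists_affine e.symm hB1 hB2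
  -- composite identities
  have key : ∀ w : T A,
      z ((w : ℕ+ × ℕ+).1)
        = d1 + ((c1 + (z (w : ℕ+ × ℕ+).1 - 1) * p + (z (w : ℕ+ × ℕ+).2 - 1) * r) - 1) * p'
             + ((c2 + (z (w : ℕ+ × ℕ+).1 - 1) * q + (z (w : ℕ+ × ℕ+).2 - 1) * s) - 1) * r' ∧
      z ((w : ℕ+ × ℕ+).2)
        = d2 + ((c1 + (z (w : ℕ+ × ℕ+).1 - 1) * p + (z (w : ℕ+ × ℕ+).2 - 1) * r) - 1) * q'
             + ((c2 + (z (w : ℕ+ × ℕ+).1 - 1) * q + (z (w : ℕ+ × ℕ+).2 - 1) * s) - 1) * s' := by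
    intro w
    have h1 := (fg (e w)).1
    have h2 := (fg (e w)).2
    rw [AddEquiv.symm_apply_apply] at h1 h2
    rw [(fe w).1, (fe w).2] at h1 h2
    exact ⟨h1, h2⟩
  have key' : ∀ w : T B,
      z ((w : ℕ+ × ℕ+).1)
        = c1 + ((d1 + (z (w : ℕ+ × ℕ+).1 - 1) * p' + (z (w : ℕ+ × ℕ+).2 - 1) * r') - 1) * p
             + ((d2 + (z (w : ℕ+ × ℕ+).1 - 1) * q' + (z (w : ℕ+ × ℕ+).2 - 1) * s') - 1) * r ∧
      z ((w : ℕ+ × ℕ+).2)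
        = c2 + ((d1 + (z (w : ℕ+ × ℕ+).1 - 1) * p' + (z (w : ℕ+ × ℕ+).2 - 1) * r') - 1) * q
             + ((d2 + (z (w : ℕ+ × ℕ+).1 - 1) * q' + (z (w : ℕ+ × ℕ+).2 - 1) * s') - 1) * s := by
    intro w
    have h1 := (fe (e.symm w)).1
    have h2 := (fe (e.symm w)).2
    rw [AddEquiv.apply_symm_apply] at h1 h2
    rw [(fg w).1, (fg w).2] at h1 h2
    exact ⟨h1, h2⟩
  have m3 : (2:ℕ+) ≤ 3 := by decide
  set wA21 : T A := ⟨((2:ℕ+),(1:ℕ+)), Or.inl le_rfl⟩ with hwA21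
  set wA31 : T A := ⟨((3:ℕ+),(1:ℕ+)), Or.inl m3⟩ with hwA31
  set wA22 : T A := ⟨((2:ℕ+),(2:ℕ+)), Or.inl le_rfl⟩ with hwA22
  set wB21 : T B := ⟨((2:ℕ+),(1:ℕ+)), Or.inl le_rfl⟩ with hwB21
  set wB31 : T B := ⟨((3:ℕ+),(1:ℕ+)), Or.inl m3⟩ with hwB31
  set wB22 : T B := ⟨((2:ℕ+),(2:ℕ+)), Or.inl le_rfl⟩ with hwB22
  have A21 := (key wA21).1
  have B21 := (key wA21).2
  have A31 := (key wA31).1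
  have B31 := (key wA31).2
  have A22 := (key wA22).1
  have B22 := (key wA22).2
  have A21' := (key' wB21).1
  have B21' := (key' wB21).2
  have A31' := (key' wB31).1
  have B31' := (key' wB31).2
  have A22' := (key' wB22).1
  have B22' := (key' wB22).2
  simp only [hwA21, hwA31, hwA22, hwB21, hwB31, hwB22, z_one, z_two, z_three]
    at A21 B21 A31 B31 A22 B22 A21' B21' A31' B31' A22' B22'
  have E1 : p * p' + q * r' = 1 := by linear_combination A21 - A31
  have E2 : p * q' + q * s' = 0 := by linear_combination B21 - B31
  have E3 : r * p' + s * r' = 0 := by linear_combination A21 - A22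
  have E4 : r * q' + s * s' = 1 := by linear_combination B21 - B22
  have E5 : p' * p + q' * r = 1 := by linear_combination A21' - A31'
  have E6 : p' * q + q' * s = 0 := by linear_combination B21' - B31'
  have E7 : r' * p + s' * r = 0 := by linear_combination A21' - A22'
  have E8 : r' * q + s' * s = 1 := by linear_combination B21' - B22'
  rcases eq_or_lt_of_le hp with hp0 | hppos
  · -- swap case: p = 0
    have hp0 : p = 0 := hp0.symm
    subst hp0
    have hqr' : q * r' = 1 := by linarith
    obtain ⟨hq1, hr'1⟩ : q = 1 ∧ r' = 1 := by
      rcases Int.mul_eq_one_iff_eq_one_or_neg_one.mp hqr' with ⟨h,h'⟩|⟨h,h'⟩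
      · exact ⟨h, h'⟩
      · omega
    subst hq1; subst hr'1
    have hs'0 : s' = 0 := by linarith
    subst hs'0
    have hrq' : r * q' = 1 := by linarith
    obtain ⟨hr1, hq'1⟩ : r = 1 ∧ q' = 1 := by
      rcases Int.mul_eq_one_iff_eq_one_or_neg_one.mp hrq' with ⟨h,h'⟩|⟨h,h'⟩
      · exact ⟨h, h'⟩
      · omega
    subst hr1; subst hq'1
    obtain ⟨hp'0, hs0⟩ : p' = 0 ∧ s = 0 := by constructor <;> linarith
    subst hp'0; subst hs0
    have hc2v : c2 = 1 ∧ d1 = 1 := by constructor <;> linarith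
    have hc1v : c1 = 1 ∧ d2 = 1 := by constructor <;> linarith
    obtain ⟨hc2v, hd1v⟩ := hc2v
    obtain ⟨hc1v, hd2v⟩ := hc1v
    subst hc2v; subst hd1v; subst hc1v; subst hd2v
    -- e.symm maps (3,1) to (1,3), so 3 ∈ A
    have h1 := (fg wB31).1
    have h2 := (fg wB31).2
    simp only [hwB31, z_one, z_three] at h1 h2
    have hv1 : ((e.symm wB31 : ℕ+ × ℕ+).1) = 1 := by
      apply z_inj; rw [h1]; simp
    have hv2 : ((e.symm wB31 : ℕ+ × ℕ+).2) = 3 := by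
      apply z_inj; rw [h2]; simp
    have hmem := (e.symm wB31).2
    rw [mem_T, hv1, hv2] at hmem
    rcases hmem with h | h
    · exact absurd h (by decide)
    · exact hA3 h
  · -- identity case: 1 ≤ p
    have hppos : 1 ≤ p := hppos
    have hpq' : 0 ≤ p * q' := mul_nonneg (by linarith) hq'
    have hqs' : 0 ≤ q * s' := mul_nonneg hq hs'
    have hq'0 : q' = 0 := by
      have h0 : p * q' = 0 := by linarith
      rcases mul_eq_zero.mp h0 with h | h
      · omega
      · exact h
    subst hq'0
    have hp'p : p' * p = 1 := by linarith
    obtain ⟨hp'1, hp1⟩ : p' = 1 ∧ p = 1 := by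
      rcases Int.mul_eq_one_iff_eq_one_or_neg_one.mp hp'p with ⟨h,h'⟩|⟨h,h'⟩
      · exact ⟨h, h'⟩
      · omega
    subst hp'1; subst hp1
    have hq0 : q = 0 := by linarith
    subst hq0
    have hsr' : 0 ≤ s * r' := mul_nonneg hs hr'
    have hr0 : r = 0 := by linarith
    subst hr0
    have hss' : s * s' = 1 := by linarith
    obtain ⟨hs1, hs'1⟩ : s = 1 ∧ s' = 1 := by
      rcases Int.mul_eq_one_iff_eq_one_or_neg_one.mp hss' with ⟨h,h'⟩|⟨h,h'⟩
      · exact ⟨h, h'⟩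
      · omega
    subst hs1; subst hs'1
    have hr'0 : r' = 0 := by linarith
    subst hr'0
    have hc1v : c1 = 1 ∧ d1 = 1 := by constructor <;> linarith
    have hc2v : c2 = 1 ∧ d2 = 1 := by constructor <;> linarith
    obtain ⟨hc1v, hd1v⟩ := hc1v
    obtain ⟨hc2v, hd2v⟩ := hc2v
    subst hc1v; subst hd1v; subst hc2v; subst hd2v
    -- then e is the identity on coordinates, so A = B
    apply hAB
    ext n
    constructor
    · intro hn
      set w : T A := ⟨((1:ℕ+), n), Or.inr hn⟩ with hw
      have h1 := (fe w).1
      have h2 := (fe w).2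
      simp only [hw, z_one] at h1 h2
      have hv1 : ((e w : ℕ+ × ℕ+).1) = 1 := by
        apply z_inj; rw [h1]; simp
      have hv2 : ((e w : ℕ+ × ℕ+).2) = n := by
        apply z_inj; rw [h2]; simp
      have hmem := (e w).2
      rw [mem_T, hv1, hv2] at hmem
      rcases hmem with h | h
      · exact absurd h (by decide)
      · exact h
    · intro hn
      set w : T B := ⟨((1:ℕ+), n), Or.inr hn⟩ with hw
      have h1 := (fg w).1
      have h2 := (fg w).2
      simp only [hw, z_one] at h1 h2
      have hv1 : ((e.symm w : ℕ+ × ℕ+).1) = 1 := by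
        apply z_inj; rw [h1]; simp
      have hv2 : ((e.symm w : ℕ+ × ℕ+).2) = n := by
        apply z_inj; rw [h2]; simp
      have hmem := (e.symm w).2
      rw [mem_T, hv1, hv2] at hmem
      rcases hmem with h | h
      · exact absurd h (by decide)
      · exact h

section Power

variable (n : ℕ)

lemma fin_one_ne_zero : (1 : Fin (n+2)) ≠ 0 := by simp [Fin.ext_iff]

/-- diagonal embedding of `T A` into `ℕ+ ^ (n+2)`. -/
def T' (A : Set ℕ+) : AddSubsemigroup (Fin (n+2) → ℕ+) where
  carrier := {v | (v 0, v 1) ∈ T A ∧ ∀ j, j ≠ 0 → j ≠ 1 → v j = v 1}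
  add_mem' := by
    rintro v w ⟨hv1, hv2⟩ ⟨hw1, hw2⟩
    refine ⟨Or.inl ?_, ?_⟩
    · show (2:ℕ+) ≤ (v + w) 0
      calc (2:ℕ+) = 1 + 1 := by decide
      _ ≤ v 0 + w 0 := add_le_add (v 0).one_le (w 0).one_le
    · intro j hj0 hj1
      show v j + w j = v 1 + w 1
      rw [hv2 j hj0 hj1, hw2 j hj0 hj1]

lemma mem_T' {A : Set ℕ+} {v : Fin (n+2) → ℕ+} :
    v ∈ T' n A ↔ ((2 ≤ v 0 ∨ v 1 ∈ A) ∧ ∀ j, j ≠ 0 → j ≠ 1 → v j = v 1) := Iff.rfl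

/-- `T' n A` is isomorphic to `T A`. -/
def isoT' (A : Set ℕ+) : (T' n A) ≃+ (T A) where
  toFun v := ⟨(v.val 0, v.val 1), v.2.1⟩
  invFun w := ⟨fun j => if j = 0 then (w : ℕ+ × ℕ+).1 else (w : ℕ+ × ℕ+).2, by
    constructor
    · simpa [fin_one_ne_zero n] using w.2
    · intro j hj0 hj1
      simp [hj0, fin_one_ne_zero n]⟩
  left_inv v := by
    apply Subtype.ext
    funext j
    by_cases hj0 : j = 0
    · subst hj0; simp
    · by_cases hj1 : j = 1
      · subst hj1; simp [fin_one_ne_zero n]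
      · simp only [if_neg hj0]
        exact (v.2.2 j hj0 hj1).symm
  right_inv w := by
    apply Subtype.ext
    simp [fin_one_ne_zero n]
  map_add' v w := by
    apply Subtype.ext
    simp [Prod.ext_iff]

lemma T'_inj {A B : Set ℕ+} (h : T' n A = T' n B) : A = B := by
  have hmem : ∀ (C : Set ℕ+) (a : ℕ+),
      ((fun j : Fin (n+2) => if j = 0 then 1 else a) ∈ T' n C) ↔ a ∈ C := by
    intro C a
    have e0 : (fun j : Fin (n+2) => if j = 0 then (1:ℕ+) else a) 0 = 1 := by simp
    have e1 : (fun j : Fin (n+2) => if j = 0 then (1:ℕ+) else a) 1 = a := by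
      simp [fin_one_ne_zero n]
    rw [mem_T']
    simp only [fin_one_ne_zero n, eq_self_iff_true, if_true, if_false, ite_true, ite_false]
    constructor
    · rintro ⟨h1, _⟩
      rcases h1 with h1 | h1
      · exact absurd h1 (by decide)
      · exact h1
    · intro ha
      refine ⟨Or.inr ha, ?_⟩
      intro j hj0 hj1
      simp [hj0]
  ext a
  rw [← hmem A a, ← hmem B a, h]

lemma subdirect (A : Set ℕ+) (hA1 : (1:ℕ+) ∈ A) (i : Fin (n+2)) (m : ℕ+) :
    ∃ v ∈ T' n A, v i = m := by
  by_cases hi : i = 0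
  · refine ⟨fun j => if j = 0 then m else 1, ⟨Or.inr ?_, ?_⟩, ?_⟩
    · simpa [fin_one_ne_zero n] using hA1
    · intro j hj0 hj1
      simp [hj0, fin_one_ne_zero n]
    · subst hi; simp
  · refine ⟨fun j => if j = 0 then 2 else m, ⟨Or.inl ?_, ?_⟩, ?_⟩
    · simp
    · intro j hj0 hj1
      simp [hj0, fin_one_ne_zero n]
    · simp [hi]

end Power

lemma insert_inj {S1 S2 : Set ℕ+} (h1 : ∀ x ∈ S1, 4 ≤ x) (h2 : ∀ x ∈ S2, 4 ≤ x)
    (h : (insert 1 (insert 2 S1) : Set ℕ+) = insert 1 (insert 2 S2)) : S1 = S2 := by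
  have aux : ∀ (U V : Set ℕ+), (∀ x ∈ U, 4 ≤ x) → (∀ x ∈ V, 4 ≤ x) →
      (insert 1 (insert 2 U) : Set ℕ+) = insert 1 (insert 2 V) → ∀ t ∈ U, t ∈ V := by
    intro U V hU hV hUV t ht
    have h4 := hU t ht
    have : t ∈ (insert 1 (insert 2 V) : Set ℕ+) := by
      rw [← hUV]; simp [ht]
    rcases this with h' | h' | h'
    · rw [h'] at h4; exact absurd h4 (by decide)
    · rw [h'] at h4; exact absurd h4 (by decide)
    · exact h'
  ext t
  exact ⟨fun ht => aux S1 S2 h1 h2 h t ht, fun ht => aux S2 S1 h2 h1 h.symm t ht⟩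

lemma good_conds {S : Set ℕ+} (hS : ∀ x ∈ S, 4 ≤ x) :
    (1:ℕ+) ∈ insert 1 (insert 2 S) ∧ (2:ℕ+) ∈ insert 1 (insert 2 S) ∧
    (3:ℕ+) ∉ insert 1 (insert 2 S) := by
  refine ⟨Set.mem_insert _ _, Set.mem_insert_of_mem _ (Set.mem_insert _ _), ?_⟩
  intro h
  rcases h with h | h | h
  · exact absurd h (by decide)
  · exact absurd h (by decide)
  · exact absurd (hS 3 h) (by decide)

end SubdirectNP

/-- For any `k ≥ 2`, the direct power `ℕ^k` of the free monogenic semigroup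
contains continuum many pairwise non-isomorphic subdirect products, i.e.
subsemigroups projecting onto every coordinate. -/
theorem uncountably_many_nonisomorphic_subdirect_products_of_Npow
    (k : ℕ) (hk : 2 ≤ k) :
    ∃ F : Set (AddSubsemigroup (Fin k → ℕ+)),
      Cardinal.mk F = Cardinal.continuum ∧
      (∀ T ∈ F, ∀ i : Fin k, ∀ n : ℕ+, ∃ v ∈ T, v i = n) ∧
      ∀ A ∈ F, ∀ B ∈ F, A ≠ B → ¬ Nonempty (A ≃+ B) := by
  classical
  obtain ⟨m, rfl⟩ : ∃ m, k = m + 2 := ⟨k - 2, by omega⟩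
  open SubdirectNP in
  refine ⟨{X | ∃ S : Set ℕ+, (∀ x ∈ S, 4 ≤ x) ∧
      X = SubdirectNP.T' m (insert 1 (insert 2 S))}, ?_, ?_, ?_⟩
  · -- cardinality
    apply le_antisymm
    · -- upper bound
      have hinj : Function.Injective
          (fun X : {X // X ∈ {X | ∃ S : Set ℕ+, (∀ x ∈ S, 4 ≤ x) ∧
            X = SubdirectNP.T' m (insert 1 (insert 2 S))}} =>
            (X.val : Set (Fin (m+2) → ℕ+))) := by
        intro X Y h
        exact Subtype.ext (SetLike.coe_injective h)
      calc Cardinal.mk _ ≤ Cardinal.mk (Set (Fin (m+2) → ℕ+)) :=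
            Cardinal.mk_le_of_injective hinj
      _ = 2 ^ Cardinal.mk (Fin (m+2) → ℕ+) := Cardinal.mk_set
      _ = 2 ^ Cardinal.aleph0 := by rw [Cardinal.mk_eq_aleph0]
      _ = Cardinal.continuum := Cardinal.two_power_aleph0
    · -- lower bound
      set sh : ℕ → ℕ+ := fun x => ⟨x + 4, by omega⟩ with hsh
      have hsh4 : ∀ (S0 : Set ℕ) (x : ℕ+), x ∈ sh '' S0 → 4 ≤ x := by
        rintro S0 x ⟨y, _, rfl⟩
        rw [← PNat.coe_le_coe]
        simp [hsh]
      have hshinj : Function.Injective sh := by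
        intro a b h
        have := congrArg (fun t : ℕ+ => (t : ℕ)) h
        simpa [hsh] using this
      have hg : Function.Injective
          (fun S0 : Set ℕ =>
            (⟨SubdirectNP.T' m (insert 1 (insert 2 (sh '' S0))),
              ⟨sh '' S0, hsh4 S0, rfl⟩⟩ :
              {X // X ∈ {X | ∃ S : Set ℕ+, (∀ x ∈ S, 4 ≤ x) ∧
                X = SubdirectNP.T' m (insert 1 (insert 2 S))}})) := by
        intro S0 S1 h
        have h' := congrArg Subtype.val h
        have h'' := SubdirectNP.T'_inj m h'
        have h3 := SubdirectNP.insert_inj (hsh4 S0) (hsh4 S1) h''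
        exact Set.image_injective.mpr hshinj h3
      calc Cardinal.continuum = 2 ^ Cardinal.aleph0 := Cardinal.two_power_aleph0.symm
      _ = 2 ^ Cardinal.mk ℕ := by rw [Cardinal.mk_nat]
      _ = Cardinal.mk (Set ℕ) := Cardinal.mk_set.symm
      _ ≤ _ := Cardinal.mk_le_of_injective hg
  · -- subdirectness
    rintro X ⟨S, hS, rfl⟩ i nn
    exact SubdirectNP.subdirect m _ (SubdirectNP.good_conds hS).1 i nn
  · -- pairwise non-isomorphic
    rintro X ⟨S1, hS1, rfl⟩ Y ⟨S2, hS2, rfl⟩ hXY ⟨ee⟩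
    obtain ⟨hA1, hA2, hA3⟩ := SubdirectNP.good_conds hS1
    obtain ⟨hB1, hB2, hB3⟩ := SubdirectNP.good_conds hS2
    have hAB : (insert 1 (insert 2 S1) : Set ℕ+) ≠ insert 1 (insert 2 S2) := by
      intro h
      exact hXY (by rw [h])
    exact SubdirectNP.core hA1 hA2 hA3 hB1 hB2 hB3 hAB
      ⟨((SubdirectNP.isoT' m _).symm.trans (ee.trans (SubdirectNP.isoT' m _)))⟩
end

section
/- For a finite semigroup S, the following are equivalent: (i) ℕ × S has only countably many subsemigroups; (ii) ℕ × S has only countably many pairwise non-isomorphic subsemigroups (i.e. the subsemigroups of ℕ × S fall into only countably many isomorphism classes); (iii) S is a union of groups, i.e. every element of S lies in some subgroup of S. -/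
/-!
If every `s ∈ S` lies in a subgroup, then `(· * s)^[d] s = s` for some `d > 0`, so every fiber
`{n | (n, s) ∈ T}` of a subsemigroup `T ≤ ℕ × S` is closed under adding a fixed positive period.
Such subsets of `ℕ` are given by a period and a finite set of least elements, so there are
countably many of them, and `T` is determined by its finitely many fibers.

If `a` lies in no subgroup, then `a` is not a product of two elements of `⟨a⟩`. Hence the
subsemigroup generated by `X × {a}` has exactly the elements of `X × {a}` as indecomposables, and
an isomorphism between two such subsemigroups induces a Freiman 2-isomorphism between the index
sets. If `X` contains all even numbers, such a map is affine; so each isomorphism class contains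
only countably many of the continuum many subsemigroups generated by `(2ℕ ∪ (2A + 1)) × {a}`.
-/

section Iterate

variable {S : Type*} [Semigroup S]

theorem mul_iterate_mul_right (a x y : S) (k : ℕ) :
    x * (· * a)^[k] y = (· * a)^[k] (x * y) := by
  induction k with
  | zero => rfl
  | succ k ih => simp only [Function.iterate_succ_apply', ← ih, mul_assoc]

theorem exists_eq_iterate_of_mem_closure_singleton {a s : S}
    (hs : s ∈ Subsemigroup.closure {a}) : ∃ k, s = (· * a)^[k] a := by
  induction hs using Subsemigroup.closure_induction with
  | mem s hs => exact ⟨0, hs⟩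
  | mul s t _ _ hs ht =>
    obtain ⟨i, rfl⟩ := hs
    obtain ⟨j, rfl⟩ := ht
    refine ⟨j + (i + 1), ?_⟩
    rw [mul_iterate_mul_right, Function.iterate_add_apply, Function.iterate_succ_apply']

theorem exists_mul_mul_eq_of_iterate_eq {a : S} {k : ℕ} (h : (· * a)^[k + 1] a = a) :
    ∃ b, a * b * a = a ∧ a * b = b * a := by
  -- `h` says `a ^ (k + 2) = a`; the witness is `a ^ (2 * k + 1)`.
  have hcomm : a * (· * a)^[2 * k] a = (· * a)^[2 * k] a * a := by
    rw [mul_iterate_mul_right, ← Function.iterate_succ_apply' (· * a)]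
    rfl
  refine ⟨(· * a)^[2 * k] a, ?_, hcomm⟩
  calc a * (· * a)^[2 * k] a * a = (· * a)^[(k + 1) + (k + 1)] a := by
        rw [hcomm, show (k + 1) + (k + 1) = (2 * k).succ.succ by omega]
        simp only [Function.iterate_succ_apply']
    _ = a := by rw [Function.iterate_add_apply, h, h]

theorem mul_ne_of_mem_closure_singleton {a s t : S} (ha : ¬∃ b, a * b * a = a ∧ a * b = b * a)
    (hs : s ∈ Subsemigroup.closure {a}) (ht : t ∈ Subsemigroup.closure {a}) : s * t ≠ a := by
  obtain ⟨i, rfl⟩ := exists_eq_iterate_of_mem_closure_singleton hs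
  obtain ⟨j, rfl⟩ := exists_eq_iterate_of_mem_closure_singleton ht
  intro h
  refine ha (exists_mul_mul_eq_of_iterate_eq (k := j + i) ?_)
  rwa [mul_iterate_mul_right, ← Function.iterate_succ_apply' (· * a),
    ← Function.iterate_add_apply] at h

theorem exists_iterate_eq_self [Finite S] {a : S} (ha : ∃ b, a * b * a = a ∧ a * b = b * a) :
    ∃ d : ℕ+, (· * a)^[d] a = a := by
  -- Right multiplication by `b` undoes right multiplication by `a` along the orbit of `a`, so the
  -- orbit, which repeats since `S` is finite, returns to `a` itself.
  obtain ⟨b, hb, hab⟩ := ha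
  have haab : a * a * b = a := by rw [mul_assoc, hab, ← mul_assoc, hb]
  have hcancel : ∀ k, (· * a)^[k + 1] a * b = (· * a)^[k] a := by
    rintro (_ | k)
    · exact haab
    · rw [Function.iterate_succ_apply', Function.iterate_succ_apply', mul_assoc, mul_assoc,
        ← mul_assoc a, haab]
  have hperiod : ∀ i (d : ℕ+), (· * a)^[i] a = (· * a)^[i + d] a → (· * a)^[d] a = a := by
    intro i d h
    induction i with
    | zero => simpa using h.symm
    | succ i ih =>
      apply ih
      rw [← hcancel i, h, Nat.add_right_comm, hcancel]
  obtain ⟨i, j, hij, h⟩ := Finite.exists_ne_map_eq_of_infinite (fun n : ℕ => (· * a)^[n] a)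
  rcases hij.lt_or_gt with hlt | hlt
  · refine ⟨⟨j - i, by omega⟩, hperiod i _ ?_⟩
    rwa [PNat.mk_coe, Nat.add_sub_cancel' hlt.le]
  · refine ⟨⟨i - j, by omega⟩, hperiod j _ ?_⟩
    rw [PNat.mk_coe, Nat.add_sub_cancel' hlt.le]
    exact h.symm

end Iterate

section PeriodicSets

theorem Nat.add_mul_mem_of_add_mem {F : Set ℕ} {p : ℕ} (hF : ∀ x ∈ F, x + p ∈ F) {x : ℕ}
    (hx : x ∈ F) (k : ℕ) : x + p * k ∈ F := by
  induction k with
  | zero => simpa using hx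
  | succ k ih => simpa [Nat.mul_succ, ← add_assoc] using hF _ ih

theorem Nat.exists_finset_eq_of_add_mem {F : Set ℕ} {p : ℕ} (hp : 0 < p)
    (hF : ∀ x ∈ F, x + p ∈ F) : ∃ M : Finset ℕ, F = {x | ∃ y ∈ M, ∃ k, x = y + p * k} := by
  -- the least elements of `F` in the residue classes modulo `p` that meet `F`
  set M := {y ∈ F | ¬(p ≤ y ∧ y - p ∈ F)}
  have hinj : Set.InjOn (· % p) M := by
    have key : ∀ y ∈ M, ∀ z ∈ M, y ≤ z → y % p = z % p → y = z := by
      intro y hy z hz hyz hmod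
      obtain ⟨k, hk⟩ := (Nat.modEq_iff_dvd' hyz).1 hmod
      obtain rfl : z = y + p * k := by omega
      rcases k with _ | k
      · simp
      · refine absurd ⟨by rw [Nat.mul_succ]; omega, ?_⟩ hz.2
        convert Nat.add_mul_mem_of_add_mem hF hy.1 k using 1
        rw [Nat.mul_succ]
        omega
    intro y hy z hz hmod
    rcases le_total y z with h | h
    · exact key y hy z hz h hmod
    · exact (key z hz y hy h hmod.symm).symm
  have hfin : M.Finite :=
    Set.Finite.of_finite_image ((Set.finite_Iio p).subset (by
      rintro _ ⟨y, -, rfl⟩; exact Nat.mod_lt y hp)) hinj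
  refine ⟨hfin.toFinset, Set.ext fun x => ⟨fun hx => ?_, ?_⟩⟩
  · induction x using Nat.strong_induction_on with
    | _ x ih =>
      by_cases hxM : p ≤ x ∧ x - p ∈ F
      · obtain ⟨y, hy, k, hk⟩ := ih (x - p) (by omega) hxM.2
        exact ⟨y, hy, k + 1, by rw [Nat.mul_succ]; omega⟩
      · exact ⟨x, hfin.mem_toFinset.2 ⟨hx, hxM⟩, 0, by simp⟩
  · rintro ⟨y, hy, k, rfl⟩
    exact Nat.add_mul_mem_of_add_mem hF (hfin.mem_toFinset.1 hy).1 k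

theorem Nat.countable_setOf_add_mem :
    {F : Set ℕ | ∃ p > 0, ∀ x ∈ F, x + p ∈ F}.Countable := by
  refine (Set.countable_range fun q : ℕ × Finset ℕ => {x | ∃ y ∈ q.2, ∃ k, x = y + q.1 * k}).mono ?_
  rintro F ⟨p, hp, hF⟩
  obtain ⟨M, rfl⟩ := Nat.exists_finset_eq_of_add_mem hp hF
  exact ⟨(p, M), rfl⟩

end PeriodicSets

namespace Subsemigroup

variable {S : Type*} [Semigroup S]

def fiber (T : Subsemigroup (Multiplicative ℕ+ × S)) (s : S) : Set ℕ :=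
  {n | (Multiplicative.ofAdd n.succPNat, s) ∈ T}

theorem fiber_injective :
    Function.Injective (fiber : Subsemigroup (Multiplicative ℕ+ × S) → S → Set ℕ) := by
  intro T T' h
  ext ⟨g, s⟩
  have := Set.ext_iff.1 (congrFun h s) (Multiplicative.toAdd g).natPred
  simpa [fiber] using this

theorem ofAdd_add_mul_mem {T : Subsemigroup (Multiplicative ℕ+ × S)} {m n : ℕ+} {s : S}
    (hm : (Multiplicative.ofAdd m, s) ∈ T) (hn : (Multiplicative.ofAdd n, s) ∈ T) (k : ℕ+) :
    (Multiplicative.ofAdd (m + k * n), (· * s)^[k] s) ∈ T := by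
  induction k using PNat.recOn with
  | one => simpa using T.mul_mem hm hn
  | succ k ih =>
    convert T.mul_mem ih hn using 1
    simp only [add_mul, one_mul, Function.iterate_succ_apply', PNat.add_coe, PNat.val_ofNat,
      ofAdd_add, Prod.mk_mul_mk, mul_assoc]

theorem exists_add_mem_fiber [Finite S] {s : S} (hs : ∃ b, s * b * s = s ∧ s * b = b * s)
    (T : Subsemigroup (Multiplicative ℕ+ × S)) : ∃ p > 0, ∀ x ∈ T.fiber s, x + p ∈ T.fiber s := by
  obtain ⟨d, hd⟩ := exists_iterate_eq_self hs
  by_cases hne : (T.fiber s).Nonempty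
  · obtain ⟨n, hn⟩ := hne
    refine ⟨d * (n + 1), by positivity, fun x hx => ?_⟩
    have := ofAdd_add_mul_mem hx hn d
    rw [hd] at this
    show (Multiplicative.ofAdd (x + d * (n + 1)).succPNat, s) ∈ T
    convert this using 4
    apply PNat.eq
    simp only [Nat.succPNat_coe, PNat.add_coe, PNat.mul_coe, Nat.succ_eq_add_one]
    ring
  · exact ⟨1, one_pos, fun x hx => absurd ⟨x, hx⟩ hne⟩

theorem countable_of_forall_exists_mul_mul_eq [Finite S]
    (h : ∀ a : S, ∃ b, a * b * a = a ∧ a * b = b * a) :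
    Countable (Subsemigroup (Multiplicative ℕ+ × S)) := by
  have := Nat.countable_setOf_add_mem.to_subtype
  refine Function.Injective.countable (f := fun T (s : S) =>
    (⟨T.fiber s, exists_add_mem_fiber (h s) T⟩ : {F : Set ℕ | ∃ p > 0, ∀ x ∈ F, x + p ∈ F})) ?_
  intro T T' hTT'
  exact fiber_injective (funext fun s => congrArg Subtype.val (congrFun hTT' s))

end Subsemigroup

theorem MulEquiv.forall_mul_ne_apply_iff {M N : Type*} [Mul M] [Mul N] (e : M ≃* N) (x : M) :
    (∀ y z : N, y * z ≠ e x) ↔ ∀ y z : M, y * z ≠ x := by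
  simp only [e.surjective.forall, ← map_mul, ne_eq, EmbeddingLike.apply_eq_iff_eq]

section Generated

variable {S : Type*} (a : S) {X Y : Set ℕ}

def genElem (x : ℕ) : Multiplicative ℕ+ × S := (Multiplicative.ofAdd x.succPNat, a)

theorem genElem_injective : Function.Injective (genElem a) := by
  intro x y h
  simpa [genElem] using h

variable [Semigroup S]

def genSubsemigroup (X : Set ℕ) : Subsemigroup (Multiplicative ℕ+ × S) :=
  Subsemigroup.closure (genElem a '' X)

theorem genElem_mul_genElem_eq_iff {x y z w : ℕ} :
    genElem a x * genElem a y = genElem a z * genElem a w ↔ x + y = z + w := by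
  simp only [genElem, Prod.mk_mul_mk, Prod.mk.injEq, and_true, ← ofAdd_add,
    EmbeddingLike.apply_eq_iff_eq, ← PNat.coe_inj, PNat.add_coe, Nat.succPNat_coe]
  omega

theorem genElem_mem {x : ℕ} (hx : x ∈ X) : genElem a x ∈ genSubsemigroup a X :=
  Subsemigroup.subset_closure (Set.mem_image_of_mem _ hx)

theorem snd_mem_closure_of_mem_genSubsemigroup {p : Multiplicative ℕ+ × S}
    (hp : p ∈ genSubsemigroup a X) : p.2 ∈ Subsemigroup.closure {a} := by
  induction hp using Subsemigroup.closure_induction with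
  | mem p hp =>
    obtain ⟨x, -, rfl⟩ := hp
    exact Subsemigroup.subset_closure rfl
  | mul p q _ _ hp hq => exact Subsemigroup.mul_mem _ hp hq

variable {a}

theorem mem_image_genElem_iff (ha : ¬∃ b, a * b * a = a ∧ a * b = b * a)
    (t : genSubsemigroup a X) : (t : Multiplicative ℕ+ × S) ∈ genElem a '' X ↔
      ∀ q r : genSubsemigroup a X, q * r ≠ t := by
  constructor
  · rintro ⟨x, -, hx⟩ q r hqr
    refine mul_ne_of_mem_closure_singleton ha (snd_mem_closure_of_mem_genSubsemigroup a q.2)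
      (snd_mem_closure_of_mem_genSubsemigroup a r.2) ?_
    rw [← Prod.snd_mul, ← MulMemClass.coe_mul, hqr, ← hx]
    rfl
  · obtain ⟨t, ht⟩ := t
    intro hindec
    induction ht using Subsemigroup.closure_induction with
    | mem p hp => exact hp
    | mul p q hp hq => exact absurd rfl (hindec ⟨p, hp⟩ ⟨q, hq⟩)

theorem exists_apply_genElem_eq (ha : ¬∃ b, a * b * a = a ∧ a * b = b * a)
    (e : genSubsemigroup a X ≃* genSubsemigroup a Y) {x : ℕ} (hx : x ∈ X) :
    ∃ y ∈ Y, (e ⟨genElem a x, genElem_mem a hx⟩ : Multiplicative ℕ+ × S) = genElem a y := by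
  have hgen : (e ⟨genElem a x, genElem_mem a hx⟩ : Multiplicative ℕ+ × S) ∈ genElem a '' Y := by
    rw [mem_image_genElem_iff ha, e.forall_mul_ne_apply_iff, ← mem_image_genElem_iff ha]
    exact Set.mem_image_of_mem _ hx
  obtain ⟨y, hy, hxy⟩ := hgen
  exact ⟨y, hy, hxy.symm⟩

theorem exists_isAddFreimanIso (ha : ¬∃ b, a * b * a = a ∧ a * b = b * a)
    (e : genSubsemigroup a X ≃* genSubsemigroup a Y) : ∃ f : ℕ → ℕ, IsAddFreimanIso 2 X Y f := by
  choose! f hfY hf using fun x (hx : x ∈ X) => exists_apply_genElem_eq ha e hx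
  refine ⟨f, isAddFreimanIso_two.2 ⟨⟨hfY, fun x hx y hy hxy => ?_, fun y hy => ?_⟩, ?_⟩⟩
  · have : e ⟨genElem a x, genElem_mem a hx⟩ = e ⟨genElem a y, genElem_mem a hy⟩ :=
      Subtype.ext (by rw [hf x hx, hf y hy, hxy])
    exact genElem_injective a (congrArg Subtype.val (e.injective this))
  · obtain ⟨x, hx, hex⟩ := exists_apply_genElem_eq ha e.symm hy
    have : (⟨genElem a x, genElem_mem a hx⟩ : genSubsemigroup a X) =
        e.symm ⟨genElem a y, genElem_mem a hy⟩ := Subtype.ext hex.symm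
    refine ⟨x, hx, genElem_injective a ?_⟩
    rw [← hf x hx, this, e.apply_symm_apply]
  · intro x hx y hy z hz w hw
    rw [← genElem_mul_genElem_eq_iff a, ← genElem_mul_genElem_eq_iff a, ← hf x hx, ← hf y hy,
      ← hf z hz, ← hf w hw, ← MulMemClass.coe_mul, ← MulMemClass.coe_mul, ← map_mul, ← map_mul,
      ← Subtype.ext_iff, e.apply_eq_iff_eq, Subtype.ext_iff, MulMemClass.coe_mul,
      MulMemClass.coe_mul]

end Generated

theorem IsAddFreimanHom.apply_eq_of_forall_two_mul_mem {X Y : Set ℕ} {f : ℕ → ℕ}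
    (hf : IsAddFreimanHom 2 X Y f) (hX : ∀ m, 2 * m ∈ X) {x : ℕ} (hx : x ∈ X) :
    (f x : ℚ) = f 0 + (f 2 - f 0) / 2 * x := by
  have heven : ∀ m, (f (2 * m) : ℚ) = f 0 + (f 2 - f 0) * m := by
    have hpair : ∀ m, (f (2 * m) : ℚ) = f 0 + (f 2 - f 0) * m ∧
        (f (2 * (m + 1)) : ℚ) = f 0 + (f 2 - f 0) * (m + 1) := by
      intro m
      induction m with
      | zero => simp
      | succ m ih =>
        refine ⟨by exact_mod_cast ih.2, ?_⟩
        have h := hf.add_eq_add (hX m) (hX (m + 2)) (hX (m + 1)) (hX (m + 1)) (by ring)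
        have h' : (f (2 * m) + f (2 * (m + 2)) : ℚ) = f (2 * (m + 1)) + f (2 * (m + 1)) := by
          exact_mod_cast h
        push_cast
        linarith [ih.1, ih.2]
    exact fun m => (hpair m).1
  have h := hf.add_eq_add (hX 0) (hX x) hx hx (by ring)
  rw [mul_zero] at h
  have h' : (f 0 + f (2 * x) : ℚ) = f x + f x := by exact_mod_cast h
  rw [heven] at h'
  linarith

theorem IsAddFreimanIso.exists_eq_preimage_affine {X Y : Set ℕ} {f : ℕ → ℕ}
    (hf : IsAddFreimanIso 2 X Y f) (hX : ∀ m, 2 * m ∈ X) :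
    ∃ c d : ℚ, X = (fun x : ℕ => c + d * x) ⁻¹' (Nat.cast '' Y) := by
  have haff : ∀ {x}, x ∈ X → (f x : ℚ) = f 0 + (f 2 - f 0) / 2 * x :=
    hf.isAddFreimanHom.apply_eq_of_forall_two_mul_mem hX
  have h20 : f 2 ≠ f 0 := fun h => by
    simpa using hf.bijOn.injOn (by simpa using hX 1) (by simpa using hX 0) h
  have hd : ((f 2 : ℚ) - f 0) / 2 ≠ 0 :=
    div_ne_zero (sub_ne_zero.2 (Nat.cast_injective.ne h20)) two_ne_zero
  refine ⟨f 0, (f 2 - f 0) / 2, Set.ext fun x => ⟨fun hx => ⟨f x, hf.bijOn.mapsTo hx, haff hx⟩, ?_⟩⟩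
  rintro ⟨y, hy, hxy⟩
  obtain ⟨x', hx', rfl⟩ := hf.bijOn.surjOn hy
  rw [haff hx'] at hxy
  have : (x : ℚ) = x' := mul_left_cancel₀ hd (by linarith)
  exact (Nat.cast_injective this : x = x') ▸ hx'

def evensUnionOdds (A : Set ℕ) : Set ℕ := {x | Even x ∨ ∃ n ∈ A, x = 2 * n + 1}

theorem two_mul_mem_evensUnionOdds (A : Set ℕ) (m : ℕ) : 2 * m ∈ evensUnionOdds A :=
  Or.inl (even_two_mul m)

theorem evensUnionOdds_injective : Function.Injective evensUnionOdds := by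
  intro A B h
  ext n
  have := Set.ext_iff.1 h (2 * n + 1)
  simp only [evensUnionOdds, Set.mem_ofPred_eq, Nat.not_even_bit1, false_or] at this
  simpa using this

theorem not_exists_countable_iso_representatives {S : Type*} [Semigroup S] {a : S}
    (ha : ¬∃ b, a * b * a = a ∧ a * b = b * a) :
    ¬∃ F : Set (Subsemigroup (Multiplicative ℕ+ × S)), F.Countable ∧
      ∀ T : Subsemigroup (Multiplicative ℕ+ × S), ∃ B ∈ F, Nonempty (T ≃* B) := by
  rintro ⟨F, hF, hiso⟩
  set T := fun A => genSubsemigroup a (evensUnionOdds A)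
  have hclass : ∀ A₀, {A | Nonempty (T A ≃* T A₀)}.Countable := by
    intro A₀
    refine ((Set.countable_range fun q : ℚ × ℚ =>
      (fun x : ℕ => q.1 + q.2 * x) ⁻¹' (Nat.cast '' evensUnionOdds A₀)).preimage
        evensUnionOdds_injective).mono ?_
    rintro A ⟨e⟩
    obtain ⟨f, hf⟩ := exists_isAddFreimanIso ha e
    obtain ⟨c, d, h⟩ := hf.exists_eq_preimage_affine (two_mul_mem_evensUnionOdds A)
    exact ⟨(c, d), h.symm⟩
  have hcover : Set.univ ⊆ ⋃ B ∈ F, {A | Nonempty (T A ≃* B)} := fun A _ => by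
    obtain ⟨B, hB, hAB⟩ := hiso (T A)
    exact Set.mem_biUnion hB hAB
  have huniv : (Set.univ : Set (Set ℕ)).Countable := by
    refine (hF.biUnion fun B _ => ?_).mono hcover
    rcases Set.eq_empty_or_nonempty {A | Nonempty (T A ≃* B)} with h | ⟨A₀, ⟨e₀⟩⟩
    · simp [h]
    · refine (hclass A₀).mono fun A hA => ?_
      obtain ⟨e⟩ := hA
      exact ⟨e.trans e₀.symm⟩
  have := Set.countable_univ_iff.1 huniv
  obtain ⟨g, hg⟩ := exists_injective_nat (Set ℕ)
  exact Function.cantor_injective g hg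

/-- For a finite semigroup `S`, the following are equivalent:
(i) `ℕ × S` has only countably many subsemigroups;
(ii) `ℕ × S` has only countably many subsemigroups up to isomorphism;
(iii) `S` is a union of groups (completely regular). -/
theorem countably_many_subsemigroups_iff_union_of_groups
    (S : Type*) [Semigroup S] [Finite S] :
    List.TFAE
      [ Countable (Subsemigroup (Multiplicative ℕ+ × S)),
        ∃ F : Set (Subsemigroup (Multiplicative ℕ+ × S)), F.Countable ∧
          ∀ A : Subsemigroup (Multiplicative ℕ+ × S), ∃ B ∈ F, Nonempty (A ≃* B),
        ∀ a : S, ∃ b : S, a * b * a = a ∧ a * b = b * a ] := by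
  tfae_have 1 → 2 := fun _ =>
    ⟨Set.univ, Set.countable_univ, fun A => ⟨A, trivial, ⟨MulEquiv.refl _⟩⟩⟩
  tfae_have 2 → 3 := fun h a => by_contra fun ha => not_exists_countable_iso_representatives ha h
  tfae_have 3 → 1 := Subsemigroup.countable_of_forall_exists_mul_mul_eq
  tfae_finish
end

section
/- For a finite semigroup S, the following are equivalent: (i) ℕ × S has only countably many subdirect products; (ii) ℕ × S has only countably many pairwise non-isomorphic subdirect products (i.e. the subdirect products fall into only countably many isomorphism classes); (iii) for every s ∈ S there exists t ∈ S such that at least one of ts = s or st = s holds. -/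
/-- A subsemigroup of `ℕ × S` is a subdirect product if it projects onto both factors. -/
def IsSubdirect {S : Type*} [Semigroup S]
    (T : Subsemigroup (Multiplicative ℕ+ × S)) : Prop :=
  (∀ n : Multiplicative ℕ+, ∃ p ∈ T, p.1 = n) ∧ (∀ s : S, ∃ p ∈ T, p.2 = s)

namespace SDP
variable {α : Type*} [Semigroup α]

/-- `spow x n = x^(n+1)` in a semigroup. -/
def spow (x : α) : ℕ → α
  | 0 => x
  | n+1 => spow x n * x

lemma spow_add (x : α) (m n : ℕ) : spow x m * spow x n = spow x (m + n + 1) := by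
  induction n with
  | zero => rfl
  | succ n ih =>
      show spow x m * (spow x n * x) = _
      rw [← mul_assoc, ih]; rfl

lemma spow_comm (x : α) (n : ℕ) : x * spow x n = spow x n * x := by
  have h1 := spow_add x 0 n
  have h2 := spow_add x n 0
  simp only [Nat.zero_add, Nat.add_zero] at h1 h2
  show spow x 0 * spow x n = spow x n * spow x 0
  rw [h1, h2]

lemma spow_succ' (x : α) (n : ℕ) : spow x (n + 1) = x * spow x n := by
  rw [spow_comm]; rfl

lemma map_spow {β : Type*} [Semigroup β] {F : Type*} [FunLike F α β] [MulHomClass F α β]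
    (f : F) (x : α) (n : ℕ) : f (spow x n) = spow (f x) n := by
  induction n with
  | zero => rfl
  | succ n ih => show f (spow x n * x) = _ ; rw [map_mul, ih]; rfl

-- merged
section idem
/-- in a finite semigroup, some `spow` power of every element is idempotent -/
lemma exists_idempotent_spow [Finite α] (a : α) :
    ∃ m : ℕ, spow a m * spow a m = spow a m := by
  have key : ∀ i d : ℕ, spow a i = spow a (i + d + 1) →
      ∃ m : ℕ, spow a m * spow a m = spow a m := by
    intro i d he
    have per : ∀ r, spow a (i + r + (d + 1)) = spow a (i + r) := by
      intro r
      match r with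
      | 0 =>
          rw [show i + 0 + (d + 1) = i + d + 1 from by omega, show i + 0 = i from by omega]
          exact he.symm
      | (r + 1) =>
          rw [show i + (r + 1) + (d + 1) = (i + d + 1) + r + 1 from by omega, ← spow_add,
            ← he, spow_add, show i + r + 1 = i + (r + 1) from by omega]
    have perk : ∀ k r, spow a (i + r + k * (d + 1)) = spow a (i + r) := by
      intro k
      induction k with
      | zero => intro r; simp
      | succ k ih =>
          intro r
          rw [show i + r + (k + 1) * (d + 1) = i + (r + k * (d + 1)) + (d + 1) from by ring,
            per (r + k * (d + 1)), show i + (r + k * (d + 1)) = i + r + k * (d + 1) from by ring,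
            ih r]
    refine ⟨i + d * (i + 1), ?_⟩
    rw [spow_add,
      show i + d * (i + 1) + (i + d * (i + 1)) + 1 = i + d * (i + 1) + (i + 1) * (d + 1) from by
        ring,
      perk (i + 1) (d * (i + 1))]
  obtain ⟨i, j, hij, he⟩ := Finite.exists_ne_map_eq_of_infinite (fun n : ℕ => spow a n)
  rcases Nat.lt_or_ge i j with h | h
  · exact key i (j - i - 1) (by rwa [show i + (j - i - 1) + 1 = j from by omega])
  · have h' : j < i := by omega
    exact key j (i - j - 1) (by rw [show j + (i - j - 1) + 1 = i from by omega]; exact he.symm)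


end idem
end SDP

namespace SDP
open Multiplicative

variable {S : Type*} [Semigroup S]

local notation "M" => Multiplicative ℕ+

/-- level of an element of `ℕ+ × S` as a natural number -/
def lev {T : Subsemigroup (M × S)} (x : T) : ℕ := ((toAdd (x : M × S).1 : ℕ+) : ℕ)

lemma lev_pos {T : Subsemigroup (M × S)} (x : T) : 0 < lev x := (toAdd (x : M × S).1).pos

lemma lev_mul {T : Subsemigroup (M × S)} (x y : T) : lev (x * y) = lev x + lev y := by
  show ((toAdd ((x : M × S).1 * (y : M × S).1) : ℕ+) : ℕ) = _
  rw [toAdd_mul]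
  exact PNat.add_coe _ _

lemma lev_spow {T : Subsemigroup (M × S)} (x : T) (n : ℕ) :
    lev (spow x n) = (n + 1) * lev x := by
  induction n with
  | zero => simp [spow]
  | succ n ih =>
      show lev (spow x n * x) = _
      rw [lev_mul, ih]; ring

lemma snd_spow {T : Subsemigroup (M × S)} (x : T) (n : ℕ) :
    ((spow x n : T) : M × S).2 = spow ((x : M × S).2) n := by
  induction n with
  | zero => rfl
  | succ n ih =>
      show ((spow x n * x : T) : M × S).2 = _
      show ((spow x n : T) : M × S).2 * (x : M × S).2 = _
      rw [ih]; rfl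

lemma lev_eq_of_eq {T : Subsemigroup (M × S)} {x y : T}
    (h1 : lev x = lev y) (h2 : ((x : M × S)).2 = ((y : M × S)).2) : x = y := by
  apply Subtype.ext
  apply Prod.ext _ h2
  have : (toAdd (x : M × S).1 : ℕ+) = (toAdd (y : M × S).1 : ℕ+) := PNat.coe_injective h1
  exact toAdd.injective this

lemma cancel_helper (p q i d e : ℕ)
    (h : (i + 1) * p + (e + d + 2) * q = (i + d + 2) * p + (e + 1) * q) : q = p := by
  have h' : ((i : ℤ) + 1) * p + ((e : ℤ) + d + 2) * q
      = ((i : ℤ) + d + 2) * p + ((e : ℤ) + 1) * q := by exact_mod_cast h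
  have h2 : ((d : ℤ) + 1) * q = ((d : ℤ) + 1) * p := by linear_combination h'
  have hd : ((d : ℤ) + 1) ≠ 0 := by positivity
  exact_mod_cast mul_left_cancel₀ hd h2

/-- Key rigidity: an isomorphism between subdirect products preserves levels. -/
theorem lev_of_mulEquiv [Finite S] {T T' : Subsemigroup (M × S)}
    (hT : IsSubdirect T) (hT' : IsSubdirect T') (φ : T ≃* T') (x : T) :
    lev (φ x) = lev x := by
  have _inst := Fintype.ofFinite S
  set f : T → ℕ := fun x => lev (φ x) with hf
  have hmul : ∀ x y : T, f (x * y) = f x + f y := by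
    intro x y; simp only [hf, map_mul, lev_mul]
  have hsp : ∀ (t : T) (n : ℕ), f (spow t n) = (n + 1) * f t := by
    intro t n; simp only [hf]; rw [map_spow, lev_spow]
  have step1 : ∀ x y : T, lev y * f x = lev x * f y := by
    intro x y
    set a := lev x with ha'
    set b := lev y with hb'
    have ha : 0 < a := lev_pos x
    have hb : 0 < b := lev_pos y
    set z := spow x (b - 1) with hz'
    set w := spow y (a - 1) with hw'
    have hlz : lev z = b * a := by rw [hz', lev_spow]; congr 1; omega
    have hlw : lev w = a * b := by rw [hw', lev_spow]; congr 1; omega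
    have hfz : f z = b * f x := by rw [hz', hsp]; congr 1; omega
    have hfw : f w = a * f y := by rw [hw', hsp]; congr 1; omega
    set Mc := Fintype.card S with hMc
    have hlev_u : ∀ i : ℕ, i ≤ Mc →
        lev (spow z i * spow w (Mc - i)) = (Mc + 2) * (a * b) := by
      intro i hi
      rw [lev_mul, lev_spow z i, lev_spow w (Mc - i), hlz, hlw, mul_comm b a, ← add_mul]
      congr 1; omega
    have hf_u : ∀ i : ℕ, f (spow z i * spow w (Mc - i))
        = (i + 1) * f z + (Mc - i + 1) * f w := by
      intro i; rw [hmul, hsp z i, hsp w (Mc - i)]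
    obtain ⟨i, j, hij, hvij⟩ :=
      Fintype.exists_ne_map_eq_of_card_lt
        (fun i : Fin (Mc + 1) =>
          (((spow z (i : ℕ) * spow w (Mc - (i : ℕ)) : T) : Multiplicative ℕ+ × S).2))
        (by simp [hMc])
    have hiM : (i : ℕ) ≤ Mc := by omega
    have hjM : (j : ℕ) ≤ Mc := by omega
    have hueq : spow z (i : ℕ) * spow w (Mc - (i : ℕ))
        = spow z (j : ℕ) * spow w (Mc - (j : ℕ)) := by
      apply lev_eq_of_eq _ hvij
      rw [hlev_u _ hiM, hlev_u _ hjM]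
    have heq := congrArg f hueq
    rw [hf_u, hf_u] at heq
    have hijv : (i : ℕ) ≠ (j : ℕ) := fun hc => hij (Fin.ext hc)
    have key : f w = f z := by
      rcases lt_or_gt_of_ne hijv with hlt | hlt
      · obtain ⟨d, hd⟩ : ∃ d, (j : ℕ) = (i : ℕ) + d + 1 := ⟨(j : ℕ) - (i : ℕ) - 1, by omega⟩
        set e := Mc - (j : ℕ) with he
        have e1 : Mc - (i : ℕ) + 1 = e + d + 2 := by omega
        have e2 : Mc - (j : ℕ) + 1 = e + 1 := by omega
        rw [e1, e2, hd] at heq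
        exact cancel_helper (f z) (f w) (i : ℕ) d e (by linarith [heq])
      · obtain ⟨d, hd⟩ : ∃ d, (i : ℕ) = (j : ℕ) + d + 1 := ⟨(i : ℕ) - (j : ℕ) - 1, by omega⟩
        set e := Mc - (i : ℕ) with he
        have e1 : Mc - (j : ℕ) + 1 = e + d + 2 := by omega
        have e2 : Mc - (i : ℕ) + 1 = e + 1 := by omega
        rw [e1, e2, hd] at heq
        exact cancel_helper (f z) (f w) (j : ℕ) d e (by linarith [heq])
    rw [hfw, hfz] at key
    rw [key]
  -- get a level-1 element of T
  obtain ⟨p₀, hp₀T, hp₀⟩ := hT.1 (Multiplicative.ofAdd 1)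
  set x₀ : T := ⟨p₀, hp₀T⟩ with hx₀
  have hlx₀ : lev x₀ = 1 := by
    show ((toAdd p₀.1 : ℕ+) : ℕ) = 1
    rw [hp₀]; rfl
  obtain ⟨q₀, hq₀T, hq₀⟩ := hT'.1 (Multiplicative.ofAdd 1)
  set y₀ : T := φ.symm ⟨q₀, hq₀T⟩ with hy₀
  have hfy₀ : f y₀ = 1 := by
    show lev (φ (φ.symm ⟨q₀, hq₀T⟩)) = 1
    rw [MulEquiv.apply_symm_apply]
    show ((toAdd q₀.1 : ℕ+) : ℕ) = 1
    rw [hq₀]; rfl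
  have h1 := step1 x₀ y₀
  rw [hlx₀, hfy₀, one_mul] at h1
  -- h1 : lev y₀ * f x₀ = 1
  have hfx₀ : f x₀ = 1 := Nat.eq_one_of_mul_eq_one_left h1
  have h2 := step1 x₀ x
  rw [hlx₀, hfx₀, one_mul, mul_one] at h2
  exact h2.symm

end SDP


namespace SDP

/-- Sets of positive naturals closed under adding `m`. -/
def Cm (m : ℕ) : Set (Set ℕ) := {N | (∀ k ∈ N, 0 < k) ∧ ∀ n ∈ N, n + m ∈ N}

lemma Cm_step {m : ℕ} {N : Set ℕ} (hN : N ∈ Cm m) {a : ℕ} (ha : a ∈ N) (j : ℕ) :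
    a + j * m ∈ N := by
  induction j with
  | zero => simpa using ha
  | succ j ih =>
      have := hN.2 _ ih
      have he : a + j * m + m = a + (j + 1) * m := by ring
      rwa [he] at this

lemma Cm_countable (m : ℕ) (hm : 0 < m) : (Cm m).Countable := by
  set μ : ↥(Cm m) → (Fin m → ℕ) := fun N =>
    (fun r : Fin m => sInf {k | k ∈ (N : Set ℕ) ∧ k % m = (r : ℕ)}) with hμ
  have claim : ∀ N N' : ↥(Cm m), μ N = μ N' → ∀ n ∈ (N : Set ℕ), n ∈ (N' : Set ℕ) := by
    intro N N' h n hn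
    have hn0 : 0 < n := N.2.1 n hn
    set r : Fin m := ⟨n % m, Nat.mod_lt _ hm⟩ with hr
    set E := {k | k ∈ (N : Set ℕ) ∧ k % m = (r : ℕ)} with hE'
    set E' := {k | k ∈ (N' : Set ℕ) ∧ k % m = (r : ℕ)} with hE''
    have hne : n ∈ E := ⟨hn, rfl⟩
    have hEmem : sInf E ∈ E := Nat.sInf_mem ⟨n, hne⟩
    have hle : sInf E ≤ n := Nat.sInf_le hne
    have heq : sInf E = sInf E' := congrFun h r
    have hE'ne : E'.Nonempty := by
      by_contra hc
      rw [Set.not_nonempty_iff_eq_empty] at hc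
      have h0 : sInf E' = 0 := by rw [hc]; exact Nat.sInf_empty
      rw [h0] at heq
      have := N.2.1 _ hEmem.1
      omega
    have hE'mem : sInf E' ∈ E' := Nat.sInf_mem hE'ne
    obtain ⟨j, hj⟩ : ∃ j, n = sInf E + j * m := by
      have hmod : sInf E % m = n % m := hEmem.2
      have hdvd : m ∣ n - sInf E := (Nat.modEq_iff_dvd' hle).mp hmod
      obtain ⟨j, hj⟩ := hdvd
      exact ⟨j, by rw [mul_comm j m]; omega⟩
    have hstep := Cm_step N'.2 hE'mem.1 j
    rw [← heq] at hstep
    rwa [hj]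
  have hinj : Function.Injective μ := by
    intro N N' h
    apply Subtype.ext
    exact Set.Subset.antisymm (claim N N' h) (claim N' N h.symm)
  exact Set.countable_coe_iff.mp hinj.countable

/-- The collection of "eventually periodic-closed" subsets of `ℕ`. -/
def CC : Set (Set ℕ) := {N | ∃ m, 0 < m ∧ N ∈ Cm m}

lemma CC_countable : CC.Countable := by
  have : CC ⊆ ⋃ m : ℕ, Cm (m + 1) := by
    rintro N ⟨m, hm, hN⟩
    exact Set.mem_iUnion.mpr ⟨m - 1, by rwa [Nat.sub_add_cancel hm]⟩
  exact ((Set.countable_iUnion fun m => Cm_countable (m + 1) (Nat.succ_pos m)).mono this)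

end SDP


namespace SDP
open Multiplicative

variable {S : Type*} [Semigroup S]

local notation "M" => Multiplicative ℕ+

/-- The fiber of `T` over `s`, as a set of naturals. -/
def NF (T : Subsemigroup (M × S)) (s : S) : Set ℕ :=
  {k | ∃ n : ℕ+, (n : ℕ) = k ∧ (ofAdd n, s) ∈ T}

lemma NF_mem (T : Subsemigroup (M × S)) (p : M × S) :
    p ∈ T ↔ ((toAdd p.1 : ℕ+) : ℕ) ∈ NF T p.2 := by
  constructor
  · intro hp
    exact ⟨toAdd p.1, rfl, by rwa [show ((ofAdd (toAdd p.1) : M), p.2) = p from Prod.ext rfl rfl]⟩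
  · rintro ⟨n, hn, hmem⟩
    have : n = toAdd p.1 := PNat.coe_injective hn
    rw [this] at hmem
    rwa [show ((ofAdd (toAdd p.1) : M), p.2) = p from Prod.ext rfl rfl] at hmem

lemma NF_in_CC (h3 : ∀ s : S, ∃ t : S, t * s = s ∨ s * t = s)
    {T : Subsemigroup (M × S)} (hT : IsSubdirect T) (s : S) : NF T s ∈ CC := by
  obtain ⟨t, ht⟩ := h3 s
  obtain ⟨p, hpT, hp2⟩ := hT.2 t
  set m : ℕ := ((toAdd p.1 : ℕ+) : ℕ) with hm
  refine ⟨m, (toAdd p.1).pos, ?_, ?_⟩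
  · rintro k ⟨n, hn, -⟩
    rw [← hn]; exact n.pos
  · rintro k ⟨n, hn, hmem⟩
    rcases ht with ht | ht
    · -- t * s = s; use p * (ofAdd n, s)
      have hprod := T.mul_mem hpT hmem
      refine ⟨toAdd p.1 + n, ?_, ?_⟩
      · rw [PNat.add_coe]; omega
      · have : (p * (ofAdd n, s)) = ((ofAdd (toAdd p.1 + n) : M), s) := by
          apply Prod.ext
          · rfl
          · show p.2 * s = s
            rw [hp2, ht]
        rwa [this] at hprod
    · -- s * t = s; use (ofAdd n, s) * p
      have hprod := T.mul_mem hmem hpT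
      refine ⟨n + toAdd p.1, ?_, ?_⟩
      · rw [PNat.add_coe]; omega
      · have : ((ofAdd n, s) * p) = ((ofAdd (n + toAdd p.1) : M), s) := by
          apply Prod.ext
          · rfl
          · show s * p.2 = s
            rw [hp2, ht]
        rwa [this] at hprod

theorem countable_of_identities [Finite S]
    (h3 : ∀ s : S, ∃ t : S, t * s = s ∨ s * t = s) :
    {T : Subsemigroup (M × S) | IsSubdirect T}.Countable := by
  haveI : Countable ↥CC := CC_countable.to_subtype
  set g : ↥{T : Subsemigroup (M × S) | IsSubdirect T} → (S → ↥CC) :=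
    fun T s => ⟨NF T.1 s, NF_in_CC h3 T.2 s⟩ with hg
  have hinj : Function.Injective g := by
    intro T T' h
    apply Subtype.ext
    ext p
    rw [NF_mem, NF_mem]
    have : NF T.1 p.2 = NF T'.1 p.2 := congrArg Subtype.val (congrFun h p.2)
    rw [this]
  exact Set.countable_coe_iff.mp hinj.countable

end SDP



namespace SDP
open Multiplicative

variable {S : Type*} [Semigroup S]

local notation "M" => Multiplicative ℕ+

lemma no_sandwich [Finite S] {s₀ : S} (hs₀ : ∀ t : S, t * s₀ ≠ s₀ ∧ s₀ * t ≠ s₀)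
    (a b : S) (hab : a * s₀ * b = s₀) : False := by
  have key : ∀ n, spow a n * s₀ * spow b n = s₀ := by
    intro n
    induction n with
    | zero => exact hab
    | succ n ih =>
        rw [show spow a (n + 1) = spow a n * a from rfl, spow_succ' b]
        calc (spow a n * a) * s₀ * (b * spow b n)
            = spow a n * ((a * s₀ * b) * spow b n) := by simp only [mul_assoc]
          _ = spow a n * (s₀ * spow b n) := by rw [hab]
          _ = spow a n * s₀ * spow b n := by rw [mul_assoc]
          _ = s₀ := ih
  obtain ⟨m, hm⟩ := exists_idempotent_spow a
  have h1 : spow a m * (s₀ * spow b m) = s₀ := by rw [← mul_assoc]; exact key m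
  have h2 : spow a m * s₀ = s₀ := by
    conv_lhs => rw [← h1]
    rw [← mul_assoc, hm, h1]
  exact (hs₀ (spow a m)).1 h2

/-- the ideal-like set generated by `s₀` -/
def Jset (s₀ : S) : Set S :=
  {x | (∃ a, a * s₀ = x) ∨ (∃ b, s₀ * b = x) ∨ ∃ a b, a * s₀ * b = x}

lemma s0_not_mem_J [Finite S] {s₀ : S} (hs₀ : ∀ t : S, t * s₀ ≠ s₀ ∧ s₀ * t ≠ s₀) :
    s₀ ∉ Jset s₀ := by
  rintro (⟨a, ha⟩ | ⟨b, hb⟩ | ⟨a, b, hab⟩)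
  · exact (hs₀ a).1 ha
  · exact (hs₀ b).2 hb
  · exact no_sandwich hs₀ a b hab

lemma c_mul_s0_mem_J (s₀ c : S) : c * s₀ ∈ Jset s₀ := Or.inl ⟨c, rfl⟩

lemma s0_mul_c_mem_J (s₀ c : S) : s₀ * c ∈ Jset s₀ := Or.inr (Or.inl ⟨c, rfl⟩)

lemma mul_J_left {s₀ : S} {x : S} (hx : x ∈ Jset s₀) (c : S) : c * x ∈ Jset s₀ := by
  rcases hx with ⟨a, ha⟩ | ⟨b, hb⟩ | ⟨a, b, hab⟩
  · exact Or.inl ⟨c * a, by rw [← ha, mul_assoc]⟩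
  · exact Or.inr (Or.inr ⟨c, b, by rw [← hb, mul_assoc]⟩)
  · exact Or.inr (Or.inr ⟨c * a, b, by rw [← hab]; simp only [mul_assoc]⟩)

lemma mul_J_right {s₀ : S} {x : S} (hx : x ∈ Jset s₀) (c : S) : x * c ∈ Jset s₀ := by
  rcases hx with ⟨a, ha⟩ | ⟨b, hb⟩ | ⟨a, b, hab⟩
  · exact Or.inr (Or.inr ⟨a, c, by rw [← ha]⟩)
  · exact Or.inr (Or.inl ⟨b * c, by rw [← hb, mul_assoc]⟩)
  · exact Or.inr (Or.inr ⟨a, b * c, by rw [← hab]; simp only [mul_assoc]⟩)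

lemma mul_mem_J {s₀ : S} {x y : S} (hx : x ∈ Jset s₀ ∨ x = s₀) (hy : y ∈ Jset s₀ ∨ y = s₀) :
    x * y ∈ Jset s₀ := by
  rcases hx with hx | hx
  · exact mul_J_right hx y
  · rcases hy with hy | hy
    · rw [hx]; exact mul_J_left hy s₀
    · rw [hx, hy]; exact c_mul_s0_mem_J s₀ s₀

/-- level of an element of `ℕ+ × S` -/
def levn (p : M × S) : ℕ := ((toAdd p.1 : ℕ+) : ℕ)

lemma levn_mul (p q : M × S) : levn (p * q) = levn p + levn q := by
  show ((toAdd (p.1 * q.1) : ℕ+) : ℕ) = _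
  rw [toAdd_mul]
  exact PNat.add_coe _ _

/-- The subdirect product encoding `A ⊆ ℕ` at odd levels of the `s₀`-fiber. -/
def TA (s₀ : S) (A : Set ℕ) : Subsemigroup (M × S) where
  carrier := {p | Even (levn p) ∨ p.2 ∈ Jset s₀ ∨ (p.2 = s₀ ∧ ∃ k ∈ A, levn p = 2 * k + 3)}
  mul_mem' := by
    rintro p q hp hq
    rcases hp with hp | hp
    · rcases hq with hq | hq
      · left; rw [levn_mul]; exact hp.add hq
      · right; left
        have hq2 : q.2 ∈ Jset s₀ ∨ q.2 = s₀ := by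
          rcases hq with hq | ⟨hq, -⟩
          exacts [Or.inl hq, Or.inr hq]
        show p.2 * q.2 ∈ Jset s₀
        rcases hq2 with hq2 | hq2
        · exact mul_J_left hq2 p.2
        · rw [hq2]; exact c_mul_s0_mem_J s₀ p.2
    · have hp2 : p.2 ∈ Jset s₀ ∨ p.2 = s₀ := by
        rcases hp with hp | ⟨hp, -⟩
        exacts [Or.inl hp, Or.inr hp]
      rcases hq with hq | hq
      · right; left
        show p.2 * q.2 ∈ Jset s₀
        rcases hp2 with hp2 | hp2
        · exact mul_J_right hp2 q.2
        · rw [hp2]; exact s0_mul_c_mem_J s₀ q.2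
      · have hq2 : q.2 ∈ Jset s₀ ∨ q.2 = s₀ := by
          rcases hq with hq | ⟨hq, -⟩
          exacts [Or.inl hq, Or.inr hq]
        right; left
        exact mul_mem_J hp2 hq2

lemma TA_subdirect (s₀ : S) (A : Set ℕ) : IsSubdirect (TA s₀ A) := by
  constructor
  · intro n
    exact ⟨(n, s₀ * s₀), Or.inr (Or.inl (c_mul_s0_mem_J s₀ s₀)), rfl⟩
  · intro s
    refine ⟨((ofAdd 2 : M), s), Or.inl ?_, rfl⟩
    show Even ((toAdd (ofAdd (2 : ℕ+)) : ℕ+) : ℕ)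
    rw [toAdd_ofAdd]
    exact ⟨1, rfl⟩

end SDP

namespace SDP
open Multiplicative

variable {S : Type*} [Semigroup S]

local notation "M" => Multiplicative ℕ+

/-- fiber of `T` over the level `n` -/
def fibS (T : Subsemigroup (M × S)) (n : ℕ+) : Set S := {s | ((ofAdd n : M), s) ∈ T}

lemma fib_ncard_le [Finite S] {T T' : Subsemigroup (M × S)}
    (hT : IsSubdirect T) (hT' : IsSubdirect T') (φ : T ≃* T') (n : ℕ+) :
    (fibS T n).ncard ≤ (fibS T' n).ncard := by
  classical
  set f : S → S := fun s =>
    if hs : s ∈ fibS T n then (φ ⟨((ofAdd n : M), s), hs⟩ : M × S).2 else s with hf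
  have hfst : ∀ (s : S) (hs : s ∈ fibS T n),
      ((φ ⟨((ofAdd n : M), s), hs⟩ : M × S)).1 = (ofAdd n : M) := by
    intro s hs
    have hl := lev_of_mulEquiv hT hT' φ ⟨((ofAdd n : M), s), hs⟩
    have h2 : (toAdd ((φ ⟨((ofAdd n : M), s), hs⟩ : M × S)).1 : ℕ+) = n :=
      PNat.coe_injective hl
    exact toAdd.injective h2
  have hmaps : ∀ s ∈ fibS T n, f s ∈ fibS T' n := by
    intro s hs
    rw [hf]; simp only [dif_pos hs]
    show ((ofAdd n : M), (φ ⟨((ofAdd n : M), s), hs⟩ : M × S).2) ∈ T'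
    have hx := (φ ⟨((ofAdd n : M), s), hs⟩).2
    have heq : ((ofAdd n : M), (φ ⟨((ofAdd n : M), s), hs⟩ : M × S).2)
        = (φ ⟨((ofAdd n : M), s), hs⟩ : M × S) := Prod.ext (hfst s hs).symm rfl
    rw [heq]; exact hx
  have hinj : Set.InjOn f (fibS T n) := by
    intro s hs t ht hst
    rw [hf] at hst; simp only [dif_pos hs, dif_pos ht] at hst
    have he : (φ ⟨((ofAdd n : M), s), hs⟩) = (φ ⟨((ofAdd n : M), t), ht⟩) := by
      apply Subtype.ext
      apply Prod.ext
      · rw [hfst s hs, hfst t ht]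
      · exact hst
    have he2 := φ.injective he
    have he3 := congrArg (fun x : T => (x : M × S).2) he2
    exact he3
  exact Set.ncard_le_ncard_of_injOn f hmaps hinj (Set.toFinite _)

/-- the `ℕ+` element `2k+3` -/
def pnat23 (k : ℕ) : ℕ+ := ⟨2 * k + 3, by omega⟩

lemma fib_TA_mem {s₀ : S} {A : Set ℕ} {k : ℕ} (hk : k ∈ A) :
    fibS (TA s₀ A) (pnat23 k) = insert s₀ (Jset s₀) := by
  ext s
  show (Even (levn ((ofAdd (pnat23 k) : M), s)) ∨ _ ∨ _) ↔ _
  rw [Set.mem_insert_iff]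
  constructor
  · rintro (he | hJ | ⟨hs, -⟩)
    · exfalso
      have : Even (2 * k + 3) := he
      rcases this with ⟨r, hr⟩; omega
    · exact Or.inr hJ
    · exact Or.inl hs
  · rintro (hs | hJ)
    · exact Or.inr (Or.inr ⟨hs, k, hk, rfl⟩)
    · exact Or.inr (Or.inl hJ)

lemma fib_TA_not_mem {s₀ : S} {A : Set ℕ} {k : ℕ} (hk : k ∉ A) :
    fibS (TA s₀ A) (pnat23 k) = Jset s₀ := by
  ext s
  show (Even (levn ((ofAdd (pnat23 k) : M), s)) ∨ _ ∨ _) ↔ _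
  constructor
  · rintro (he | hJ | ⟨hs, k', hk', hlev⟩)
    · exfalso
      have : Even (2 * k + 3) := he
      rcases this with ⟨r, hr⟩; omega
    · exact hJ
    · exfalso
      have hlev' : 2 * k + 3 = 2 * k' + 3 := hlev
      have : k' = k := by omega
      rw [this] at hk'
      exact hk hk'
  · intro hJ
    exact Or.inr (Or.inl hJ)

lemma TA_subset_of_iso [Finite S] {s₀ : S} (hs₀ : ∀ t : S, t * s₀ ≠ s₀ ∧ s₀ * t ≠ s₀)
    {A B : Set ℕ} (φ : TA s₀ A ≃* TA s₀ B) : A ⊆ B := by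
  intro k hk
  by_contra hkB
  have h1 := fib_ncard_le (TA_subdirect s₀ A) (TA_subdirect s₀ B) φ (pnat23 k)
  have h2 := fib_ncard_le (TA_subdirect s₀ B) (TA_subdirect s₀ A) φ.symm (pnat23 k)
  rw [fib_TA_mem hk, fib_TA_not_mem hkB] at h1 h2
  have hins : (insert s₀ (Jset s₀)).ncard = (Jset s₀).ncard + 1 :=
    Set.ncard_insert_of_notMem (s0_not_mem_J hs₀) (Set.toFinite _)
  omega

lemma TA_inj [Finite S] {s₀ : S} (hs₀ : ∀ t : S, t * s₀ ≠ s₀ ∧ s₀ * t ≠ s₀)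
    {A B : Set ℕ} (φ : TA s₀ A ≃* TA s₀ B) : A = B :=
  Set.Subset.antisymm (TA_subset_of_iso hs₀ φ) (TA_subset_of_iso hs₀ φ.symm)

end SDP

/-- For a finite semigroup `S`, the following are equivalent:
(i) `ℕ × S` has only countably many subdirect products;
(ii) `ℕ × S` has only countably many subdirect products up to isomorphism;
(iii) every `s ∈ S` has a relative left or right identity. -/
theorem countably_many_subdirect_products_iff
    (S : Type*) [Semigroup S] [Finite S] :
    List.TFAE
      [ {T : Subsemigroup (Multiplicative ℕ+ × S) | IsSubdirect T}.Countable,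
        ∃ F : Set (Subsemigroup (Multiplicative ℕ+ × S)), F.Countable ∧
          (∀ T ∈ F, IsSubdirect T) ∧
          ∀ T : Subsemigroup (Multiplicative ℕ+ × S), IsSubdirect T →
            ∃ B ∈ F, Nonempty (T ≃* B),
        ∀ s : S, ∃ t : S, t * s = s ∨ s * t = s ] := by
  tfae_have 1 → 2 := by
    intro h1
    exact ⟨{T | IsSubdirect T}, h1, fun T hT => hT,
      fun T hT => ⟨T, hT, ⟨MulEquiv.refl T⟩⟩⟩
  tfae_have 2 → 3 := by
    rintro ⟨F, hFc, hFsub, hFcov⟩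
    by_contra h3
    push_neg at h3
    obtain ⟨s₀, hs₀⟩ := h3
    choose g hgF hgiso using fun A : Set ℕ => hFcov (SDP.TA s₀ A) (SDP.TA_subdirect s₀ A)
    have hginj : Function.Injective g := by
      intro A B hAB
      obtain ⟨φA⟩ := hgiso A
      obtain ⟨φB⟩ := hgiso B
      rw [hAB] at φA
      exact SDP.TA_inj hs₀ (φA.trans φB.symm)
    haveI := hFc.to_subtype
    have hinj2 : Function.Injective (fun A : Set ℕ => (⟨g A, hgF A⟩ : F)) :=
      fun A B h => hginj (congrArg Subtype.val h)
    obtain ⟨f, hf⟩ := exists_injective_nat ↥F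
    exact Function.cantor_injective (f ∘ fun A : Set ℕ => (⟨g A, hgF A⟩ : F))
      (hf.comp hinj2)
  tfae_have 3 → 1 := fun h3 => SDP.countable_of_identities h3
  tfae_finish
end

section
/- For M ⊆ ℕ, the semigroup S_M is free commutative over the generating set {(1,m) : m ∈ M} if and only if |M| ≤ 2. Precisely: the map sending each finitely supported function α : M → ℕ∪{0} with α ≠ 0 to the element Σ_{m∈M} α(m)·(1,m) of S_M is injective if and only if M has at most 2 elements. -/
/-- `SM M` is the subsemigroup of `ℕ × ℕ` generated by `{(1, m) : m ∈ M}`. -/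
def SM (M : Set ℕ+) : AddSubsemigroup (ℕ+ × ℕ+) :=
  AddSubsemigroup.closure {p : ℕ+ × ℕ+ | ∃ m ∈ M, p = (1, m)}

section Aux

variable {M : Set ℕ+}

private def F (M : Set ℕ+) : ↥M → ℕ → ℕ × ℕ := fun m c => (c, c * ((m : ℕ+) : ℕ))

private lemma sum_pair_eq (α : ↥M →₀ ℕ) (x y : ↥M) (hxy : x ≠ y)
    (hall : ∀ z : ↥M, z = x ∨ z = y) :
    α.sum (F M) = (α x + α y, α x * ((x : ℕ+) : ℕ) + α y * ((y : ℕ+) : ℕ)) := by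
  rw [Finsupp.sum]
  have hsub : α.support ⊆ {x, y} := fun z _ => by
    rcases hall z with rfl | rfl <;> simp
  rw [Finset.sum_subset hsub (fun z _ hz => by
    simp only [Finsupp.notMem_support_iff] at hz
    simp [F, hz])]
  rw [Finset.sum_pair hxy]
  rfl

private lemma sum_single_eq (α : ↥M →₀ ℕ) (x : ↥M)
    (hall : ∀ z : ↥M, z = x) :
    α.sum (F M) = (α x, α x * ((x : ℕ+) : ℕ)) := by
  rw [Finsupp.sum]
  have hsub : α.support ⊆ {x} := fun z _ => by rw [hall z]; simp
  rw [Finset.sum_subset hsub (fun z _ hz => by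
    simp only [Finsupp.notMem_support_iff] at hz
    simp [F, hz])]
  rw [Finset.sum_singleton]
  rfl

private lemma key (a b : ℕ+) (hab : a ≠ b) (hM : M ⊆ {a, b})
    (α β : ↥M →₀ ℕ) (h : α.sum (F M) = β.sum (F M)) (x : ↥M) (hx : (x : ℕ+) = a) :
    α x = β x := by
  by_cases hb : b ∈ M
  · set y : ↥M := ⟨b, hb⟩ with hy
    have hxy : x ≠ y := by
      intro hcon
      apply hab
      rw [← hx, hcon]
    have hall : ∀ z : ↥M, z = x ∨ z = y := by
      intro z
      rcases hM z.2 with hz | hz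
      · left; exact Subtype.ext (by rw [hz, hx])
      · right; exact Subtype.ext (by simpa using hz)
    rw [sum_pair_eq α x y hxy hall, sum_pair_eq β x y hxy hall] at h
    simp only [Prod.mk.injEq] at h
    obtain ⟨h1, h2⟩ := h
    rw [hx] at h2
    have hab' : ((a : ℕ) : ℤ) ≠ ((b : ℕ) : ℤ) := by
      exact_mod_cast fun hcon => hab (PNat.coe_injective hcon)
    have h1' : (α x : ℤ) + α y = (β x : ℤ) + β y := by exact_mod_cast h1
    have h2' : (α x : ℤ) * (a : ℕ) + (α y : ℤ) * (b : ℕ)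
        = (β x : ℤ) * (a : ℕ) + (β y : ℤ) * (b : ℕ) := by exact_mod_cast h2
    have hz : ((α x : ℤ) - β x) * (((a : ℕ) : ℤ) - ((b : ℕ) : ℤ)) = 0 := by
      linear_combination h2' - ((b : ℕ) : ℤ) * h1'
    rcases mul_eq_zero.1 hz with hz | hz
    · have := sub_eq_zero.1 hz
      exact_mod_cast this
    · exact absurd (sub_eq_zero.1 hz) hab'
  · have hall : ∀ z : ↥M, z = x := by
      intro z
      rcases hM z.2 with hz | hz
      · exact Subtype.ext (by rw [hz, hx])
      · exact absurd (hz ▸ z.2) hb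
    rw [sum_single_eq α x hall, sum_single_eq β x hall] at h
    simpa using congrArg Prod.fst h

private lemma notinj (a b c : ℕ+) (ha : a ∈ M) (hb : b ∈ M) (hc : c ∈ M)
    (hab : a < b) (hbc : b < c) :
    ¬ Set.InjOn
      (fun α : ↥M →₀ ℕ => α.sum fun m c => ((c, c * ((m : ℕ+) : ℕ)) : ℕ × ℕ))
      {α | α ≠ 0} := by
  intro hinj
  set x : ↥M := ⟨a, ha⟩
  set y : ↥M := ⟨b, hb⟩
  set z : ↥M := ⟨c, hc⟩
  have hab' : (a : ℕ) < (b : ℕ) := hab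
  have hbc' : (b : ℕ) < (c : ℕ) := hbc
  have hxz : x ≠ z := fun hcon => absurd (Subtype.mk_eq_mk.1 hcon) (ne_of_lt (hab.trans hbc))
  have hxy : x ≠ y := fun hcon => absurd (Subtype.mk_eq_mk.1 hcon) (ne_of_lt hab)
  have hyz : y ≠ z := fun hcon => absurd (Subtype.mk_eq_mk.1 hcon) (ne_of_lt hbc)
  set α : ↥M →₀ ℕ := Finsupp.single x ((c : ℕ) - b) + Finsupp.single z ((b : ℕ) - a) with hα
  set β : ↥M →₀ ℕ := Finsupp.single y ((c : ℕ) - a) with hβ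
  have hαx : α x = (c : ℕ) - b := by
    simp [hα, Finsupp.single_apply, hxz, Ne.symm hxz]
  have hβy : β y = (c : ℕ) - a := by simp [hβ, Finsupp.single_apply]
  have hα0 : α ≠ 0 := fun h0 => by
    rw [h0] at hαx; simp at hαx; omega
  have hβ0 : β ≠ 0 := fun h0 => by
    rw [h0] at hβy; simp at hβy; omega
  have h0 : ∀ m : ↥M, ((0 : ℕ), (0 : ℕ) * ((m : ℕ+) : ℕ)) = (0 : ℕ × ℕ) := by
    intro m; simp
  have hsumα : α.sum (fun m c => ((c, c * ((m : ℕ+) : ℕ)) : ℕ × ℕ))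
      = ((c : ℕ) - b + ((b : ℕ) - a), ((c : ℕ) - b) * a + ((b : ℕ) - a) * c) := by
    rw [hα, Finsupp.sum_add_index' (fun m => h0 m)
      (fun m c1 c2 => by simp [Prod.ext_iff, add_mul]),
      Finsupp.sum_single_index (h0 x), Finsupp.sum_single_index (h0 z)]
    rfl
  have hsumβ : β.sum (fun m c => ((c, c * ((m : ℕ+) : ℕ)) : ℕ × ℕ))
      = ((c : ℕ) - a, ((c : ℕ) - a) * b) := by
    rw [hβ, Finsupp.sum_single_index (h0 y)]
  have heq : α.sum (fun m c => ((c, c * ((m : ℕ+) : ℕ)) : ℕ × ℕ))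
      = β.sum (fun m c => ((c, c * ((m : ℕ+) : ℕ)) : ℕ × ℕ)) := by
    rw [hsumα, hsumβ]
    have e1 : (c : ℕ) - b + ((b : ℕ) - a) = (c : ℕ) - a := by omega
    have e2 : ((c : ℕ) - b) * a + ((b : ℕ) - a) * c = ((c : ℕ) - a) * b := by
      zify [hab'.le, hbc'.le, (hab'.trans hbc').le]
      ring
    rw [e1, e2]
  have : α = β := hinj hα0 hβ0 heq
  have hcon : α y = β y := by rw [this]
  rw [hβy] at hcon
  have : α y = 0 := by
    simp [hα, Finsupp.single_apply, hxy, Ne.symm hxy, hyz, Ne.symm hyz]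
  omega

end Aux

/-- `S_M` is free commutative over `{(1, m) : m ∈ M}` if and only if `|M| ≤ 2`:
the map sending a finitely supported nonzero `α : M → ℕ` to
`Σ_{m ∈ M} α(m) • (1, m)` (computed componentwise, so equal to
`(Σ α m, Σ α m * m)`) is injective on nonzero functions iff `M` has at
most two elements. -/
theorem SM_free_iff_card_le_two (M : Set ℕ+) :
    Set.InjOn
      (fun α : ↥M →₀ ℕ => α.sum fun m c => ((c, c * ((m : ℕ+) : ℕ)) : ℕ × ℕ))
      {α | α ≠ 0} ↔ M.encard ≤ 2 := by
  constructor
  · intro hinj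
    by_contra hcard
    push_neg at hcard
    -- get three distinct elements
    obtain ⟨a, b, ha, hb, hab⟩ := Set.one_lt_encard_iff.1 (lt_trans (by norm_num) hcard)
    have hdiff : (M \ {a, b}).Nonempty := by
      by_contra hne
      rw [Set.not_nonempty_iff_eq_empty, Set.diff_eq_empty] at hne
      have : M.encard ≤ ({a, b} : Set ℕ+).encard := Set.encard_mono hne
      rw [Set.encard_pair hab] at this
      exact absurd this (not_le.2 hcard)
    obtain ⟨c, hcM, hcab⟩ := hdiff
    simp only [Set.mem_insert_iff, Set.mem_singleton_iff, not_or] at hcab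
    obtain ⟨hca, hcb⟩ := hcab
    -- order the three distinct elements and apply notinj
    rcases hab.lt_or_gt with h1 | h1
    · rcases (Ne.symm hcb).lt_or_gt with h2 | h2
      · exact notinj a b c ha hb hcM h1 h2 hinj
      · rcases (Ne.symm hca).lt_or_gt with h3 | h3
        · exact notinj a c b ha hcM hb h3 h2 hinj
        · exact notinj c a b hcM ha hb h3 h1 hinj
    · rcases (Ne.symm hca).lt_or_gt with h2 | h2
      · exact notinj b a c hb ha hcM h1 h2 hinj
      · rcases (Ne.symm hcb).lt_or_gt with h3 | h3
        · exact notinj b c a hb hcM ha h3 h2 hinj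
        · exact notinj c b a hcM hb ha h3 h1 hinj
  · intro hcard α _ β _ h
    -- find a ≠ b with M ⊆ {a, b}
    obtain ⟨a, b, hab, hM⟩ : ∃ a b : ℕ+, a ≠ b ∧ M ⊆ {a, b} := by
      rcases eq_or_lt_of_le hcard with h2 | h2
      · obtain ⟨x, y, hxy, hs⟩ := Set.encard_eq_two.1 h2
        exact ⟨x, y, hxy, hs.le⟩
      · have : M.encard ≤ 1 := Order.le_of_lt_add_one (by exact_mod_cast h2)
        rcases Set.encard_le_one_iff_eq.1 this with rfl | ⟨x, rfl⟩
        · exact ⟨1, 2, by decide, by simp⟩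
        · refine ⟨x, x + 1, fun h => ?_, by intro z hz; left; exact hz⟩
          have := congrArg (fun t : ℕ+ => (t : ℕ)) h
          simp at this
    ext z
    rcases hM z.2 with hz | hz
    · exact key a b hab hM α β h z hz
    · exact key b a (Ne.symm hab) (by rwa [Set.pair_comm]) α β h z hz
end

section
/- If M ⊆ ℕ is a finite strongly 3-separating set, then there exists x ∈ ℕ \ M such that M ∪ {x} is also strongly 3-separating. -/
/-- A set `M ⊆ ℕ` is 3-separating: `|M| ≥ 3` and for any two triples of
pairwise distinct elements of `M`, the identity
`n₂(m₃−m₁) = n₁(m₃−m₂) + n₃(m₂−m₁)` holds iff the triples are equal. -/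
def Sep3 (M : Set ℕ+) : Prop :=
  3 ≤ M.encard ∧
    ∀ m₁ m₂ m₃ n₁ n₂ n₃ : ℕ+,
      m₁ ∈ M → m₂ ∈ M → m₃ ∈ M → n₁ ∈ M → n₂ ∈ M → n₃ ∈ M →
      m₁ ≠ m₂ → m₁ ≠ m₃ → m₂ ≠ m₃ → n₁ ≠ n₂ → n₁ ≠ n₃ → n₂ ≠ n₃ →
      (((n₂ : ℤ) * ((m₃ : ℤ) - (m₁ : ℤ)) =
          (n₁ : ℤ) * ((m₃ : ℤ) - (m₂ : ℤ)) + (n₃ : ℤ) * ((m₂ : ℤ) - (m₁ : ℤ))) ↔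
        (m₁, m₂, m₃) = (n₁, n₂, n₃))

/-- A set `M ⊆ ℕ` is strongly 3-separating: it is 3-separating and for any
two pairs of distinct elements of `M`, `m₁ − m₂ + n₂ − n₁ = 0` holds iff the
pairs are equal. -/
def StrongSep3 (M : Set ℕ+) : Prop :=
  Sep3 M ∧
    ∀ m₁ m₂ n₁ n₂ : ℕ+,
      m₁ ∈ M → m₂ ∈ M → n₁ ∈ M → n₂ ∈ M → m₁ ≠ m₂ → n₁ ≠ n₂ →
      (((m₁ : ℤ) - (m₂ : ℤ) + (n₂ : ℤ) - (n₁ : ℤ) = 0) ↔ (m₁, m₂) = (n₁, n₂))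

/-- x appears exactly once, in the first triple's first slot (up to symmetry). -/
lemma aux1 (N x a b c d e : ℤ) (hN : 1 ≤ N) (hx : x = 3*N*N+1)
    (ha : 1 ≤ a) (ha' : a ≤ N) (hb : 1 ≤ b) (hb' : b ≤ N)
    (hc : 1 ≤ c) (hc' : c ≤ N) (hd : 1 ≤ d) (hd' : d ≤ N)
    (he : 1 ≤ e) (he' : e ≤ N) (hde : d ≠ e)
    (hE : x*(e-d) + a*(c-e) + b*(d-c) = 0) : False := by
  subst hx
  have hN0 : (0:ℤ) ≤ N := by linarith
  have hX : (0:ℤ) ≤ 3*N*N+1 := by nlinarith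
  rcases hde.lt_or_gt with h|h
  · nlinarith [mul_nonneg hX (by linarith : (0:ℤ) ≤ e-d-1),
      mul_nonneg (by linarith : (0:ℤ) ≤ a) (by linarith : (0:ℤ) ≤ c-e+N-1),
      mul_nonneg (by linarith : (0:ℤ) ≤ N-a) (by linarith : (0:ℤ) ≤ N-1),
      mul_nonneg (by linarith : (0:ℤ) ≤ b) (by linarith : (0:ℤ) ≤ d-c+N-1),
      mul_nonneg (by linarith : (0:ℤ) ≤ N-b) (by linarith : (0:ℤ) ≤ N-1)]
  · nlinarith [mul_nonneg hX (by linarith : (0:ℤ) ≤ d-e-1),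
      mul_nonneg (by linarith : (0:ℤ) ≤ a) (by linarith : (0:ℤ) ≤ e-c+N-1),
      mul_nonneg (by linarith : (0:ℤ) ≤ N-a) (by linarith : (0:ℤ) ≤ N-1),
      mul_nonneg (by linarith : (0:ℤ) ≤ b) (by linarith : (0:ℤ) ≤ c-d+N-1),
      mul_nonneg (by linarith : (0:ℤ) ≤ N-b) (by linarith : (0:ℤ) ≤ N-1)]

/-- x appears in matching slots of the two triples. -/
lemma aux2 (N x a b d e : ℤ) (hN : 1 ≤ N) (hx : x = 3*N*N+1)
    (ha : 1 ≤ a) (ha' : a ≤ N) (hb : 1 ≤ b) (hb' : b ≤ N)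
    (hd : 1 ≤ d) (hd' : d ≤ N) (he : 1 ≤ e) (he' : e ≤ N)
    (hE : x*(e-d+a-b) + (b*d-a*e) = 0) : a - b + e - d = 0 := by
  subst hx
  have hN0 : (0:ℤ) ≤ N := by linarith
  have hX : (0:ℤ) ≤ 3*N*N+1 := by nlinarith
  by_contra hcon
  rcases (lt_or_gt_of_ne hcon) with h|h
  · nlinarith [mul_nonneg hX (by linarith : (0:ℤ) ≤ d+b-a-e-1),
      mul_nonneg (by linarith : (0:ℤ) ≤ b) (by linarith : (0:ℤ) ≤ N-d),
      mul_nonneg (by linarith : (0:ℤ) ≤ N-b) (by linarith : (0:ℤ) ≤ N),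
      mul_pos (by linarith : (0:ℤ) < a) (by linarith : (0:ℤ) < e)]
  · nlinarith [mul_nonneg hX (by linarith : (0:ℤ) ≤ a-b+e-d-1),
      mul_nonneg (by linarith : (0:ℤ) ≤ a) (by linarith : (0:ℤ) ≤ N-e),
      mul_nonneg (by linarith : (0:ℤ) ≤ N-a) (by linarith : (0:ℤ) ≤ N),
      mul_pos (by linarith : (0:ℤ) < b) (by linarith : (0:ℤ) < d)]

/-- x appears in non-matching slots of the two triples. -/
lemma aux3 (N x a b c e : ℤ) (hN : 1 ≤ N) (hx : x = 3*N*N+1)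
    (ha : 1 ≤ a) (ha' : a ≤ N) (hb : 1 ≤ b) (hb' : b ≤ N)
    (hc : 1 ≤ c) (hc' : c ≤ N) (he : 1 ≤ e) (he' : e ≤ N)
    (hE : x*(e-x) + a*(c-e) + b*(x-c) = 0) : False := by
  subst hx
  nlinarith [sq_nonneg (N*N), sq_nonneg (N*N-N),
    mul_nonneg (mul_nonneg (mul_nonneg (le_trans zero_le_one hN) (le_trans zero_le_one hN)) (le_trans zero_le_one hN)) (sub_nonneg.2 he'),
    mul_nonneg (mul_nonneg (mul_nonneg (le_trans zero_le_one hN) (le_trans zero_le_one hN)) (le_trans zero_le_one hN)) (sub_nonneg.2 hb'),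
    mul_nonneg (mul_nonneg (le_trans zero_le_one hN) (le_trans zero_le_one hN)) (sub_nonneg.2 ha')]

/-- Any finite strongly 3-separating set can be extended by a new element to a
strongly 3-separating set. -/
theorem exists_extension_of_strongSep3 (M : Set ℕ+) (hfin : M.Finite)
    (hM : StrongSep3 M) :
    ∃ x : ℕ+, x ∉ M ∧ StrongSep3 (insert x M) := by
  obtain ⟨N, hNb⟩ := hfin.bddAbove
  have hb : ∀ m : ℕ+, m ∈ M → 1 ≤ (m:ℤ) ∧ (m:ℤ) ≤ (N:ℤ) := fun m hm =>
    ⟨by exact_mod_cast m.one_le, by exact_mod_cast hNb hm⟩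
  have hN1 : (1:ℤ) ≤ (N:ℤ) := by exact_mod_cast N.one_le
  set x : ℕ+ := 3*N*N+1 with hxdef
  have hx : (x:ℤ) = 3*(N:ℤ)*(N:ℤ)+1 := by rw [hxdef]; push_cast; ring
  have hxM : x ∉ M := by
    intro hxm
    have h := (hb x hxm).2
    nlinarith
  refine ⟨x, hxM, ⟨⟨?_, ?_⟩, ?_⟩⟩
  · exact le_trans hM.1.1 (Set.encard_le_encard (Set.subset_insert _ _))
  · -- the 3-separating identity for insert x M
    intro m₁ m₂ m₃ n₁ n₂ n₃ hm₁ hm₂ hm₃ hn₁ hn₂ hn₃ h12 h13 h23 h45 h46 h56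
    constructor
    · intro heq
      rcases Set.mem_insert_iff.1 hm₁ with rfl|hm₁ <;>
      rcases Set.mem_insert_iff.1 hm₂ with rfl|hm₂ <;>
      rcases Set.mem_insert_iff.1 hm₃ with rfl|hm₃ <;>
      rcases Set.mem_insert_iff.1 hn₁ with rfl|hn₁ <;>
      rcases Set.mem_insert_iff.1 hn₂ with rfl|hn₂ <;>
      rcases Set.mem_insert_iff.1 hn₃ with rfl|hn₃ <;>
      first
        | exact absurd rfl h12 | exact absurd rfl h13 | exact absurd rfl h23
        | exact absurd rfl h45 | exact absurd rfl h46 | exact absurd rfl h56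
        | skip
      -- case 1 : m₁ = x, n₁ = x
      · obtain ⟨g2, g2'⟩ := hb m₂ hm₂; obtain ⟨g3, g3'⟩ := hb m₃ hm₃
        obtain ⟨g5, g5'⟩ := hb n₂ hn₂; obtain ⟨g6, g6'⟩ := hb n₃ hn₃
        have key := aux2 (N:ℤ) (x:ℤ) (m₂:ℤ) (m₃:ℤ) (n₂:ℤ) (n₃:ℤ) hN1 hx
          g2 g2' g3 g3' g5 g5' g6 g6' (by linear_combination heq)
        have hpair := (hM.2 m₂ m₃ n₂ n₃ hm₂ hm₃ hn₂ hn₃ h23 h56).mp key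
        simp only [Prod.mk.injEq] at hpair ⊢
        exact ⟨trivial, hpair.1, hpair.2⟩
      -- case 2 : m₁ = x, n₂ = x
      · obtain ⟨g2, g2'⟩ := hb m₂ hm₂; obtain ⟨g3, g3'⟩ := hb m₃ hm₃
        obtain ⟨g4, g4'⟩ := hb n₁ hn₁; obtain ⟨g6, g6'⟩ := hb n₃ hn₃
        exact (aux3 (N:ℤ) (x:ℤ) (m₂:ℤ) (m₃:ℤ) (n₁:ℤ) (n₃:ℤ) hN1 hx
          g2 g2' g3 g3' g4 g4' g6 g6' (by linear_combination heq)).elim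
      -- case 3 : m₁ = x, n₃ = x
      · obtain ⟨g2, g2'⟩ := hb m₂ hm₂; obtain ⟨g3, g3'⟩ := hb m₃ hm₃
        obtain ⟨g4, g4'⟩ := hb n₁ hn₁; obtain ⟨g5, g5'⟩ := hb n₂ hn₂
        exact (aux3 (N:ℤ) (x:ℤ) (n₁:ℤ) (n₂:ℤ) (m₃:ℤ) (m₂:ℤ) hN1 hx
          g4 g4' g5 g5' g3 g3' g2 g2' (by linear_combination -heq)).elim
      -- case 4 : m₁ = x only
      · obtain ⟨g2, g2'⟩ := hb m₂ hm₂; obtain ⟨g3, g3'⟩ := hb m₃ hm₃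
        obtain ⟨g4, g4'⟩ := hb n₁ hn₁; obtain ⟨g5, g5'⟩ := hb n₂ hn₂
        obtain ⟨g6, g6'⟩ := hb n₃ hn₃
        have hde : (n₂:ℤ) ≠ (n₃:ℤ) := by exact_mod_cast h56
        exact (aux1 (N:ℤ) (x:ℤ) (m₂:ℤ) (m₃:ℤ) (n₁:ℤ) (n₂:ℤ) (n₃:ℤ) hN1 hx
          g2 g2' g3 g3' g4 g4' g5 g5' g6 g6' hde (by linear_combination heq)).elim
      -- case 5 : m₂ = x, n₁ = x
      · obtain ⟨g1, g1'⟩ := hb m₁ hm₁; obtain ⟨g3, g3'⟩ := hb m₃ hm₃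
        obtain ⟨g5, g5'⟩ := hb n₂ hn₂; obtain ⟨g6, g6'⟩ := hb n₃ hn₃
        exact (aux3 (N:ℤ) (x:ℤ) (n₂:ℤ) (n₃:ℤ) (m₁:ℤ) (m₃:ℤ) hN1 hx
          g5 g5' g6 g6' g1 g1' g3 g3' (by linear_combination -heq)).elim
      -- case 6 : m₂ = x, n₂ = x
      · obtain ⟨g1, g1'⟩ := hb m₁ hm₁; obtain ⟨g3, g3'⟩ := hb m₃ hm₃
        obtain ⟨g4, g4'⟩ := hb n₁ hn₁; obtain ⟨g6, g6'⟩ := hb n₃ hn₃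
        have key := aux2 (N:ℤ) (x:ℤ) (m₃:ℤ) (m₁:ℤ) (n₃:ℤ) (n₁:ℤ) hN1 hx
          g3 g3' g1 g1' g6 g6' g4 g4' (by linear_combination heq)
        have hpair := (hM.2 m₃ m₁ n₃ n₁ hm₃ hm₁ hn₃ hn₁ h13.symm h46.symm).mp key
        simp only [Prod.mk.injEq] at hpair ⊢
        exact ⟨hpair.2, trivial, hpair.1⟩
      -- case 7 : m₂ = x, n₃ = x
      · obtain ⟨g1, g1'⟩ := hb m₁ hm₁; obtain ⟨g3, g3'⟩ := hb m₃ hm₃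
        obtain ⟨g4, g4'⟩ := hb n₁ hn₁; obtain ⟨g5, g5'⟩ := hb n₂ hn₂
        exact (aux3 (N:ℤ) (x:ℤ) (m₃:ℤ) (m₁:ℤ) (n₂:ℤ) (n₁:ℤ) hN1 hx
          g3 g3' g1 g1' g5 g5' g4 g4' (by linear_combination heq)).elim
      -- case 8 : m₂ = x only
      · obtain ⟨g1, g1'⟩ := hb m₁ hm₁; obtain ⟨g3, g3'⟩ := hb m₃ hm₃
        obtain ⟨g4, g4'⟩ := hb n₁ hn₁; obtain ⟨g5, g5'⟩ := hb n₂ hn₂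
        obtain ⟨g6, g6'⟩ := hb n₃ hn₃
        have hde : (n₃:ℤ) ≠ (n₁:ℤ) := by exact_mod_cast h46.symm
        exact (aux1 (N:ℤ) (x:ℤ) (m₃:ℤ) (m₁:ℤ) (n₂:ℤ) (n₃:ℤ) (n₁:ℤ) hN1 hx
          g3 g3' g1 g1' g5 g5' g6 g6' g4 g4' hde (by linear_combination heq)).elim
      -- case 9 : m₃ = x, n₁ = x
      · obtain ⟨g1, g1'⟩ := hb m₁ hm₁; obtain ⟨g2, g2'⟩ := hb m₂ hm₂
        obtain ⟨g5, g5'⟩ := hb n₂ hn₂; obtain ⟨g6, g6'⟩ := hb n₃ hn₃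
        exact (aux3 (N:ℤ) (x:ℤ) (m₁:ℤ) (m₂:ℤ) (n₃:ℤ) (n₂:ℤ) hN1 hx
          g1 g1' g2 g2' g6 g6' g5 g5' (by linear_combination heq)).elim
      -- case 10 : m₃ = x, n₂ = x
      · obtain ⟨g1, g1'⟩ := hb m₁ hm₁; obtain ⟨g2, g2'⟩ := hb m₂ hm₂
        obtain ⟨g4, g4'⟩ := hb n₁ hn₁; obtain ⟨g6, g6'⟩ := hb n₃ hn₃
        exact (aux3 (N:ℤ) (x:ℤ) (n₃:ℤ) (n₁:ℤ) (m₂:ℤ) (m₁:ℤ) hN1 hx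
          g6 g6' g4 g4' g2 g2' g1 g1' (by linear_combination -heq)).elim
      -- case 11 : m₃ = x, n₃ = x
      · obtain ⟨g1, g1'⟩ := hb m₁ hm₁; obtain ⟨g2, g2'⟩ := hb m₂ hm₂
        obtain ⟨g4, g4'⟩ := hb n₁ hn₁; obtain ⟨g5, g5'⟩ := hb n₂ hn₂
        have key := aux2 (N:ℤ) (x:ℤ) (m₁:ℤ) (m₂:ℤ) (n₁:ℤ) (n₂:ℤ) hN1 hx
          g1 g1' g2 g2' g4 g4' g5 g5' (by linear_combination heq)
        have hpair := (hM.2 m₁ m₂ n₁ n₂ hm₁ hm₂ hn₁ hn₂ h12 h45).mp key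
        simp only [Prod.mk.injEq] at hpair ⊢
        exact ⟨hpair.1, hpair.2, trivial⟩
      -- case 12 : m₃ = x only
      · obtain ⟨g1, g1'⟩ := hb m₁ hm₁; obtain ⟨g2, g2'⟩ := hb m₂ hm₂
        obtain ⟨g4, g4'⟩ := hb n₁ hn₁; obtain ⟨g5, g5'⟩ := hb n₂ hn₂
        obtain ⟨g6, g6'⟩ := hb n₃ hn₃
        have hde : (n₁:ℤ) ≠ (n₂:ℤ) := by exact_mod_cast h45
        exact (aux1 (N:ℤ) (x:ℤ) (m₁:ℤ) (m₂:ℤ) (n₃:ℤ) (n₁:ℤ) (n₂:ℤ) hN1 hx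
          g1 g1' g2 g2' g6 g6' g4 g4' g5 g5' hde (by linear_combination heq)).elim
      -- case 13 : n₁ = x only
      · obtain ⟨g1, g1'⟩ := hb m₁ hm₁; obtain ⟨g2, g2'⟩ := hb m₂ hm₂
        obtain ⟨g3, g3'⟩ := hb m₃ hm₃
        obtain ⟨g5, g5'⟩ := hb n₂ hn₂; obtain ⟨g6, g6'⟩ := hb n₃ hn₃
        have hde : (m₂:ℤ) ≠ (m₃:ℤ) := by exact_mod_cast h23
        exact (aux1 (N:ℤ) (x:ℤ) (n₂:ℤ) (n₃:ℤ) (m₁:ℤ) (m₂:ℤ) (m₃:ℤ) hN1 hx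
          g5 g5' g6 g6' g1 g1' g2 g2' g3 g3' hde (by linear_combination -heq)).elim
      -- case 14 : n₂ = x only
      · obtain ⟨g1, g1'⟩ := hb m₁ hm₁; obtain ⟨g2, g2'⟩ := hb m₂ hm₂
        obtain ⟨g3, g3'⟩ := hb m₃ hm₃
        obtain ⟨g4, g4'⟩ := hb n₁ hn₁; obtain ⟨g6, g6'⟩ := hb n₃ hn₃
        have hde : (m₃:ℤ) ≠ (m₁:ℤ) := by exact_mod_cast h13.symm
        exact (aux1 (N:ℤ) (x:ℤ) (n₃:ℤ) (n₁:ℤ) (m₂:ℤ) (m₃:ℤ) (m₁:ℤ) hN1 hx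
          g6 g6' g4 g4' g2 g2' g3 g3' g1 g1' hde (by linear_combination -heq)).elim
      -- case 15 : n₃ = x only
      · obtain ⟨g1, g1'⟩ := hb m₁ hm₁; obtain ⟨g2, g2'⟩ := hb m₂ hm₂
        obtain ⟨g3, g3'⟩ := hb m₃ hm₃
        obtain ⟨g4, g4'⟩ := hb n₁ hn₁; obtain ⟨g5, g5'⟩ := hb n₂ hn₂
        have hde : (m₁:ℤ) ≠ (m₂:ℤ) := by exact_mod_cast h12
        exact (aux1 (N:ℤ) (x:ℤ) (n₁:ℤ) (n₂:ℤ) (m₃:ℤ) (m₁:ℤ) (m₂:ℤ) hN1 hx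
          g4 g4' g5 g5' g3 g3' g1 g1' g2 g2' hde (by linear_combination -heq)).elim
      -- case 16 : all in M
      · exact (hM.1.2 m₁ m₂ m₃ n₁ n₂ n₃ hm₁ hm₂ hm₃ hn₁ hn₂ hn₃
          h12 h13 h23 h45 h46 h56).mp heq
    · intro h
      simp only [Prod.mk.injEq] at h
      obtain ⟨e1, e2, e3⟩ := h
      subst e1; subst e2; subst e3; ring
  · -- the strong (pair) condition for insert x M
    intro m₁ m₂ n₁ n₂ hm₁ hm₂ hn₁ hn₂ h12 h34
    constructor
    · intro h
      rcases Set.mem_insert_iff.1 hm₁ with rfl|hm₁ <;>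
      rcases Set.mem_insert_iff.1 hm₂ with rfl|hm₂ <;>
      rcases Set.mem_insert_iff.1 hn₁ with rfl|hn₁ <;>
      rcases Set.mem_insert_iff.1 hn₂ with rfl|hn₂ <;>
      first
        | exact absurd rfl h12 | exact absurd rfl h34
        | skip
      -- case (x, M, x, M)
      · have e : m₂ = n₂ := by
          have : (m₂:ℤ) = (n₂:ℤ) := by linarith
          exact_mod_cast this
        simp [e]
      -- case (x, M, M, x)
      · obtain ⟨g2, g2'⟩ := hb m₂ hm₂; obtain ⟨g4, g4'⟩ := hb n₁ hn₁
        exfalso; nlinarith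
      -- case (x, M, M, M)
      · obtain ⟨g2, g2'⟩ := hb m₂ hm₂; obtain ⟨g4, g4'⟩ := hb n₁ hn₁
        obtain ⟨g5, g5'⟩ := hb n₂ hn₂
        exfalso; nlinarith
      -- case (M, x, x, M)
      · obtain ⟨g1, g1'⟩ := hb m₁ hm₁; obtain ⟨g5, g5'⟩ := hb n₂ hn₂
        exfalso; nlinarith
      -- case (M, x, M, x)
      · have e : m₁ = n₁ := by
          have : (m₁:ℤ) = (n₁:ℤ) := by linarith
          exact_mod_cast this
        simp [e]
      -- case (M, x, M, M)
      · obtain ⟨g1, g1'⟩ := hb m₁ hm₁; obtain ⟨g4, g4'⟩ := hb n₁ hn₁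
        obtain ⟨g5, g5'⟩ := hb n₂ hn₂
        exfalso; nlinarith
      -- case (M, M, x, M)
      · obtain ⟨g1, g1'⟩ := hb m₁ hm₁; obtain ⟨g2, g2'⟩ := hb m₂ hm₂
        obtain ⟨g5, g5'⟩ := hb n₂ hn₂
        exfalso; nlinarith
      -- case (M, M, M, x)
      · obtain ⟨g1, g1'⟩ := hb m₁ hm₁; obtain ⟨g2, g2'⟩ := hb m₂ hm₂
        obtain ⟨g4, g4'⟩ := hb n₁ hn₁
        exfalso; nlinarith
      -- case (M, M, M, M)
      · exact (hM.2 m₁ m₂ n₁ n₂ hm₁ hm₂ hn₁ hn₂ h12 h34).mp h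
    · intro h
      simp only [Prod.mk.injEq] at h
      obtain ⟨e1, e2⟩ := h
      subst e1; subst e2; ring
end

section
/- There exists an infinite strongly 3-separating subset M_∞ of ℕ with 1 ∈ M_∞. -/
private lemma pow_inj2 {x y : ℕ} (h : (2:ℕ)^x = 2^y) : x = y :=
  Nat.pow_right_injective (le_refl 2) h

private lemma pow_dom {u v : ℕ} (h : u + 2 ≤ v) : 4 * 2^u ≤ (2:ℕ)^v := by
  calc 4 * 2^u = 2^(u+2) := by ring
  _ ≤ 2^v := Nat.pow_le_pow_right (by norm_num) h

/-- two-term cancellation for separated exponents -/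
private lemma L2 {a b d e : ℕ}
    (s1 : a = d ∨ a+2 ≤ d ∨ d+2 ≤ a) (s2 : a = e ∨ a+2 ≤ e ∨ e+2 ≤ a)
    (s3 : b = d ∨ b+2 ≤ d ∨ d+2 ≤ b) (s4 : b = e ∨ b+2 ≤ e ∨ e+2 ≤ b)
    (h : 2^a + 2^b = 2^d + 2^e) : (a = d ∧ b = e) ∨ (a = e ∧ b = d) := by
  have p1 : 1 ≤ (2:ℕ)^a := Nat.one_le_two_pow
  have p2 : 1 ≤ (2:ℕ)^b := Nat.one_le_two_pow
  have p3 : 1 ≤ (2:ℕ)^d := Nat.one_le_two_pow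
  have p4 : 1 ≤ (2:ℕ)^e := Nat.one_le_two_pow
  rcases s1 with rfl | had | hda
  · left; exact ⟨rfl, pow_inj2 (by linarith)⟩
  · have d1 := pow_dom had
    rcases s4 with rfl | hbe | heb
    · exfalso; have := pow_inj2 (show (2:ℕ)^a = 2^d by linarith); omega
    · have d2 := pow_dom hbe; linarith
    · have d2 := pow_dom heb
      rcases s3 with rfl | hbd | hdb
      · right; exact ⟨pow_inj2 (by linarith), rfl⟩
      · have d3 := pow_dom hbd; linarith
      · have d3 := pow_dom hdb; linarith
  · have d1 := pow_dom hda
    rcases s2 with rfl | hae | hea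
    · right; exact ⟨rfl, pow_inj2 (by linarith)⟩
    · have d2 := pow_dom hae
      rcases s4 with rfl | hbe | heb
      · exfalso; have := pow_inj2 (show (2:ℕ)^a = 2^d by linarith); omega
      · have d3 := pow_dom hbe; linarith
      · have d3 := pow_dom heb; linarith
    · have d2 := pow_dom hea; linarith

private lemma L3max {a b c d e f : ℕ} (hab : b ≤ a) (hac : c ≤ a) (hde : e ≤ d) (hdf : f ≤ d)
    (sep : ∀ x y, (x = a ∨ x = b ∨ x = c) → (y = d ∨ y = e ∨ y = f) →
      x = y ∨ x + 2 ≤ y ∨ y + 2 ≤ x)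
    (h : 2^a + 2^b + 2^c = 2^d + 2^e + 2^f) :
    a = d ∧ ((b = e ∧ c = f) ∨ (b = f ∧ c = e)) := by
  have pb : (2:ℕ)^b ≤ 2^a := Nat.pow_le_pow_right (by norm_num) hab
  have pc : (2:ℕ)^c ≤ 2^a := Nat.pow_le_pow_right (by norm_num) hac
  have pe : (2:ℕ)^e ≤ 2^d := Nat.pow_le_pow_right (by norm_num) hde
  have pf : (2:ℕ)^f ≤ 2^d := Nat.pow_le_pow_right (by norm_num) hdf
  have q1 : 1 ≤ (2:ℕ)^a := Nat.one_le_two_pow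
  have q2 : 1 ≤ (2:ℕ)^b := Nat.one_le_two_pow
  have q3 : 1 ≤ (2:ℕ)^c := Nat.one_le_two_pow
  have q4 : 1 ≤ (2:ℕ)^d := Nat.one_le_two_pow
  have q5 : 1 ≤ (2:ℕ)^e := Nat.one_le_two_pow
  have q6 : 1 ≤ (2:ℕ)^f := Nat.one_le_two_pow
  have had : a = d := by
    rcases sep a d (Or.inl rfl) (Or.inl rfl) with h' | h' | h'
    · exact h'
    · have := pow_dom h'; linarith
    · have := pow_dom h'; linarith
  subst had
  have h2 : (2:ℕ)^b + 2^c = 2^e + 2^f := by linarith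
  exact ⟨rfl, L2 (sep b e (Or.inr (Or.inl rfl)) (Or.inr (Or.inl rfl)))
    (sep b f (Or.inr (Or.inl rfl)) (Or.inr (Or.inr rfl)))
    (sep c e (Or.inr (Or.inr rfl)) (Or.inr (Or.inl rfl)))
    (sep c f (Or.inr (Or.inr rfl)) (Or.inr (Or.inr rfl))) h2⟩

set_option maxHeartbeats 4000000 in
/-- three-term cancellation for separated exponents -/
private lemma L3 {a b c d e f : ℕ}
    (sep : ∀ x y, (x = a ∨ x = b ∨ x = c) → (y = d ∨ y = e ∨ y = f) →
      x = y ∨ x + 2 ≤ y ∨ y + 2 ≤ x)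
    (h : 2^a + 2^b + 2^c = 2^d + 2^e + 2^f) :
    (a=d∧b=e∧c=f) ∨ (a=d∧b=f∧c=e) ∨ (a=e∧b=d∧c=f) ∨ (a=e∧b=f∧c=d) ∨
    (a=f∧b=d∧c=e) ∨ (a=f∧b=e∧c=d) := by
  have hL : (b ≤ a ∧ c ≤ a) ∨ (a ≤ b ∧ c ≤ b) ∨ (a ≤ c ∧ b ≤ c) := by omega
  have hR : (e ≤ d ∧ f ≤ d) ∨ (d ≤ e ∧ f ≤ e) ∨ (d ≤ f ∧ e ≤ f) := by omega
  rcases hL with ⟨h1,h2⟩|⟨h1,h2⟩|⟨h1,h2⟩ <;> rcases hR with ⟨h3,h4⟩|⟨h3,h4⟩|⟨h3,h4⟩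
  · have sep' : ∀ x y, (x = a ∨ x = b ∨ x = c) → (y = d ∨ y = e ∨ y = f) →
        x = y ∨ x + 2 ≤ y ∨ y + 2 ≤ x := fun x y hx hy => sep x y (by tauto) (by tauto)
    have h' : 2^a + 2^b + 2^c = 2^d + 2^e + 2^f := by linarith
    obtain ⟨e1, hrest⟩ := L3max h1 h2 h3 h4 sep' h'
    rcases hrest with ⟨e2, e3⟩ | ⟨e2, e3⟩
    · exact Or.inl (⟨e1, e2, e3⟩)
    · exact Or.inr (Or.inl (⟨e1, e2, e3⟩))
  · have sep' : ∀ x y, (x = a ∨ x = b ∨ x = c) → (y = e ∨ y = d ∨ y = f) →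
        x = y ∨ x + 2 ≤ y ∨ y + 2 ≤ x := fun x y hx hy => sep x y (by tauto) (by tauto)
    have h' : 2^a + 2^b + 2^c = 2^e + 2^d + 2^f := by linarith
    obtain ⟨e1, hrest⟩ := L3max h1 h2 h3 h4 sep' h'
    rcases hrest with ⟨e2, e3⟩ | ⟨e2, e3⟩
    · exact Or.inr (Or.inr (Or.inl (⟨e1, e2, e3⟩)))
    · exact Or.inr (Or.inr (Or.inr (Or.inl (⟨e1, e2, e3⟩))))
  · have sep' : ∀ x y, (x = a ∨ x = b ∨ x = c) → (y = f ∨ y = d ∨ y = e) →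
        x = y ∨ x + 2 ≤ y ∨ y + 2 ≤ x := fun x y hx hy => sep x y (by tauto) (by tauto)
    have h' : 2^a + 2^b + 2^c = 2^f + 2^d + 2^e := by linarith
    obtain ⟨e1, hrest⟩ := L3max h1 h2 h3 h4 sep' h'
    rcases hrest with ⟨e2, e3⟩ | ⟨e2, e3⟩
    · exact Or.inr (Or.inr (Or.inr (Or.inr (Or.inl (⟨e1, e2, e3⟩)))))
    · exact Or.inr (Or.inr (Or.inr (Or.inr (Or.inr (⟨e1, e2, e3⟩)))))
  · have sep' : ∀ x y, (x = b ∨ x = a ∨ x = c) → (y = d ∨ y = e ∨ y = f) →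
        x = y ∨ x + 2 ≤ y ∨ y + 2 ≤ x := fun x y hx hy => sep x y (by tauto) (by tauto)
    have h' : 2^b + 2^a + 2^c = 2^d + 2^e + 2^f := by linarith
    obtain ⟨e1, hrest⟩ := L3max h1 h2 h3 h4 sep' h'
    rcases hrest with ⟨e2, e3⟩ | ⟨e2, e3⟩
    · exact Or.inr (Or.inr (Or.inl (⟨e2, e1, e3⟩)))
    · exact Or.inr (Or.inr (Or.inr (Or.inr (Or.inl (⟨e2, e1, e3⟩)))))
  · have sep' : ∀ x y, (x = b ∨ x = a ∨ x = c) → (y = e ∨ y = d ∨ y = f) →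
        x = y ∨ x + 2 ≤ y ∨ y + 2 ≤ x := fun x y hx hy => sep x y (by tauto) (by tauto)
    have h' : 2^b + 2^a + 2^c = 2^e + 2^d + 2^f := by linarith
    obtain ⟨e1, hrest⟩ := L3max h1 h2 h3 h4 sep' h'
    rcases hrest with ⟨e2, e3⟩ | ⟨e2, e3⟩
    · exact Or.inl (⟨e2, e1, e3⟩)
    · exact Or.inr (Or.inr (Or.inr (Or.inr (Or.inr (⟨e2, e1, e3⟩)))))
  · have sep' : ∀ x y, (x = b ∨ x = a ∨ x = c) → (y = f ∨ y = d ∨ y = e) →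
        x = y ∨ x + 2 ≤ y ∨ y + 2 ≤ x := fun x y hx hy => sep x y (by tauto) (by tauto)
    have h' : 2^b + 2^a + 2^c = 2^f + 2^d + 2^e := by linarith
    obtain ⟨e1, hrest⟩ := L3max h1 h2 h3 h4 sep' h'
    rcases hrest with ⟨e2, e3⟩ | ⟨e2, e3⟩
    · exact Or.inr (Or.inl (⟨e2, e1, e3⟩))
    · exact Or.inr (Or.inr (Or.inr (Or.inl (⟨e2, e1, e3⟩))))
  · have sep' : ∀ x y, (x = c ∨ x = a ∨ x = b) → (y = d ∨ y = e ∨ y = f) →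
        x = y ∨ x + 2 ≤ y ∨ y + 2 ≤ x := fun x y hx hy => sep x y (by tauto) (by tauto)
    have h' : 2^c + 2^a + 2^b = 2^d + 2^e + 2^f := by linarith
    obtain ⟨e1, hrest⟩ := L3max h1 h2 h3 h4 sep' h'
    rcases hrest with ⟨e2, e3⟩ | ⟨e2, e3⟩
    · exact Or.inr (Or.inr (Or.inr (Or.inl (⟨e2, e3, e1⟩))))
    · exact Or.inr (Or.inr (Or.inr (Or.inr (Or.inr (⟨e2, e3, e1⟩)))))
  · have sep' : ∀ x y, (x = c ∨ x = a ∨ x = b) → (y = e ∨ y = d ∨ y = f) →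
        x = y ∨ x + 2 ≤ y ∨ y + 2 ≤ x := fun x y hx hy => sep x y (by tauto) (by tauto)
    have h' : 2^c + 2^a + 2^b = 2^e + 2^d + 2^f := by linarith
    obtain ⟨e1, hrest⟩ := L3max h1 h2 h3 h4 sep' h'
    rcases hrest with ⟨e2, e3⟩ | ⟨e2, e3⟩
    · exact Or.inr (Or.inl (⟨e2, e3, e1⟩))
    · exact Or.inr (Or.inr (Or.inr (Or.inr (Or.inl (⟨e2, e3, e1⟩)))))
  · have sep' : ∀ x y, (x = c ∨ x = a ∨ x = b) → (y = f ∨ y = d ∨ y = e) →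
        x = y ∨ x + 2 ≤ y ∨ y + 2 ≤ x := fun x y hx hy => sep x y (by tauto) (by tauto)
    have h' : 2^c + 2^a + 2^b = 2^f + 2^d + 2^e := by linarith
    obtain ⟨e1, hrest⟩ := L3max h1 h2 h3 h4 sep' h'
    rcases hrest with ⟨e2, e3⟩ | ⟨e2, e3⟩
    · exact Or.inl (⟨e2, e3, e1⟩)
    · exact Or.inr (Or.inr (Or.inl (⟨e2, e3, e1⟩)))

/-- Sidon property of powers of 4 -/
private lemma S4 {p q r s : ℕ} (h : (4:ℕ)^p + 4^q = 4^r + 4^s) :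
    (p = r ∧ q = s) ∨ (p = s ∧ q = r) := by
  have e : ∀ t : ℕ, (4:ℕ)^t = 2^(2*t) := fun t => by rw [pow_mul]; norm_num
  have h' : (2:ℕ)^(2*p) + 2^(2*q) = 2^(2*r) + 2^(2*s) := by
    rw [← e, ← e, ← e, ← e]; exact h
  have := L2 (by omega) (by omega) (by omega) (by omega) h'
  omega

private lemma D4 {x y z : ℕ} (h : (4:ℕ)^x + 4^y = 4^z) : False := by
  have p1 : 1 ≤ (4:ℕ)^x := Nat.one_le_pow _ _ (by norm_num)
  have p2 : 1 ≤ (4:ℕ)^y := Nat.one_le_pow _ _ (by norm_num)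
  rcases le_total x y with hxy | hxy
  · have l1 : (4:ℕ)^x ≤ 4^y := Nat.pow_le_pow_right (by norm_num) hxy
    rcases le_or_gt z y with hz | hz
    · have l2 : (4:ℕ)^z ≤ 4^y := Nat.pow_le_pow_right (by norm_num) hz; omega
    · have l2 : (4:ℕ)^(y+1) ≤ 4^z := Nat.pow_le_pow_right (by norm_num) hz
      have l3 : (4:ℕ)^(y+1) = 4*4^y := by ring
      omega
  · have l1 : (4:ℕ)^y ≤ 4^x := Nat.pow_le_pow_right (by norm_num) hxy
    rcases le_or_gt z x with hz | hz
    · have l2 : (4:ℕ)^z ≤ 4^x := Nat.pow_le_pow_right (by norm_num) hz; omega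
    · have l2 : (4:ℕ)^(x+1) ≤ 4^z := Nat.pow_le_pow_right (by norm_num) hz
      have l3 : (4:ℕ)^(x+1) = 4*4^x := by ring
      omega

/-- no two numbers of the form 4^a+4^b are consecutive -/
private lemma C4 {a b c d : ℕ} : (4:ℕ)^a + 4^b + 1 ≠ 4^c + 4^d := by
  intro h
  have fact : ∀ t : ℕ, (t = 0 ∧ (4:ℕ)^t = 1) ∨
      (1 ≤ t ∧ (4:ℕ)^t = 4 * 4^(t-1) ∧ 1 ≤ (4:ℕ)^(t-1)) := by
    intro t
    rcases Nat.eq_zero_or_pos t with rfl | ht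
    · left; simp
    · right
      refine ⟨ht, ?_, Nat.one_le_pow _ _ (by norm_num)⟩
      have e : t - 1 + 1 = t := by omega
      conv_lhs => rw [← e, pow_succ]
      ring
  have hD1 : ¬ ((4:ℕ)^(a-1) + 4^(b-1) = 4^(c-1)) := fun h' => D4 h'
  have hD2 : ¬ ((4:ℕ)^(a-1) + 4^(b-1) = 4^(d-1)) := fun h' => D4 h'
  have fa := fact a; have fb := fact b; have fc := fact c; have fd := fact d
  omega

private lemma sepA (x y u v : ℕ) :
    4^x + 4^y = 4^u + 4^v ∨ 4^x + 4^y + 2 ≤ 4^u + 4^v ∨ (4:ℕ)^u + 4^v + 2 ≤ 4^x + 4^y := by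
  have h1 := @C4 x y u v
  have h2 := @C4 u v x y
  omega

private lemma sepE (x y : ℕ) :
    (4^x - 1 : ℕ) = 4^y - 1 ∨ (4^x - 1 : ℕ) + 2 ≤ 4^y - 1 ∨ (4^y - 1 : ℕ) + 2 ≤ 4^x - 1 := by
  have p1 : 1 ≤ (4:ℕ)^x := Nat.one_le_pow _ _ (by norm_num)
  have p2 : 1 ≤ (4:ℕ)^y := Nat.one_le_pow _ _ (by norm_num)
  rcases lt_trichotomy x y with h | rfl | h
  · have l1 : (4:ℕ)^(x+1) ≤ 4^y := Nat.pow_le_pow_right (by norm_num) h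
    have l2 : (4:ℕ)^(x+1) = 4*4^x := by ring
    omega
  · left; rfl
  · have l1 : (4:ℕ)^(y+1) ≤ 4^x := Nat.pow_le_pow_right (by norm_num) h
    have l2 : (4:ℕ)^(y+1) = 4*4^y := by ring
    omega

private lemma Einj {x y : ℕ} (h : (4:ℕ)^x - 1 = 4^y - 1) : x = y := by
  have p1 : 1 ≤ (4:ℕ)^x := Nat.one_le_pow _ _ (by norm_num)
  have p2 : 1 ≤ (4:ℕ)^y := Nat.one_le_pow _ _ (by norm_num)
  have h4 : (4:ℕ)^x = 4^y := by omega
  exact Nat.pow_right_injective (by norm_num) h4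

private def fpn (k : ℕ) : ℕ+ := ⟨2^(4^k - 1), pow_pos (by norm_num) _⟩

private lemma fpn_coe (k : ℕ) : ((fpn k : ℕ+) : ℕ) = 2^(4^k - 1) := rfl

private lemma fpn_inj : Function.Injective fpn := by
  intro x y h
  have h1 : (2:ℕ)^(4^x-1) = 2^(4^y-1) := congrArg (fun p : ℕ+ => (p : ℕ)) h
  exact Einj (pow_inj2 h1)

private lemma prod_pow (u w : ℕ) :
    4 * ((2:ℕ)^(4^u-1) * 2^(4^w-1)) = 2^(4^u + 4^w) := by
  have h1 : 1 ≤ (4:ℕ)^u := Nat.one_le_pow _ _ (by norm_num)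
  have h2 : 1 ≤ (4:ℕ)^w := Nat.one_le_pow _ _ (by norm_num)
  rw [← pow_add]
  have he : 4^u + 4^w = (4^u - 1 + (4^w - 1)) + 2 := by omega
  rw [he, pow_add]
  ring



/-- There exists an infinite strongly 3-separating subset of `ℕ` containing `1`. -/
theorem exists_infinite_strongSep3 :
    ∃ M : Set ℕ+, M.Infinite ∧ StrongSep3 M ∧ 1 ∈ M := by
  have hinf : (Set.range fpn).Infinite := Set.infinite_range_of_injective fpn_inj
  refine ⟨Set.range fpn, hinf, ⟨⟨?_, ?_⟩, ?_⟩, ⟨0, rfl⟩⟩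
  · rw [hinf.encard_eq]; exact le_top
  · -- Sep3 main condition
    rintro m₁ m₂ m₃ n₁ n₂ n₃ ⟨i₁, rfl⟩ ⟨i₂, rfl⟩ ⟨i₃, rfl⟩ ⟨j₁, rfl⟩ ⟨j₂, rfl⟩ ⟨j₃, rfl⟩
      h12 h13 h23 g12 g13 g23
    have hI12 : i₁ ≠ i₂ := fun e => h12 (congrArg fpn e)
    have hI13 : i₁ ≠ i₃ := fun e => h13 (congrArg fpn e)
    have hI23 : i₂ ≠ i₃ := fun e => h23 (congrArg fpn e)
    have hJ12 : j₁ ≠ j₂ := fun e => g12 (congrArg fpn e)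
    have hJ13 : j₁ ≠ j₃ := fun e => g13 (congrArg fpn e)
    have hJ23 : j₂ ≠ j₃ := fun e => g23 (congrArg fpn e)
    constructor
    · intro h
      have hz : (((fpn j₂ : ℕ) * (fpn i₃ : ℕ) + (fpn j₁ : ℕ) * (fpn i₂ : ℕ) +
            (fpn j₃ : ℕ) * (fpn i₁ : ℕ) : ℕ) : ℤ) =
          (((fpn j₁ : ℕ) * (fpn i₃ : ℕ) + (fpn j₃ : ℕ) * (fpn i₂ : ℕ) +
            (fpn j₂ : ℕ) * (fpn i₁ : ℕ) : ℕ) : ℤ) := by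
        push_cast
        linear_combination h
      have hN : (2:ℕ)^(4^j₂-1) * 2^(4^i₃-1) + 2^(4^j₁-1) * 2^(4^i₂-1) +
          2^(4^j₃-1) * 2^(4^i₁-1) =
          2^(4^j₁-1) * 2^(4^i₃-1) + 2^(4^j₃-1) * 2^(4^i₂-1) + 2^(4^j₂-1) * 2^(4^i₁-1) := by
        have hn := Nat.cast_injective hz
        simpa only [fpn_coe] using hn
      have key : (2:ℕ)^(4^j₂ + 4^i₃) + 2^(4^j₁ + 4^i₂) + 2^(4^j₃ + 4^i₁) =
          2^(4^j₁ + 4^i₃) + 2^(4^j₃ + 4^i₂) + 2^(4^j₂ + 4^i₁) := by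
        have e1 := prod_pow j₂ i₃; have e2 := prod_pow j₁ i₂; have e3 := prod_pow j₃ i₁
        have e4 := prod_pow j₁ i₃; have e5 := prod_pow j₃ i₂; have e6 := prod_pow j₂ i₁
        linarith
      have hd := L3 (fun x y hx hy => by
        rcases hx with rfl|rfl|rfl <;> rcases hy with rfl|rfl|rfl <;> exact sepA _ _ _ _) key
      have final : i₁ = j₁ ∧ i₂ = j₂ ∧ i₃ = j₃ := by
        rcases hd with h'|h'|h'|h'|h'|h' <;> obtain ⟨h1, h2, h3⟩ := h' <;>
          have s1 := S4 h1 <;> have s2 := S4 h2 <;> have s3 := S4 h3 <;>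
          clear h1 h2 h3 key hN hz h <;> omega
      obtain ⟨e1, e2, e3⟩ := final
      rw [e1, e2, e3]
    · intro h
      rw [Prod.mk.injEq, Prod.mk.injEq] at h
      obtain ⟨e1, e2, e3⟩ := h
      rw [e1, e2, e3]
      ring
  · -- strong condition
    rintro m₁ m₂ n₁ n₂ ⟨i₁, rfl⟩ ⟨i₂, rfl⟩ ⟨j₁, rfl⟩ ⟨j₂, rfl⟩ h12 g12
    constructor
    · intro h
      have hz : (((fpn i₁ : ℕ) + (fpn j₂ : ℕ) : ℕ) : ℤ) =
          (((fpn i₂ : ℕ) + (fpn j₁ : ℕ) : ℕ) : ℤ) := by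
        push_cast
        linarith
      have hN : (2:ℕ)^(4^i₁-1) + 2^(4^j₂-1) = 2^(4^i₂-1) + 2^(4^j₁-1) := by
        have hn := Nat.cast_injective hz
        simpa only [fpn_coe] using hn
      rcases L2 (sepE i₁ i₂) (sepE i₁ j₁) (sepE j₂ i₂) (sepE j₂ j₁) hN with ⟨e1, _⟩ | ⟨e1, e2⟩
      · exact absurd (congrArg fpn (Einj e1)) h12
      · rw [Prod.mk.injEq]
        exact ⟨congrArg fpn (Einj e1), congrArg fpn (Einj e2).symm⟩
    · intro h
      rw [Prod.mk.injEq] at h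
      obtain ⟨e1, e2⟩ := h
      rw [e1, e2]
      ring
end

section
/- If G is a finite group, then every subsemigroup of ℕ × G is finitely generated. -/
/-!
Pick any `u ∈ U`; a suitable power `a` of it has trivial `G`-component, say `a = (A, 1)`. Sort
the elements of `U` into the finitely many classes given by their `G`-component and the residue
of their `ℕ`-component modulo `A`, and choose in each class an element of least `ℕ`-component.
Every other element of the class is that representative times a power of the central element
`a`, so the representatives together with `a` generate `U`.
-/

open Multiplicative

theorem Set.exists_finite_subset_forall_exists_le {α ι β : Type*} [Finite ι] [LinearOrder β]
    [WellFoundedLT β] (cls : α → ι) (f : α → β) (S : Set α) :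
    ∃ T ⊆ S, T.Finite ∧ ∀ u ∈ S, ∃ w ∈ T, cls w = cls u ∧ f w ≤ f u := by
  let fibre (i : ι) : Set α := S ∩ cls ⁻¹' {i}
  let rep (i : {i // (fibre i).Nonempty}) : α := Function.argminOn f (fibre i) i.2
  refine ⟨Set.range rep, ?_, Set.finite_range rep, fun u hu => ?_⟩
  · rintro _ ⟨i, rfl⟩
    exact (Function.argminOn_mem f _ i.2).1
  · exact ⟨rep ⟨cls u, u, hu, rfl⟩, ⟨_, rfl⟩,
      (Function.argminOn_mem f (fibre (cls u)) _).2,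
      Function.argminOn_le f (fibre (cls u)) ⟨hu, rfl⟩⟩

section ToNatProd

variable {G : Type*} [Monoid G]

/-- Unlike `ℕ+ × G`, the target is a monoid, so powers are available there. -/
def toNatProd : Multiplicative ℕ+ × G →ₙ* Multiplicative ℕ × G where
  toFun u := (ofAdd (toAdd u.1).val, u.2)
  map_mul' _ _ := by ext <;> simp

theorem toNatProd_injective : Function.Injective (toNatProd (G := G)) := by
  intro u v h
  simp only [toNatProd, MulHom.coe_mk, Prod.mk.injEq, EmbeddingLike.apply_eq_iff_eq,
    PNat.coe_inj] at h
  exact Prod.ext h.1 h.2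

end ToNatProd

namespace Subsemigroup

section Semigroup

variable {M N : Type*} [Semigroup M] [Monoid N]

theorem exists_mem_map_eq_mul_pow (f : M →ₙ* N) {S : Subsemigroup M} {w a : M} (hw : w ∈ S)
    (ha : a ∈ S) : ∀ n : ℕ, ∃ v ∈ S, f v = f w * f a ^ n
  | 0 => ⟨w, hw, by rw [pow_zero, mul_one]⟩
  | n + 1 =>
    let ⟨v, hv, hfv⟩ := exists_mem_map_eq_mul_pow f hw ha n
    ⟨v * a, S.mul_mem hv ha, by rw [map_mul, hfv, pow_succ, mul_assoc]⟩

theorem exists_mem_snd_eq_one {G : Type*} [Monoid G] (hG : Monoid.ExponentExists G)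
    {S : Subsemigroup (M × G)} (hS : (S : Set (M × G)).Nonempty) : ∃ a ∈ S, a.2 = 1 := by
  obtain ⟨u, hu⟩ := hS
  obtain ⟨a, ha, hau⟩ :=
    exists_mem_map_eq_mul_pow (MulHom.snd M G) hu hu (Monoid.exponent G - 1)
  refine ⟨a, ha, ?_⟩
  have he : Monoid.exponent G - 1 + 1 = Monoid.exponent G :=
    Nat.sub_add_cancel (Monoid.exponent_pos.2 hG)
  rw [MulHom.coe_snd] at hau
  rw [hau, ← pow_succ', he, Monoid.pow_exponent_eq_one]

end Semigroup

variable {G : Type*} [Monoid G]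

theorem mem_of_snd_eq_of_fst_eq_add_mul {S : Subsemigroup (Multiplicative ℕ+ × G)}
    {u w a : Multiplicative ℕ+ × G} (hw : w ∈ S) (ha : a ∈ S) (ha1 : a.2 = 1) (q : ℕ)
    (hu2 : u.2 = w.2) (hu1 : (toAdd u.1).val = (toAdd w.1).val + q * (toAdd a.1).val) :
    u ∈ S := by
  obtain ⟨v, hv, hfv⟩ := exists_mem_map_eq_mul_pow toNatProd hw ha q
  suffices toNatProd u = toNatProd v from toNatProd_injective this ▸ hv
  rw [hfv]
  ext
  · simp [toNatProd, hu1, mul_comm]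
  · simp [toNatProd, hu2, ha1]

theorem exists_finset_closure_eq_of_mem_snd_eq_one [Finite G]
    (U : Subsemigroup (Multiplicative ℕ+ × G)) {a : Multiplicative ℕ+ × G} (ha : a ∈ U)
    (ha1 : a.2 = 1) : ∃ X : Finset (Multiplicative ℕ+ × G), closure ↑X = U := by
  classical
  set A : ℕ := (toAdd a.1).val
  have : NeZero A := ⟨(toAdd a.1).ne_zero⟩
  obtain ⟨T, hTU, hT, hrep⟩ := Set.exists_finite_subset_forall_exists_le
    (fun u : Multiplicative ℕ+ × G => (u.2, ((toAdd u.1).val : ZMod A)))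
    (fun u => (toAdd u.1).val) U
  refine ⟨insert a hT.toFinset, le_antisymm ?_ fun u hu => ?_⟩
  · simpa [closure_le, Set.insert_subset_iff] using ⟨ha, hTU⟩
  obtain ⟨w, hwT, hcls, hle⟩ := hrep u hu
  simp only [Prod.mk.injEq, ZMod.natCast_eq_natCast_iff] at hcls
  obtain ⟨q, hq⟩ := (Nat.modEq_iff_dvd' hle).1 hcls.2
  refine mem_of_snd_eq_of_fst_eq_add_mul (subset_closure (by simp [hwT]))
    (subset_closure (by simp)) ha1 q hcls.1.symm ?_
  rw [mul_comm, ← hq]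
  omega

end Subsemigroup

/-- If `G` is a finite group, then every subsemigroup of `ℕ × G` is finitely
generated. -/
theorem subsemigroup_of_N_times_finite_group_fg
    {G : Type*} [Group G] [Finite G]
    (U : Subsemigroup (Multiplicative ℕ+ × G)) :
    ∃ X : Finset (Multiplicative ℕ+ × G),
      ↑X ⊆ (U : Set (Multiplicative ℕ+ × G)) ∧ Subsemigroup.closure ↑X = U := by
  obtain hU | hU := (U : Set (Multiplicative ℕ+ × G)).eq_empty_or_nonempty
  · refine ⟨∅, by simp, ?_⟩
    rw [Finset.coe_empty, Subsemigroup.closure_empty, ← SetLike.coe_set_eq, hU,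
      Subsemigroup.coe_bot]
  obtain ⟨a, ha, ha1⟩ := Subsemigroup.exists_mem_snd_eq_one Monoid.ExponentExists.of_finite hU
  obtain ⟨X, hX⟩ := Subsemigroup.exists_finset_closure_eq_of_mem_snd_eq_one U ha ha1
  exact ⟨X, hX ▸ Subsemigroup.subset_closure, hX⟩
end

section
/- If G is a finite group, then ℕ × G has only countably many subsemigroups. -/
/-!
If `S` contains some `x = (a, g)`, it also contains `y = x ^ |G| = (c, 1)`, and multiplication by
`y` maps the `n`-th slice `{g | (n, g) ∈ S}` into the `(n + c)`-th. Since `G` has only finitely many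
subsets, the slices are eventually `c`-periodic, say from level `N` on. Every element of `S` above
level `N + c` is then an element of `S` one period lower times `y`, so `S` is generated by its
finitely many elements of level at most `N + c`. A countable semigroup has only countably many
finite subsets, hence only countably many finitely generated subsemigroups.
-/

theorem exists_forall_ge_add_eq_of_le_add {β : Type*} [PartialOrder β] [Finite β] {f : ℕ → β}
    {c : ℕ} (hc : 0 < c) (hf : ∀ n, f n ≤ f (n + c)) : ∃ N, ∀ n, N ≤ n → f (n + c) = f n := by
  -- the blocks `(f (k * c + i))_{i < c}` increase with `k` in the finite poset `Fin c → β`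
  let F : ℕ →o (Fin c → β) :=
    ⟨fun k i => f (k * c + i), monotone_nat_of_le_succ fun k i => by
      simpa only [Nat.succ_mul, Nat.add_right_comm] using hf (k * c + i)⟩
  obtain ⟨K, hK⟩ := WellFoundedGT.monotone_chain_condition F
  refine ⟨K * c, fun n hn => ?_⟩
  have hKn : K ≤ n / c := (Nat.le_div_iff_mul_le hc).2 hn
  have hF : ∀ k, F k ⟨n % c, Nat.mod_lt n hc⟩ = f (k * c + n % c) := fun _ => rfl
  calc f (n + c) = F (n / c + 1) ⟨n % c, Nat.mod_lt n hc⟩ := by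
        rw [hF, Nat.succ_mul, Nat.add_right_comm, Nat.div_add_mod']
    _ = F (n / c) ⟨n % c, Nat.mod_lt n hc⟩ := by rw [← hK _ hKn, ← hK _ (by omega)]
    _ = f n := by rw [hF, Nat.div_add_mod']

namespace PNatProd

variable {G : Type*}

def level (x : Multiplicative ℕ+ × G) : ℕ := (x.1.toAdd : ℕ)

theorem level_pos (x : Multiplicative ℕ+ × G) : 0 < level x := x.1.toAdd.pos

theorem level_mul [Mul G] (x y : Multiplicative ℕ+ × G) : level (x * y) = level x + level y :=
  PNat.add_coe _ _

theorem level_snd_injective : Function.Injective fun x : Multiplicative ℕ+ × G => (level x, x.2) :=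
  fun _ _ h => by
    obtain ⟨h1, h2⟩ := Prod.mk.inj h
    exact Prod.ext (Multiplicative.toAdd.injective (PNat.coe_injective h1)) h2

theorem finite_setOf_level_le [Finite G] (B : ℕ) :
    {x : Multiplicative ℕ+ × G | level x ≤ B}.Finite :=
  ((Set.finite_Iic B).prod Set.finite_univ).preimage (f := fun x => (level x, x.2))
    level_snd_injective.injOn |>.subset fun _ hx => ⟨hx, trivial⟩

def slice [Mul G] (S : Subsemigroup (Multiplicative ℕ+ × G)) (n : ℕ) : Set G :=
  {g | ∃ x ∈ S, level x = n ∧ x.2 = g}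

theorem pow_pnat_mem [Monoid G] {S : Subsemigroup (Multiplicative ℕ+ × G)}
    {x : Multiplicative ℕ+ × G} (hx : x ∈ S) (n : ℕ+) :
    (Multiplicative.ofAdd (n * x.1.toAdd), x.2 ^ (n : ℕ)) ∈ S := by
  induction n using PNat.recOn with
  | one => simpa using hx
  | succ n ih =>
    convert S.mul_mem ih hx using 1
    exact Prod.ext (by simp [add_mul]) (pow_succ _ _)

theorem exists_mem_snd_eq_one [Group G] [Finite G] {S : Subsemigroup (Multiplicative ℕ+ × G)}
    {x : Multiplicative ℕ+ × G} (hx : x ∈ S) : ∃ y ∈ S, y.2 = 1 :=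
  ⟨_, pow_pnat_mem hx ⟨Nat.card G, Nat.card_pos⟩, pow_card_eq_one'⟩

theorem slice_subset_slice_add [MulOneClass G] {S : Subsemigroup (Multiplicative ℕ+ × G)}
    {y : Multiplicative ℕ+ × G} (hy : y ∈ S) (hy1 : y.2 = 1) (n : ℕ) :
    slice S n ⊆ slice S (n + level y) := by
  rintro _ ⟨x, hx, rfl, rfl⟩
  exact ⟨x * y, S.mul_mem hx hy, level_mul x y, by simp [hy1]⟩

theorem mem_closure_of_slice_add_eq [MulOneClass G] {S : Subsemigroup (Multiplicative ℕ+ × G)}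
    {y : Multiplicative ℕ+ × G} (hy : y ∈ S) (hy1 : y.2 = 1) {N : ℕ}
    (hN : ∀ n, N ≤ n → slice S (n + level y) = slice S n) {x : Multiplicative ℕ+ × G}
    (hx : x ∈ S) : x ∈ Subsemigroup.closure {z | z ∈ S ∧ level z ≤ N + level y} := by
  induction h : level x using Nat.strong_induction_on generalizing x with
  | _ m ih =>
  by_cases hm : m ≤ N + level y
  · exact Subsemigroup.subset_closure ⟨hx, h ▸ hm⟩
  have hy0 := level_pos y
  obtain ⟨x', hx', hlev, hsnd⟩ : x.2 ∈ slice S (m - level y) := by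
    rw [← hN (m - level y) (by omega), Nat.sub_add_cancel (by omega)]
    exact ⟨x, hx, h, rfl⟩
  have hxy : x = x' * y :=
    level_snd_injective <| Prod.ext (by simp only [level_mul]; omega) (by simp [hsnd, hy1])
  rw [hxy]
  exact mul_mem (ih _ (by omega) hx' hlev) (Subsemigroup.subset_closure ⟨hy, by omega⟩)

theorem exists_finset_closure_eq [Group G] [Finite G] (S : Subsemigroup (Multiplicative ℕ+ × G)) :
    ∃ s : Finset (Multiplicative ℕ+ × G), Subsemigroup.closure ↑s = S := by
  by_cases hS : (S : Set (Multiplicative ℕ+ × G)).Nonempty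
  · obtain ⟨y, hy, hy1⟩ := exists_mem_snd_eq_one hS.some_mem
    obtain ⟨N, hN⟩ :=
      exists_forall_ge_add_eq_of_le_add (level_pos y) (slice_subset_slice_add hy hy1)
    have hs : {z | z ∈ S ∧ level z ≤ N + level y}.Finite :=
      (finite_setOf_level_le _).subset fun _ hz => hz.2
    refine ⟨hs.toFinset, le_antisymm ?_ fun x hx => ?_⟩
    · rw [hs.coe_toFinset, Subsemigroup.closure_le]
      exact fun _ hz => hz.1
    · rw [hs.coe_toFinset]
      exact mem_closure_of_slice_add_eq hy hy1 hN hx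
  · refine ⟨∅, ?_⟩
    rw [Finset.coe_empty, Subsemigroup.closure_empty]
    exact (bot_unique fun x hx => (hS ⟨x, hx⟩).elim).symm

end PNatProd

/-- If `G` is a finite group, then `ℕ × G` has only countably many
subsemigroups. -/
theorem countable_subsemigroups_of_N_times_finite_group
    (G : Type*) [Group G] [Finite G] :
    Countable (Subsemigroup (Multiplicative ℕ+ × G)) :=
  Function.Surjective.countable (f := fun s : Finset (Multiplicative ℕ+ × G) =>
    Subsemigroup.closure (s : Set (Multiplicative ℕ+ × G))) PNatProd.exists_finset_closure_eq
end

section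
/- Let S be a finite semigroup such that for every s ∈ S there exists t ∈ S with st = s or ts = s. Then every subdirect product T ≤ ℕ × S (that is, every subsemigroup of ℕ × S whose projections to ℕ and to S are both surjective) is finitely generated. -/
/-!
For each `s ∈ S` pick `t` with `s t = s` or `t s = s`, and an element `p_s ∈ T` whose second
coordinate is `t`; let `m_s` be its first coordinate. Multiplying by `p_s` (on the appropriate
side) sends `(n, s) ∈ T` to `(n + m_s, s) ∈ T`. Hence `(n, s) ∈ T` is a product of `p_s`'s and the
least `(a, s) ∈ T` with `a ≡ n (mod m_s)`. Since `S` is finite there are finitely many such least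
elements, and together with the `p_s` they lie among the finitely many elements of `T` whose first
coordinate is below a common bound.
-/

open Multiplicative

theorem add_nsmul_mem_of_forall_add_mem {M : Type*} [AddMonoid M] {P : Set M} {m : M}
    (hP : ∀ x ∈ P, x + m ∈ P) {a : M} (ha : a ∈ P) (k : ℕ) : a + k • m ∈ P := by
  induction k with
  | zero => simpa using ha
  | succ k ih => simpa [succ_nsmul, ← add_assoc] using hP _ ih

theorem Nat.exists_bound_subset_of_forall_add_mem (A : Set ℕ) {m : ℕ} (hm : 0 < m) :
    ∃ B, ∀ P : Set ℕ, (∀ x ∈ P, x + m ∈ P) → (∀ a ∈ A, a ≤ B → a ∈ P) → A ⊆ P := by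
  let least (r : ℕ) : ℕ := sInf {a ∈ A | a % m = r}
  refine ⟨(Finset.range m).sup least, fun P hP hsmall n hn => ?_⟩
  obtain ⟨haA, hamod⟩ : least (n % m) ∈ {a ∈ A | a % m = n % m} := Nat.sInf_mem ⟨n, hn, rfl⟩
  have han : least (n % m) ≤ n := Nat.sInf_le ⟨hn, rfl⟩
  have haB : least (n % m) ≤ (Finset.range m).sup least :=
    Finset.le_sup (Finset.mem_range.2 (Nat.mod_lt n hm))
  obtain ⟨k, hk⟩ := (Nat.modEq_iff_dvd' han).1 hamod
  have := add_nsmul_mem_of_forall_add_mem hP (hsmall _ haA haB) k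
  rwa [smul_eq_mul, mul_comm, ← hk, Nat.add_sub_cancel' han] at this

section Fiber

variable {S : Type*}

def fiber (U : Set (Multiplicative ℕ+ × S)) (s : S) : Set ℕ :=
  {n | ∃ x : Multiplicative ℕ+, (x, s) ∈ U ∧ (x.toAdd : ℕ) = n}

theorem mem_fiber_iff {U : Set (Multiplicative ℕ+ × S)} {x : Multiplicative ℕ+} {s : S} :
    (x.toAdd : ℕ) ∈ fiber U s ↔ (x, s) ∈ U :=
  ⟨fun ⟨_, hy, hyx⟩ => toAdd.injective (PNat.coe_injective hyx) ▸ hy, fun hx => ⟨x, hx, rfl⟩⟩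

theorem add_mem_fiber [Semigroup S] {C : Subsemigroup (Multiplicative ℕ+ × S)}
    {p : Multiplicative ℕ+ × S} (hp : p ∈ C) {s : S} (hs : s * p.2 = s ∨ p.2 * s = s) {n : ℕ}
    (hn : n ∈ fiber C s) : n + (p.1.toAdd : ℕ) ∈ fiber C s := by
  obtain ⟨x, hx, rfl⟩ := hn
  obtain ⟨y, t⟩ := p
  rcases hs with hs | hs
  · refine ⟨x * y, ?_, by simp⟩
    simpa [hs] using C.mul_mem hx hp
  · refine ⟨y * x, ?_, by simp [add_comm]⟩
    simpa [hs] using C.mul_mem hp hx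

theorem finite_setOf_toAdd_fst_le [Finite S] (B : ℕ) :
    {q : Multiplicative ℕ+ × S | (q.1.toAdd : ℕ) ≤ B}.Finite := by
  refine ((Set.finite_Iic B).prod (Set.finite_univ (α := S))).preimage
    (f := fun q => ((q.1.toAdd : ℕ), q.2)) ?_ |>.subset fun q hq => ?_
  · rintro ⟨x, s⟩ - ⟨y, t⟩ - hxy
    simpa using hxy
  · exact ⟨hq, trivial⟩

end Fiber

theorem subdirect_product_fg_general
    {S : Type*} [Semigroup S] [Finite S]
    (h : ∀ s : S, ∃ t : S, s * t = s ∨ t * s = s)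
    (T : Subsemigroup (Multiplicative ℕ+ × S))
    (hproj2 : ∀ s : S, ∃ p ∈ T, p.2 = s) :
    ∃ X : Finset (Multiplicative ℕ+ × S),
      ↑X ⊆ (T : Set (Multiplicative ℕ+ × S)) ∧ Subsemigroup.closure ↑X = T := by
  choose t ht using h
  choose p hpT hp2 using fun s => hproj2 (t s)
  have hmul (s : S) : s * (p s).2 = s ∨ (p s).2 * s = s := hp2 s ▸ ht s
  choose B hB using fun s => Nat.exists_bound_subset_of_forall_add_mem (fiber T s) (p s).1.toAdd.pos
  obtain ⟨N, hN⟩ := Finite.exists_le fun s => max (B s) ((p s).1.toAdd : ℕ)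
  let G := {q ∈ (T : Set (Multiplicative ℕ+ × S)) | (q.1.toAdd : ℕ) ≤ N}
  have hGfin : G.Finite := (finite_setOf_toAdd_fst_le N).subset fun _ hq => hq.2
  have hGT : G ⊆ T := fun _ hq => hq.1
  refine ⟨hGfin.toFinset, by simpa using hGT, ?_⟩
  refine le_antisymm (Subsemigroup.closure_le.2 (by simpa using hGT)) fun ⟨x, s⟩ hxs => ?_
  have hpG (s : S) : p s ∈ Subsemigroup.closure G :=
    Subsemigroup.subset_closure ⟨hpT s, (le_max_right _ _).trans (hN s)⟩
  have hsmall : ∀ a ∈ fiber T s, a ≤ B s → a ∈ fiber (Subsemigroup.closure G) s := by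
    rintro _ ⟨y, hy, rfl⟩ hyB
    exact ⟨y, Subsemigroup.subset_closure ⟨hy, hyB.trans ((le_max_left _ _).trans (hN s))⟩, rfl⟩
  have := hB s _ (fun _ => add_mem_fiber (hpG s) (hmul s)) hsmall (mem_fiber_iff.2 hxs)
  simpa using mem_fiber_iff.1 this

/-- Let `S` be a finite semigroup in which every element has a relative left
or right identity.  Then every subdirect product `T ≤ ℕ × S` (a subsemigroup
projecting onto both factors) is finitely generated. -/
theorem subdirect_product_fg
    {S : Type*} [Semigroup S] [Finite S]
    (h : ∀ s : S, ∃ t : S, s * t = s ∨ t * s = s)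
    (T : Subsemigroup (Multiplicative ℕ+ × S))
    (hproj1 : ∀ n : Multiplicative ℕ+, ∃ p ∈ T, p.1 = n)
    (hproj2 : ∀ s : S, ∃ p ∈ T, p.2 = s) :
    ∃ X : Finset (Multiplicative ℕ+ × S),
      ↑X ⊆ (T : Set (Multiplicative ℕ+ × S)) ∧ Subsemigroup.closure ↑X = T :=
  subdirect_product_fg_general h T hproj2
end
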